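/- arXiv:1909.13143 — 15 statements merged into one kernel-verified Lean document; each statement's English description precedes it below -/
import Mathlib

section
/- Let G be a graph containing no induced copy of K_{1,t+1} (for t ≥ 1), and let m, n be integers with 1 ≤ m ≤ ⌈n/t⌉. Then any m independent sets I_1, ..., I_m in G, each of size n, admit a rainbow independent m-set, i.e., there exist vertices v_1 ∈ I_1, ..., v_m ∈ I_m that are pairwise distinct and pairwise non-adjacent. -/
open SimpleGraph Finset

/-- `S` is an independent set in `G`. -/
def IndepIn {V : Type*} (G : SimpleGraph V) (S : Finset V) : Prop :=
  ∀ u ∈ S, ∀ v ∈ S, ¬ G.Adj u v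

/-- The family `I` admits a rainbow independent `m`-set in `G`: `m` distinct pairwise
non-adjacent vertices, each chosen from a distinct member of the family. -/
def HasRainbowIndep {V ι : Type*} (G : SimpleGraph V) (I : ι → Finset V) (m : ℕ) : Prop :=
  ∃ (j : Fin m → ι) (v : Fin m → V), Function.Injective j ∧ Function.Injective v ∧
    (∀ i, v i ∈ I (j i)) ∧ ∀ i i' : Fin m, i ≠ i' → ¬ G.Adj (v i) (v i')

/-- `G` contains no induced copy of `H`. -/
def IndFree {V W : Type*} (G : SimpleGraph V) (H : SimpleGraph W) : Prop :=
  ¬ ∃ f : W ↪ V, ∀ a b : W, G.Adj (f a) (f b) ↔ H.Adj a b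

lemma star_free_bound {V : Type*} (G : SimpleGraph V) (t : ℕ)
    (hfree : IndFree G (completeBipartiteGraph (Fin 1) (Fin (t + 1))))
    (S : Finset V) (hS : IndepIn G S) (x : V) [DecidablePred (G.Adj x)] :
    (S.filter (fun u => G.Adj x u)).card ≤ t := by
  by_contra h
  push_neg at h
  obtain ⟨T, hTsub, hTcard⟩ := Finset.exists_subset_card_eq h
  have hmemT : ∀ u ∈ T, u ∈ S ∧ G.Adj x u := by
    intro u hu
    have := hTsub hu
    exact Finset.mem_filter.mp this
  set e : Fin (t + 1) → V := fun i => ((Finset.equivFinOfCardEq hTcard).symm i : V) with he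
  have heT : ∀ i, e i ∈ T := fun i => ((Finset.equivFinOfCardEq hTcard).symm i).2
  have heinj : Function.Injective e := by
    intro a b hab
    have := Subtype.ext hab (p := fun v => v ∈ T)
    exact (Finset.equivFinOfCardEq hTcard).symm.injective this
  set f : Fin 1 ⊕ Fin (t + 1) → V := Sum.elim (fun _ => x) e with hf
  have finj : Function.Injective f := by
    intro a b hab
    cases a with
    | inl a => cases b with
      | inl b => exact congrArg Sum.inl (Subsingleton.elim a b)
      | inr b =>
        exfalso
        have hadj := (hmemT _ (heT b)).2
        simp only [hf, Sum.elim_inl, Sum.elim_inr] at hab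
        rw [← hab] at hadj
        exact G.irrefl hadj
    | inr a => cases b with
      | inl b =>
        exfalso
        have hadj := (hmemT _ (heT a)).2
        simp only [hf, Sum.elim_inl, Sum.elim_inr] at hab
        rw [hab] at hadj
        exact G.irrefl hadj
      | inr b =>
        simp only [hf, Sum.elim_inr] at hab
        exact congrArg Sum.inr (heinj hab)
  apply hfree
  refine ⟨⟨f, finj⟩, ?_⟩
  intro a b
  cases a with
  | inl a => cases b with
    | inl b => simp [hf]
    | inr b =>
      simp only [hf, Function.Embedding.coeFn_mk, Sum.elim_inl, Sum.elim_inr,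
        completeBipartiteGraph_adj]
      simpa using (hmemT _ (heT b)).2
  | inr a => cases b with
    | inl b =>
      simp only [hf, Function.Embedding.coeFn_mk, Sum.elim_inl, Sum.elim_inr,
        completeBipartiteGraph_adj]
      simpa using ((hmemT _ (heT a)).2).symm
    | inr b =>
      simp only [hf, Function.Embedding.coeFn_mk, Sum.elim_inr,
        completeBipartiteGraph_adj]
      have := hS _ (hmemT _ (heT a)).1 _ (hmemT _ (heT b)).1
      simpa using this

theorem star_free_rainbow {V : Type*} (G : SimpleGraph V) (t m n : ℕ) (ht : 1 ≤ t)
    (hfree : IndFree G (completeBipartiteGraph (Fin 1) (Fin (t + 1))))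
    (hm : 1 ≤ m) (hmn : m ≤ (n + t - 1) / t)
    (I : Fin m → Finset V) (hI : ∀ i, (I i).card = n ∧ IndepIn G (I i)) :
    HasRainbowIndep G I m := by
  classical
  have hmt : m * t ≤ n + t - 1 := (Nat.le_div_iff_mul_le ht).mp hmn
  suffices h : ∀ k (hk : k ≤ m), ∃ v : Fin k → V, Function.Injective v ∧
      (∀ i, v i ∈ I (Fin.castLE hk i)) ∧
      ∀ i i', i ≠ i' → ¬ G.Adj (v i) (v i') by
    obtain ⟨v, hinj, hmem, hadj⟩ := h m le_rfl
    exact ⟨Fin.castLE le_rfl, v, Fin.castLE_injective le_rfl, hinj, hmem, hadj⟩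
  intro k
  induction k with
  | zero =>
    intro hk
    exact ⟨Fin.elim0, fun i => i.elim0, fun i => i.elim0, fun i => i.elim0⟩
  | succ k ih =>
    intro hk
    obtain ⟨v, hinj, hmem, hadj⟩ := ih (Nat.le_of_succ_le hk)
    set i0 : Fin m := ⟨k, hk⟩ with hi0
    set B : Finset V := (Finset.univ : Finset (Fin k)).biUnion
      (fun j => (I i0).filter fun u => u = v j ∨ G.Adj (v j) u) with hB
    have hBcard : B.card ≤ k * t := by
      calc B.card ≤ ∑ _j : Fin k, t := by
            apply (Finset.card_biUnion_le).trans
            apply Finset.sum_le_sum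
            intro j _
            by_cases hvj : v j ∈ I i0
            · have hsub : (I i0).filter (fun u => u = v j ∨ G.Adj (v j) u) ⊆ {v j} := by
                intro u hu
                obtain ⟨hu1, hu2⟩ := Finset.mem_filter.mp hu
                rcases hu2 with h | h
                · simp [h]
                · exact absurd h ((hI i0).2 _ hvj _ hu1)
              exact le_trans (Finset.card_le_card hsub) (by simpa using ht)
            · have hsub : (I i0).filter (fun u => u = v j ∨ G.Adj (v j) u) ⊆
                  (I i0).filter (fun u => G.Adj (v j) u) := by
                intro u hu
                obtain ⟨hu1, hu2⟩ := Finset.mem_filter.mp hu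
                rcases hu2 with h | h
                · exact absurd (h ▸ hu1) hvj
                · exact Finset.mem_filter.mpr ⟨hu1, h⟩
              exact le_trans (Finset.card_le_card hsub)
                (star_free_bound G t hfree (I i0) (hI i0).2 (v j))
        _ = k * t := by simp [Finset.sum_const, mul_comm]
    have hlt : B.card < (I i0).card := by
      rw [(hI i0).1]
      have h1 : (k + 1) * t ≤ m * t := Nat.mul_le_mul_right t hk
      have h2 : (k + 1) * t = k * t + t := by ring
      omega
    have hns : ¬ I i0 ⊆ B := fun hsub => absurd (Finset.card_le_card hsub) (not_le.mpr hlt)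
    obtain ⟨u, huI, huB⟩ := Finset.not_subset.mp hns
    have hu : ∀ j : Fin k, u ≠ v j ∧ ¬ G.Adj (v j) u := by
      intro j
      constructor
      · intro h
        exact huB (Finset.mem_biUnion.mpr ⟨j, Finset.mem_univ j,
          Finset.mem_filter.mpr ⟨huI, Or.inl h⟩⟩)
      · intro h
        exact huB (Finset.mem_biUnion.mpr ⟨j, Finset.mem_univ j,
          Finset.mem_filter.mpr ⟨huI, Or.inr h⟩⟩)
    refine ⟨Fin.snoc v u, ?_, ?_, ?_⟩
    · intro a b hab
      induction a using Fin.lastCases with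
      | last =>
        induction b using Fin.lastCases with
        | last => rfl
        | cast b =>
          simp only [Fin.snoc_last, Fin.snoc_castSucc] at hab
          exact absurd hab (hu b).1
      | cast a =>
        induction b using Fin.lastCases with
        | last =>
          simp only [Fin.snoc_last, Fin.snoc_castSucc] at hab
          exact absurd hab.symm (hu a).1
        | cast b =>
          simp only [Fin.snoc_castSucc] at hab
          exact congrArg Fin.castSucc (hinj hab)
    · intro i
      induction i using Fin.lastCases with
      | last =>
        rw [Fin.snoc_last]
        exact huI
      | cast i =>
        rw [Fin.snoc_castSucc]
        exact hmem i
    · intro a b hne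
      induction a using Fin.lastCases with
      | last =>
        induction b using Fin.lastCases with
        | last => exact absurd rfl hne
        | cast b =>
          simp only [Fin.snoc_last, Fin.snoc_castSucc]
          intro h
          exact (hu b).2 h.symm
      | cast a =>
        induction b using Fin.lastCases with
        | last =>
          simp only [Fin.snoc_last, Fin.snoc_castSucc]
          exact (hu a).2
        | cast b =>
          simp only [Fin.snoc_castSucc]
          exact hadj a b (fun h => hne (congrArg Fin.castSucc h))
end

section
/- For every t ≥ 1 and every m > ⌈n/t⌉ with m ≤ n, and every integer k, there exists a K_{1,t+1}-free graph G and a family of k independent n-sets in G having no rainbow independent m-set. Specifically, the disjoint union of ⌈n/t⌉ copies of the complete k-partite graph with all parts of size t, with I_i being the union of the i-th parts across all copies, works. -/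
open SimpleGraph Finset

/-!
Take `q = ⌈n/t⌉` disjoint copies of the complete `k`-partite graph with parts of size `t`.
The leaves of an induced star lie in the copy of its centre and are pairwise non-adjacent,
so they lie in a single part: there are at most `t` of them. The union of the `i`-th parts
over all copies is independent of size `qt ≥ n`. The vertices of a rainbow independent set
lie in pairwise distinct parts, hence in pairwise distinct copies, so there are at most
`q < m` of them.
-/

/-- Vertex `(c, p, x)` is the vertex `x` of part `p` in copy `c`. -/
def copiesCompleteMultipartite (C P T : Type*) : SimpleGraph (C × P × T) where
  Adj a b := a.1 = b.1 ∧ a.2.1 ≠ b.2.1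
  symm := ⟨fun _ _ h => ⟨h.1.symm, Ne.symm h.2⟩⟩
  loopless := ⟨fun _ h => h.2 rfl⟩

def partAcrossCopies {C P T : Type*} [Fintype C] [Fintype T] (p : P) : Finset (C × P × T) :=
  univ ×ˢ {p} ×ˢ univ

section CopiesCompleteMultipartite

variable {C P T : Type*}

theorem indFree_copiesCompleteMultipartite_completeBipartiteGraph [Fintype T]
    {A B : Type*} [Nonempty A] [Fintype B] (hTB : Fintype.card T < Fintype.card B) :
    IndFree (copiesCompleteMultipartite C P T) (completeBipartiteGraph A B) := by
  rintro ⟨f, hf⟩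
  obtain ⟨a⟩ := ‹Nonempty A›
  have hB : Nonempty B := Fintype.card_pos_iff.mp (by omega)
  obtain ⟨b₀⟩ := hB
  let leaf (b : B) := f (Sum.inr b)
  have same_copy (b : B) : (leaf b).1 = (f (Sum.inl a)).1 :=
    (((hf (Sum.inl a) (Sum.inr b)).2 (by simp)).1).symm
  have same_part (b : B) : (leaf b).2.1 = (leaf b₀).2.1 := by
    by_contra hne
    have hadj : (completeBipartiteGraph A B).Adj (Sum.inr b) (Sum.inr b₀) :=
      (hf _ _).1 ⟨(same_copy b).trans (same_copy b₀).symm, hne⟩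
    simp at hadj
  have hinj : Function.Injective fun b => (leaf b).2.2 := by
    intro b b' h
    have : leaf b = leaf b' :=
      Prod.ext ((same_copy b).trans (same_copy b').symm)
        (Prod.ext ((same_part b).trans (same_part b').symm) h)
    exact Sum.inr_injective (f.injective this)
  exact absurd (Fintype.card_le_of_injective _ hinj) (by omega)

theorem indepIn_copiesCompleteMultipartite {S : Finset (C × P × T)} {p : P}
    (hS : ∀ v ∈ S, v.2.1 = p) : IndepIn (copiesCompleteMultipartite C P T) S :=
  fun u hu v hv huv => huv.2 ((hS u hu).trans (hS v hv).symm)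

theorem not_hasRainbowIndep_copiesCompleteMultipartite [Fintype C] {I : P → Finset (C × P × T)}
    (hI : ∀ p, ∀ v ∈ I p, v.2.1 = p) {m : ℕ} (hm : Fintype.card C < m) :
    ¬ HasRainbowIndep (copiesCompleteMultipartite C P T) I m := by
  rintro ⟨j, v, hj, -, hv, hindep⟩
  have hcopy : Function.Injective fun i => (v i).1 := by
    intro i i' h
    by_contra hne
    refine hindep i i' hne ⟨h, ?_⟩
    rw [hI _ _ (hv i), hI _ _ (hv i')]
    exact hj.ne hne
  simpa using (Fintype.card_le_of_injective _ hcopy).trans_lt hm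

variable [Fintype C] [Fintype T]

@[simp]
theorem mem_partAcrossCopies {p : P} {v : C × P × T} : v ∈ partAcrossCopies p ↔ v.2.1 = p := by
  simp [partAcrossCopies, Prod.ext_iff, eq_comm]

theorem card_partAcrossCopies (p : P) :
    (partAcrossCopies p : Finset (C × P × T)).card = Fintype.card C * Fintype.card T := by
  simp [partAcrossCopies]

end CopiesCompleteMultipartite

theorem star_free_lower_general (t n m k : ℕ) (ht : 1 ≤ t)
    (hm : (n + t - 1) / t < m) :
    ∃ (V : Type) (G : SimpleGraph V) (I : Fin k → Finset V),
      IndFree G (completeBipartiteGraph (Fin 1) (Fin (t + 1))) ∧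
      (∀ i, (I i).card = n ∧ IndepIn G (I i)) ∧
      ¬ HasRainbowIndep G I m := by
  set q := (n + t - 1) / t
  have hn : n ≤ q * t := by
    have := Nat.lt_div_mul_add (a := n + t - 1) (show 0 < t by omega)
    change n + t - 1 < q * t + t at this
    omega
  have hpart (i : Fin k) : n ≤ (partAcrossCopies i : Finset (Fin q × Fin k × Fin t)).card := by
    simpa [card_partAcrossCopies] using hn
  choose I hIsub hIcard using fun i => exists_subset_card_eq (hpart i)
  have hIpart (i : Fin k) (v) (hv : v ∈ I i) : v.2.1 = i := mem_partAcrossCopies.mp (hIsub i hv)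
  refine ⟨_, copiesCompleteMultipartite (Fin q) (Fin k) (Fin t), I, ?_, ?_, ?_⟩
  · exact indFree_copiesCompleteMultipartite_completeBipartiteGraph (by simp)
  · exact fun i => ⟨hIcard i, indepIn_copiesCompleteMultipartite (hIpart i)⟩
  · exact not_hasRainbowIndep_copiesCompleteMultipartite hIpart (by simpa using hm)

theorem star_free_lower (t n m k : ℕ) (ht : 1 ≤ t)
    (hm : (n + t - 1) / t < m) (hmn : m ≤ n) :
    ∃ (V : Type) (G : SimpleGraph V) (I : Fin k → Finset V),
      IndFree G (completeBipartiteGraph (Fin 1) (Fin (t + 1))) ∧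
      (∀ i, (I i).card = n ∧ IndepIn G (I i)) ∧
      ¬ HasRainbowIndep G I m :=
  star_free_lower_general t n m k ht hm
end

section
/- Let G be a graph in which every two distinct maximal cliques are disjoint (equivalently, G contains no induced copy of K_3 minus an edge). Then any m independent sets of size n (with m ≤ n) in G admit a rainbow independent m-set. -/
/-! In an induced-`P₃`-free graph adjacency is transitive on distinct vertices, so every connected
component is a clique. Hence an independent set meets each component at most once, and each of
the `m` given sets meets at least `n ≥ m` components. Hall's condition for picking distinct
components, one per set, then holds trivially, and one vertex of `I i` from the `i`-th chosen
component gives `m` distinct, pairwise non-adjacent vertices. -/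

open SimpleGraph Finset

theorem Finset.exists_injective_mem_of_card_le {ι α : Type*} [Fintype ι] [DecidableEq α]
    (t : ι → Finset α) (ht : ∀ i, Fintype.card ι ≤ #(t i)) :
    ∃ f : ι → α, Function.Injective f ∧ ∀ i, f i ∈ t i := by
  refine (all_card_le_biUnion_card_iff_existsInjective' t).1 fun S => ?_
  obtain rfl | ⟨i, hi⟩ := S.eq_empty_or_nonempty
  · simp
  calc #S ≤ Fintype.card ι := card_le_univ S
    _ ≤ #(t i) := ht i
    _ ≤ #(S.biUnion t) := card_le_card (subset_biUnion_of_mem t hi)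

namespace SimpleGraph

variable {V : Type*} {G : SimpleGraph V}

theorem IndFree.adj_of_adj_of_adj (hG : IndFree G (pathGraph 3)) {a b c : V}
    (hab : G.Adj a b) (hbc : G.Adj b c) (hac : a ≠ c) : G.Adj a c := by
  by_contra hnac
  have hinj : Function.Injective ![a, b, c] := by
    intro i j hij
    fin_cases i <;> fin_cases j <;> simp_all [hab.ne, hbc.ne, hab.ne.symm, hbc.ne.symm, hac.symm]
  refine hG ⟨⟨_, hinj⟩, fun i j => ?_⟩
  have hnca : ¬ G.Adj c a := fun h => hnac h.symm
  fin_cases i <;> fin_cases j <;> simp [pathGraph_adj, hab, hbc, hab.symm, hbc.symm, hnac, hnca]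

theorem IndFree.eq_or_adj_of_reachable (hG : IndFree G (pathGraph 3)) {u v : V}
    (huv : G.Reachable u v) : u = v ∨ G.Adj u v := by
  obtain ⟨p⟩ := huv
  induction p with
  | nil => exact .inl rfl
  | @cons u w v huw _ ih =>
    obtain rfl | hwv := ih
    · exact .inr huw
    · by_cases huv : u = v
      · exact .inl huv
      · exact .inr (hG.adj_of_adj_of_adj huw hwv huv)

theorem IndFree.injOn_connectedComponentMk (hG : IndFree G (pathGraph 3)) {S : Finset V}
    (hS : IndepIn G S) : Set.InjOn G.connectedComponentMk S := fun u hu v hv huv =>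
  (hG.eq_or_adj_of_reachable (ConnectedComponent.eq.1 huv)).resolve_right (hS u hu v hv)

end SimpleGraph

theorem K3_minus_free_rainbow {V : Type*} (G : SimpleGraph V) (m n : ℕ) (hmn : m ≤ n)
    (hfree : IndFree G (SimpleGraph.pathGraph 3))
    (I : Fin m → Finset V) (hI : ∀ i, (I i).card = n ∧ IndepIn G (I i)) :
    HasRainbowIndep G I m := by
  classical
  let t i := (I i).image G.connectedComponentMk
  have ht i : Fintype.card (Fin m) ≤ #(t i) := by
    rw [card_image_of_injOn (hfree.injOn_connectedComponentMk (hI i).2), (hI i).1,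
      Fintype.card_fin]
    exact hmn
  obtain ⟨C, hCinj, hC⟩ := exists_injective_mem_of_card_le t ht
  choose v hvI hvC using fun i => mem_image.1 (hC i)
  refine ⟨id, v, Function.injective_id, fun i i' h => hCinj ?_, hvI, fun i i' hne hadj => ?_⟩
  · rw [← hvC i, ← hvC i', h]
  · refine hne (hCinj ?_)
    rw [← hvC i, ← hvC i', ConnectedComponent.connectedComponentMk_eq_of_adj hadj]
end

section
/- For every n ≥ 4 and every integer N, there exists a C_4-free graph (no induced 4-cycle) with a family of N independent n-sets admitting no rainbow independent n-set. Consequently f_{F(C_4)}(n,n) = ∞ for n ≥ 4. -/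
open SimpleGraph Finset

/-
Take `N` parts, each an independent copy of `ZMod 4`, and join a vertex labelled `x` to the vertices
labelled `x` or `x + 1` in every later part. In an independent set meeting each part at most once,
the vertex labelled `x + 1` lies in an earlier part than the one labelled `x`, so such a set misses
a label and has at most three vertices. Each `I k` is a part together with `n - 4` isolated vertices
shared by all sets; a rainbow independent `n`-set would use at most `n - 4` shared vertices, hence
four vertices from distinct parts.

An induced square has no shared vertex. Look at a vertex of it in the earliest part: both its
neighbours come later, and each orientation of the two remaining edges contradicts the label rules.
-/

def IsStep (x y : ZMod 4) : Prop := y = x ∨ y = x + 1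

instance : DecidableRel IsStep := fun _ _ => inferInstanceAs (Decidable (_ ∨ _))

namespace IsStep

/- Label constraints of an induced square `a b c d` with `a` in the earliest part, one lemma per
ordering of the parts of `b`, `c`, `d`: a monotone path (`a < b < c < d`, or its mirror
`a < d < c < b`), `c` last, or `c` before both `b` and `d`. -/

lemma false_of_monotone_square (a b c d : ZMod 4) : IsStep a b → IsStep b c → IsStep c d →
    IsStep a d → ¬ IsStep a c → ¬ IsStep b d → False := by
  revert a b c d; decide

lemma false_of_source_sink (a b c d : ZMod 4) : IsStep a b → IsStep a d → IsStep b c →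
    IsStep d c → ¬ IsStep a c → b ≠ d → False := by
  revert a b c d; decide

lemma false_of_two_sources (a b c d : ZMod 4) : IsStep a b → IsStep a d → IsStep c b →
    IsStep c d → a ≠ c → b ≠ d → False := by
  revert a b c d; decide

end IsStep

def stepGraph (α : Type*) [LinearOrder α] : SimpleGraph (α × ZMod 4) where
  Adj u v := u.1 < v.1 ∧ IsStep u.2 v.2 ∨ v.1 < u.1 ∧ IsStep v.2 u.2
  symm := ⟨fun _ _ => Or.symm⟩
  loopless := ⟨fun _ h => by rcases h with ⟨h, -⟩ | ⟨h, -⟩ <;> exact lt_irrefl _ h⟩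

namespace stepGraph

variable {α : Type*} [LinearOrder α] {u v : α × ZMod 4}

lemma adj_iff_of_lt (h : u.1 < v.1) : (stepGraph α).Adj u v ↔ IsStep u.2 v.2 := by
  simp [stepGraph, h, h.not_gt]

lemma not_adj_of_fst_eq (h : u.1 = v.1) : ¬ (stepGraph α).Adj u v := by
  simp [stepGraph, h]

lemma fst_ne_of_adj (h : (stepGraph α).Adj u v) : u.1 ≠ v.1 :=
  fun h' => not_adj_of_fst_eq h' h

lemma snd_ne_of_not_adj (hne : u ≠ v) (h : ¬ (stepGraph α).Adj u v) : u.2 ≠ v.2 := by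
  intro hx
  rcases lt_trichotomy u.1 v.1 with hlt | heq | hgt
  · exact h ((adj_iff_of_lt hlt).2 (Or.inl hx.symm))
  · exact hne (Prod.ext heq hx)
  · exact h ((adj_iff_of_lt hgt).2 (Or.inl hx)).symm

lemma fst_lt_of_not_adj_of_snd_eq_add_one (hne : u.1 ≠ v.1) (h : ¬ (stepGraph α).Adj u v)
    (hx : v.2 = u.2 + 1) : v.1 < u.1 :=
  hne.lt_or_gt.resolve_left fun hlt => h ((adj_iff_of_lt hlt).2 (Or.inr hx))
lemma false_of_induced_square_of_source {a b c d : α × ZMod 4}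
    (hab : (stepGraph α).Adj a b) (hbc : (stepGraph α).Adj b c) (hcd : (stepGraph α).Adj c d)
    (hda : (stepGraph α).Adj d a) (hac : ¬ (stepGraph α).Adj a c)
    (hbd : ¬ (stepGraph α).Adj b d) (hac' : a ≠ c) (hbd' : b ≠ d)
    (hb : a.1 < b.1) (hd : a.1 < d.1) : False := by
  have sab := (adj_iff_of_lt hb).1 hab
  have sad := (adj_iff_of_lt hd).1 hda.symm
  rcases (fst_ne_of_adj hbc).lt_or_gt with hbc' | hcb' <;>
    rcases (fst_ne_of_adj hcd).lt_or_gt with hcd' | hdc'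
  · exact IsStep.false_of_monotone_square _ _ _ _ sab ((adj_iff_of_lt hbc').1 hbc)
      ((adj_iff_of_lt hcd').1 hcd) sad (mt (adj_iff_of_lt (hb.trans hbc')).2 hac)
      (mt (adj_iff_of_lt (hbc'.trans hcd')).2 hbd)
  · exact IsStep.false_of_source_sink _ _ _ _ sab sad ((adj_iff_of_lt hbc').1 hbc)
      ((adj_iff_of_lt hdc').1 hcd.symm) (mt (adj_iff_of_lt (hb.trans hbc')).2 hac)
      (snd_ne_of_not_adj hbd' hbd)
  · exact IsStep.false_of_two_sources _ _ _ _ sab sad ((adj_iff_of_lt hcb').1 hbc.symm)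
      ((adj_iff_of_lt hcd').1 hcd) (snd_ne_of_not_adj hac' hac) (snd_ne_of_not_adj hbd' hbd)
  · exact IsStep.false_of_monotone_square _ _ _ _ sad ((adj_iff_of_lt hdc').1 hcd.symm)
      ((adj_iff_of_lt hcb').1 hbc.symm) sab (mt (adj_iff_of_lt (hd.trans hdc')).2 hac)
      (mt (adj_iff_of_lt (hdc'.trans hcb')).2 fun h => hbd h.symm)

lemma indFree_cycleGraph_four : IndFree (stepGraph α) (cycleGraph 4) := by
  rintro ⟨f, hf⟩
  obtain ⟨t, ht⟩ := Finite.exists_min fun s => (f s).1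
  have square : ∀ s : Fin 4, (cycleGraph 4).Adj s (s + 1) ∧ (cycleGraph 4).Adj (s + 1) (s + 2) ∧
      (cycleGraph 4).Adj (s + 2) (s + 3) ∧ (cycleGraph 4).Adj (s + 3) s ∧
      ¬ (cycleGraph 4).Adj s (s + 2) ∧ ¬ (cycleGraph 4).Adj (s + 1) (s + 3) ∧
      s ≠ s + 2 ∧ s + 1 ≠ s + 3 := by decide
  obtain ⟨h01, h12, h23, h30, n02, n13, d02, d13⟩ := square t
  have lt_of_adj : ∀ s, (cycleGraph 4).Adj t s → (f t).1 < (f s).1 := fun s h =>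
    (ht s).lt_of_ne (fst_ne_of_adj ((hf t s).2 h))
  exact false_of_induced_square_of_source ((hf _ _).2 h01) ((hf _ _).2 h12) ((hf _ _).2 h23)
    ((hf _ _).2 h30) (mt (hf _ _).1 n02) (mt (hf _ _).1 n13) (f.injective.ne d02)
    (f.injective.ne d13) (lt_of_adj _ h01) (lt_of_adj _ h30.symm)

lemma indepIn_singleton_product (k : α) (s : Finset (ZMod 4)) :
    IndepIn (stepGraph α) ({k} ×ˢ s) := by
  intro u hu v hv
  simp only [mem_product, mem_singleton] at hu hv
  exact not_adj_of_fst_eq (hu.1.trans hv.1.symm)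

/-- Non-adjacency forces the vertex labelled `x + 1` into an earlier part than the one labelled `x`,
so four labels would give a cyclically descending sequence of parts. -/
lemma card_le_three {s : Finset (α × ZMod 4)} (hs : IndepIn (stepGraph α) s)
    (hinj : Set.InjOn Prod.fst (s : Set (α × ZMod 4))) : s.card ≤ 3 := by
  by_contra! h
  have hsnd : Set.InjOn Prod.snd s := fun u hu v hv h =>
    by_contra fun hne => snd_ne_of_not_adj hne (hs u hu v hv) h
  have himage : s.image Prod.snd = univ := by
    refine eq_univ_of_card _ (le_antisymm (card_le_univ _) ?_)
    rw [card_image_of_injOn hsnd, ZMod.card]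
    exact h
  have hlabel : ∀ x : ZMod 4, ∃ w ∈ s, w.2 = x := fun x => by
    simpa using (himage.symm ▸ mem_univ x : x ∈ s.image Prod.snd)
  choose w hw hwx using hlabel
  have desc : ∀ x, (w (x + 1)).1 < (w x).1 := by
    intro x
    have hx : x ≠ x + 1 := by revert x; decide
    refine fst_lt_of_not_adj_of_snd_eq_add_one (fun h => hx ?_) (hs _ (hw x) _ (hw (x + 1)))
      (by rw [hwx, hwx])
    simpa only [hwx] using congrArg Prod.snd (hinj (hw x) (hw (x + 1)) h)
  exact lt_irrefl _ ((desc 3).trans ((desc 2).trans ((desc 1).trans (desc 0))))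

end stepGraph

lemma indFree_sum_bot {V U W : Type*} {G : SimpleGraph V} {H : SimpleGraph W}
    (hH : ∀ w, ∃ w', H.Adj w w') (hG : IndFree G H) : IndFree (G ⊕g (⊥ : SimpleGraph U)) H := by
  rintro ⟨f, hf⟩
  have hleft : ∀ w, ∃ v, f w = Sum.inl v := by
    intro w
    obtain ⟨w', h⟩ := hH w
    have hadj := (hf w w').2 h
    rcases hfw : f w with v | u
    · exact ⟨v, rfl⟩
    · rcases hfw' : f w' with v' | u' <;> simp [hfw, hfw'] at hadj
  choose g hg using hleft
  refine hG ⟨⟨g, fun a b h => f.injective (by rw [hg, hg, h])⟩, fun a b => ?_⟩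
  change G.Adj (g a) (g b) ↔ H.Adj a b
  simpa only [hg, sum_adj_inl] using hf a b

lemma indepIn_disjSum_bot {V U : Type*} {H : SimpleGraph V} {s : Finset V} (hs : IndepIn H s)
    (t : Finset U) : IndepIn (H ⊕g ⊥) (s.disjSum t) := by
  rintro (u | u) hu (v | v) hv
  · simpa using hs u (inl_mem_disjSum.1 hu) v (inl_mem_disjSum.1 hv)
  all_goals simp

lemma not_hasRainbowIndep_disjSum_bot {V U ι : Type*} [Fintype U] {H : SimpleGraph V}
    {π : V → ι} {m : ℕ} (hH : ∀ s : Finset V, IndepIn H s → Set.InjOn π s → s.card < m)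
    (P : ι → Finset V) (hP : ∀ i, ∀ v ∈ P i, π v = i) :
    ¬ HasRainbowIndep (H ⊕g (⊥ : SimpleGraph U)) (fun i => (P i).disjSum univ)
      (m + Fintype.card U) := by
  classical
  rintro ⟨j, v, hj, hv, hmem, hind⟩
  set S := univ.image v
  have hS : S.card = m + Fintype.card U := by simp [S, card_image_of_injective _ hv]
  have hindep : IndepIn H S.toLeft := by
    intro x hx y hy
    obtain ⟨i, -, hi⟩ := mem_image.1 (mem_toLeft.1 hx)
    obtain ⟨i', -, hi'⟩ := mem_image.1 (mem_toLeft.1 hy)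
    rcases eq_or_ne i i' with rfl | hne
    · rw [← Sum.inl_injective (hi.symm.trans hi')]
      exact H.loopless.irrefl x
    · simpa [hi, hi'] using hind i i' hne
  have hinj : Set.InjOn π S.toLeft := by
    intro x hx y hy hxy
    obtain ⟨i, -, hi⟩ := mem_image.1 (mem_toLeft.1 hx)
    obtain ⟨i', -, hi'⟩ := mem_image.1 (mem_toLeft.1 hy)
    have hxi := hP _ x (inl_mem_disjSum.1 (hi ▸ hmem i))
    have hyi := hP _ y (inl_mem_disjSum.1 (hi' ▸ hmem i'))
    have : i = i' := hj (hxi.symm.trans (hxy.trans hyi))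
    subst this
    exact Sum.inl_injective (hi.symm.trans hi')
  have hleft := hH _ hindep hinj
  have hsplit := card_toLeft_add_card_toRight (u := S)
  have hright := card_le_univ S.toRight
  omega

theorem C4_free_rainbow_infinite (n : ℕ) (hn : 4 ≤ n) (N : ℕ) :
    ∃ (V : Type) (G : SimpleGraph V) (I : Fin N → Finset V),
      IndFree G (SimpleGraph.cycleGraph 4) ∧
      (∀ i, (I i).card = n ∧ IndepIn G (I i)) ∧
      ¬ HasRainbowIndep G I n := by
  obtain ⟨c, rfl⟩ : ∃ c, n = 4 + c := ⟨n - 4, by omega⟩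
  refine ⟨(Fin N × ZMod 4) ⊕ Fin c, stepGraph (Fin N) ⊕g ⊥,
    fun k => ({k} ×ˢ univ).disjSum univ, ?_, fun k => ⟨?_, ?_⟩, ?_⟩
  · exact indFree_sum_bot (fun s => ⟨s + 1, by simp [cycleGraph_adj]⟩)
      stepGraph.indFree_cycleGraph_four
  · simp [card_disjSum]
  · exact indepIn_disjSum_bot (stepGraph.indepIn_singleton_product k univ) univ
  · simpa using not_hasRainbowIndep_disjSum_bot (U := Fin c) (π := Prod.fst)
      (fun s hs hinj => Nat.lt_succ_of_le (stepGraph.card_le_three hs hinj)) _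
      fun k v hv => mem_singleton.1 (mem_product.1 hv).1
end

section
/- Every chordal graph has the property: for all m ≤ n, any m independent sets of size n admit a rainbow independent m-set. That is, f_T(n,m) = m where T is the class of chordal graphs. -/
open SimpleGraph Finset

/-- A graph is chordal if it has no induced cycle of length at least 4. -/
def Chordal {V : Type*} (G : SimpleGraph V) : Prop :=
  ∀ ℓ : ℕ, 4 ≤ ℓ → IndFree G (SimpleGraph.cycleGraph ℓ)

namespace ChordalAux
universe u
variable {V : Type*}

/-- A chain: `k` successive adjacencies along the vertex sequence `c`. -/
def IsChain (G : SimpleGraph V) (c : ℕ → V) (k : ℕ) : Prop :=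
  ∀ i, i < k → G.Adj (c i) (c (i + 1))

/-- Connectivity avoiding the set `S`. -/
def Conn (G : SimpleGraph V) (S : Set V) (x y : V) : Prop :=
  ∃ (k : ℕ) (c : ℕ → V), IsChain G c k ∧ c 0 = x ∧ c k = y ∧ ∀ i, i ≤ k → c i ∉ S

lemma conn_refl {G : SimpleGraph V} {S : Set V} {x : V} (hx : x ∉ S) : Conn G S x x :=
  ⟨0, fun _ => x, fun i h => absurd h (by omega), rfl, rfl, fun _ _ => hx⟩

lemma conn_symm {G : SimpleGraph V} {S : Set V} {x y : V} (h : Conn G S x y) :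
    Conn G S y x := by
  obtain ⟨k, c, hc, h0, hk, hS⟩ := h
  refine ⟨k, fun i => c (k - i), ?_, ?_, ?_, ?_⟩
  · intro i hi
    show G.Adj (c (k - i)) (c (k - (i + 1)))
    have h2 : k - i = (k - (i + 1)) + 1 := by omega
    rw [h2]
    exact (hc (k - (i + 1)) (by omega)).symm
  · simpa using hk
  · simpa using h0
  · intro i hi; exact hS (k - i) (by omega)

lemma conn_trans {G : SimpleGraph V} {S : Set V} {x y z : V} (h1 : Conn G S x y)
    (h2 : Conn G S y z) : Conn G S x z := by
  obtain ⟨k, c, hc, hc0, hck, hcS⟩ := h1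
  obtain ⟨l, d, hd, hd0, hdl, hdS⟩ := h2
  refine ⟨k + l, fun i => if i ≤ k then c i else d (i - k), ?_, ?_, ?_, ?_⟩
  · intro i hi
    by_cases h1 : i + 1 ≤ k
    · simp only [if_pos (by omega : i ≤ k), if_pos h1]
      exact hc i (by omega)
    · by_cases h0 : i ≤ k
      · have hik : i = k := by omega
        simp only [if_pos h0, if_neg h1]
        subst hik
        have : d (i + 1 - i) = d 1 := by norm_num
        rw [this, hck.trans hd0.symm]
        exact hd 0 (by omega)
      · simp only [if_neg h0, if_neg (by omega : ¬ i + 1 ≤ k)]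
        have : i + 1 - k = (i - k) + 1 := by omega
        rw [this]
        exact hd (i - k) (by omega)
  · simpa using hc0
  · by_cases hl : l = 0
    · subst hl; simp only [Nat.add_zero, if_pos le_rfl]
      rw [hck, ← hd0]; simpa using hdl
    · simp only [if_neg (by omega : ¬ k + l ≤ k)]
      simpa using hdl
  · intro i hi
    by_cases h0 : i ≤ k
    · simp only [if_pos h0]; exact hcS i h0
    · simp only [if_neg h0]; exact hdS (i - k) (by omega)

lemma conn_adj {G : SimpleGraph V} {S : Set V} {x y z : V} (h : Conn G S x y)
    (hyz : G.Adj y z) (hz : z ∉ S) : Conn G S x z := by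
  obtain ⟨k, c, hc, h0, hk, hS⟩ := h
  refine ⟨k + 1, fun i => if i ≤ k then c i else z, ?_, ?_, ?_, ?_⟩
  · intro i hi
    by_cases h1 : i < k
    · simp only [if_pos (by omega : i ≤ k), if_pos (by omega : i + 1 ≤ k)]
      exact hc i h1
    · have hik : i = k := by omega
      subst hik
      simp only [if_pos le_rfl, if_neg (by omega : ¬ i + 1 ≤ i)]
      rw [hk]; exact hyz
  · simpa using h0
  · simp
  · intro i hi
    by_cases h1 : i ≤ k
    · simp only [if_pos h1]; exact hS i h1
    · simp only [if_neg h1]; exact hz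

lemma fin_sub_val_eq_one {l : ℕ} (hl : 2 ≤ l) (u v : Fin l) :
    (u - v).val = 1 ↔ (v.val + 1 = u.val ∨ (v.val = l - 1 ∧ u.val = 0)) := by
  rw [Fin.sub_def]
  simp only [Fin.val_mk]
  have hu := u.isLt; have hv := v.isLt
  rcases Nat.lt_or_ge (l - v.val + u.val) l with h | h
  · rw [Nat.mod_eq_of_lt h]; omega
  · rw [Nat.mod_eq_sub_mod h, Nat.mod_eq_of_lt (by omega)]; omega

lemma cycle_adj_iff {l : ℕ} (hl : 2 ≤ l) (u v : Fin l) :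
    (cycleGraph l).Adj u v ↔ (u.val + 1 = v.val ∨ v.val + 1 = u.val ∨
      (u.val = 0 ∧ v.val = l - 1) ∨ (v.val = 0 ∧ u.val = l - 1)) := by
  rw [SimpleGraph.cycleGraph_adj', fin_sub_val_eq_one hl, fin_sub_val_eq_one hl]
  tauto

lemma exists_min_chain {G : SimpleGraph V} {T : Set V} {x y : V}
    (h : ∃ (k : ℕ) (c : ℕ → V), IsChain G c k ∧ c 0 = x ∧ c k = y ∧
      ∀ i, 0 < i → i < k → c i ∈ T) :
    ∃ (k : ℕ) (c : ℕ → V), IsChain G c k ∧ c 0 = x ∧ c k = y ∧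
      (∀ i, 0 < i → i < k → c i ∈ T) ∧
      (∀ i j, i < j → j ≤ k → c i ≠ c j) ∧
      (∀ i j, i < j → j ≤ k → G.Adj (c i) (c j) → j = i + 1) := by
  classical
  set P : ℕ → Prop := fun k => ∃ c : ℕ → V, IsChain G c k ∧ c 0 = x ∧ c k = y ∧
      ∀ i, 0 < i → i < k → c i ∈ T with hP
  have hex : ∃ k, P k := by obtain ⟨k, c, h1, h2, h3, h4⟩ := h; exact ⟨k, c, h1, h2, h3, h4⟩
  obtain ⟨c, hc, h0, hk, hT⟩ := Nat.find_spec hex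
  set k₀ := Nat.find hex with hk₀
  refine ⟨k₀, c, hc, h0, hk, hT, ?_, ?_⟩
  · -- no repeated vertices
    intro i j hij hjk heq
    set d := j - i with hd
    have hd1 : 1 ≤ d := by omega
    have : P (k₀ - d) := by
      refine ⟨fun t => if t ≤ i then c t else c (t + d), ?_, ?_, ?_, ?_⟩
      · intro t ht
        by_cases h1 : t + 1 ≤ i
        · simp only [if_pos (by omega : t ≤ i), if_pos h1]
          exact hc t (by omega)
        · by_cases h2 : t ≤ i
          · have hti : t = i := by omega
            subst hti
            simp only [if_pos le_rfl, if_neg h1]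
            have e1 : t + 1 + d = j + 1 := by omega
            rw [e1, heq]
            exact hc j (by omega)
          · simp only [if_neg h2, if_neg (by omega : ¬ t + 1 ≤ i)]
            have e1 : t + 1 + d = (t + d) + 1 := by omega
            rw [e1]
            exact hc (t + d) (by omega)
      · simpa using h0
      · by_cases h1 : k₀ - d ≤ i
        · have e1 : k₀ - d = i := by omega
          have e2 : j = k₀ := by omega
          show (if k₀ - d ≤ i then c (k₀ - d) else c (k₀ - d + d)) = y
          rw [if_pos h1, e1, heq, e2]; exact hk
        · simp only [if_neg h1]
          have e1 : k₀ - d + d = k₀ := by omega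
          rw [e1]; exact hk
      · intro t ht1 ht2
        by_cases h1 : t ≤ i
        · simp only [if_pos h1]; exact hT t ht1 (by omega)
        · simp only [if_neg h1]; exact hT (t + d) (by omega) (by omega)
    exact Nat.find_min hex (by omega) this
  · -- no chords
    intro i j hij hjk hadj
    by_contra hne
    have hij2 : i + 2 ≤ j := by omega
    set d := j - i - 1 with hd
    have hd1 : 1 ≤ d := by omega
    have : P (k₀ - d) := by
      refine ⟨fun t => if t ≤ i then c t else c (t + d), ?_, ?_, ?_, ?_⟩
      · intro t ht
        by_cases h1 : t + 1 ≤ i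
        · simp only [if_pos (by omega : t ≤ i), if_pos h1]
          exact hc t (by omega)
        · by_cases h2 : t ≤ i
          · have hti : t = i := by omega
            subst hti
            simp only [if_pos le_rfl, if_neg h1]
            have e1 : t + 1 + d = j := by omega
            rw [e1]
            exact hadj
          · simp only [if_neg h2, if_neg (by omega : ¬ t + 1 ≤ i)]
            have e1 : t + 1 + d = (t + d) + 1 := by omega
            rw [e1]
            exact hc (t + d) (by omega)
      · simpa using h0
      · simp only [if_neg (by omega : ¬ k₀ - d ≤ i)]
        have e1 : k₀ - d + d = k₀ := by omega
        rw [e1]; exact hk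
      · intro t ht1 ht2
        by_cases h1 : t ≤ i
        · simp only [if_pos h1]; exact hT t ht1 (by omega)
        · simp only [if_neg h1]; exact hT (t + d) (by omega) (by omega)
    exact Nat.find_min hex (by omega) this

lemma chordal_no_double_path {G : SimpleGraph V} (hG : Chordal G) {A B : Set V} {x y : V}
    (hxy : x ≠ y) (hnadj : ¬ G.Adj x y)
    (hAB : ∀ u ∈ A, ∀ w ∈ B, ¬ G.Adj u w)
    (hABd : ∀ u, u ∈ A → u ∉ B)
    (hxA : x ∉ A) (hyA : y ∉ A) (hxB : x ∉ B) (hyB : y ∉ B)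
    (hA : ∃ (k : ℕ) (c : ℕ → V), IsChain G c k ∧ c 0 = x ∧ c k = y ∧
      ∀ i, 0 < i → i < k → c i ∈ A)
    (hB : ∃ (k : ℕ) (c : ℕ → V), IsChain G c k ∧ c 0 = x ∧ c k = y ∧
      ∀ i, 0 < i → i < k → c i ∈ B) :
    False := by
  obtain ⟨p, cP, hPc, hP0, hPp, hPA, hPinj, hPch⟩ := exists_min_chain hA
  obtain ⟨q, cQ, hQc, hQ0, hQq, hQB, hQinj, hQch⟩ := exists_min_chain hB
  have hp2 : 2 ≤ p := by
    by_contra h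
    interval_cases p
    · exact hxy (hP0.symm.trans hPp)
    · have h1 := hPc 0 (by omega)
      rw [hP0, hPp] at h1
      exact hnadj h1
  have hq2 : 2 ≤ q := by
    by_contra h
    interval_cases q
    · exact hxy (hQ0.symm.trans hQq)
    · have h1 := hQc 0 (by omega)
      rw [hQ0, hQq] at h1
      exact hnadj h1
  set l := p + q with hldef
  have hl4 : 4 ≤ l := by omega
  set f : Fin l → V := fun t => if (t : ℕ) ≤ p then cP (t : ℕ) else cQ (l - (t : ℕ)) with hf
  -- membership description of the two chains
  have hPmem : ∀ i : ℕ, i ≤ p → cP i = x ∨ cP i = y ∨ cP i ∈ A := by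
    intro i hi
    rcases Nat.eq_zero_or_pos i with h | h
    · subst h; exact Or.inl hP0
    · rcases Nat.lt_or_ge i p with h2 | h2
      · exact Or.inr (Or.inr (hPA i h h2))
      · have : i = p := by omega
        subst this; exact Or.inr (Or.inl hPp)
  -- injectivity
  have hinj : Function.Injective f := by
    intro s t hst
    simp only [hf] at hst
    have hsl := s.isLt
    have htl := t.isLt
    have cross : ∀ i j : ℕ, i ≤ p → p < j → j < l → cP i ≠ cQ (l - j) := by
      intro i j hi hj hjl heq
      have hB1 : cQ (l - j) ∈ B := hQB (l - j) (by omega) (by omega)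
      rcases hPmem i hi with h | h | h
      · rw [h] at heq; exact hxB (heq ▸ hB1)
      · rw [h] at heq; exact hyB (heq ▸ hB1)
      · exact hABd _ (heq ▸ h) hB1
    by_cases hs : (s : ℕ) ≤ p <;> by_cases ht : (t : ℕ) ≤ p
    · rw [if_pos hs, if_pos ht] at hst
      rcases Nat.lt_trichotomy (s : ℕ) (t : ℕ) with h | h | h
      · exact absurd hst (hPinj _ _ h ht)
      · exact Fin.ext h
      · exact absurd hst.symm (hPinj _ _ h hs)
    · rw [if_pos hs, if_neg ht] at hst
      exact absurd hst (cross _ _ hs (by omega) htl)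
    · rw [if_neg hs, if_pos ht] at hst
      exact absurd hst.symm (cross _ _ ht (by omega) hsl)
    · rw [if_neg hs, if_neg ht] at hst
      rcases Nat.lt_trichotomy (l - (s : ℕ)) (l - (t : ℕ)) with h | h | h
      · exact absurd hst (hQinj _ _ h (by omega))
      · exact Fin.ext (by omega)
      · exact absurd hst.symm (hQinj _ _ h (by omega))
  -- the step adjacency
  have hstep : ∀ s t : Fin l, (s : ℕ) + 1 = (t : ℕ) → G.Adj (f s) (f t) := by
    intro s t h
    have hsl := s.isLt
    have htl := t.isLt
    simp only [hf]
    by_cases ht : (t : ℕ) ≤ p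
    · rw [if_pos (by omega : (s : ℕ) ≤ p), if_pos ht]
      have h1 := hPc (s : ℕ) (by omega)
      rwa [h] at h1
    · by_cases hs : (s : ℕ) ≤ p
      · have hsp : (s : ℕ) = p := by omega
        rw [if_pos hs, if_neg ht]
        have e1 : l - (t : ℕ) = q - 1 := by omega
        rw [hsp, hPp, ← hQq, e1]
        have h1 := hQc (q - 1) (by omega)
        have e2 : q - 1 + 1 = q := by omega
        rw [e2] at h1
        exact h1.symm
      · rw [if_neg hs, if_neg ht]
        have e1 : l - (s : ℕ) = (l - (t : ℕ)) + 1 := by omega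
        rw [e1]
        exact (hQc (l - (t : ℕ)) (by omega)).symm
  -- cross adjacency analysis
  have hcross : ∀ s t : Fin l, (s : ℕ) ≤ p → p < (t : ℕ) → G.Adj (f s) (f t) →
      ((s : ℕ) + 1 = (t : ℕ) ∨ (t : ℕ) + 1 = (s : ℕ) ∨
        ((s : ℕ) = 0 ∧ (t : ℕ) = l - 1) ∨ ((t : ℕ) = 0 ∧ (s : ℕ) = l - 1)) := by
    intro s t hs ht hadj
    have hsl := s.isLt
    have htl := t.isLt
    simp only [hf, if_pos hs, if_neg (by omega : ¬ (t : ℕ) ≤ p)] at hadj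
    set r := l - (t : ℕ) with hr
    have hr1 : 1 ≤ r := by omega
    have hrq : r ≤ q - 1 := by omega
    have hBr : cQ r ∈ B := hQB r (by omega) (by omega)
    rcases Nat.eq_zero_or_pos (s : ℕ) with h0 | h0
    · -- f s = x = cQ 0
      rw [h0, hP0, ← hQ0] at hadj
      have := hQch 0 r (by omega) (by omega) hadj
      omega
    · rcases Nat.lt_or_ge (s : ℕ) p with hlt | hge
      · exact absurd hadj (hAB _ (hPA _ h0 hlt) _ hBr)
      · have hsp : (s : ℕ) = p := by omega
        rw [hsp, hPp, ← hQq] at hadj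
        have := hQch r q (by omega) le_rfl hadj.symm
        omega
  refine hG l hl4 ⟨⟨f, hinj⟩, ?_⟩
  intro a b
  rw [cycle_adj_iff (by omega)]
  simp only [Function.Embedding.coeFn_mk]
  have hal := a.isLt
  have hbl := b.isLt
  constructor
  · intro hadj
    have hne : (a : ℕ) ≠ (b : ℕ) := fun h => G.ne_of_adj hadj (congrArg f (Fin.ext h))
    by_cases ha : (a : ℕ) ≤ p <;> by_cases hb : (b : ℕ) ≤ p
    · simp only [hf, if_pos ha, if_pos hb] at hadj
      rcases Nat.lt_trichotomy (a : ℕ) (b : ℕ) with h | h | h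
      · have := hPch _ _ h hb hadj; omega
      · omega
      · have := hPch _ _ h ha hadj.symm; omega
    · have := hcross a b ha (by omega) hadj; tauto
    · have := hcross b a hb (by omega) hadj.symm; tauto
    · simp only [hf, if_neg ha, if_neg hb] at hadj
      rcases Nat.lt_trichotomy (l - (a : ℕ)) (l - (b : ℕ)) with h | h | h
      · have := hQch _ _ h (by omega) hadj; omega
      · omega
      · have := hQch _ _ h (by omega) hadj.symm; omega
  · intro hcyc
    rcases hcyc with h | h | h | h
    · exact hstep a b h
    · exact (hstep b a h).symm
    · simp only [hf, if_pos (by omega : (a : ℕ) ≤ p), if_neg (by omega : ¬ (b : ℕ) ≤ p)]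
      have e1 : l - (b : ℕ) = 1 := by omega
      rw [h.1, hP0, ← hQ0, e1]
      exact hQc 0 (by omega)
    · simp only [hf, if_pos (by omega : (b : ℕ) ≤ p), if_neg (by omega : ¬ (a : ℕ) ≤ p)]
      have e1 : l - (a : ℕ) = 1 := by omega
      rw [h.1, hP0, ← hQ0, e1]
      exact (hQc 0 (by omega)).symm
  
/-- `v` is a simplicial vertex: its neighbourhood is a clique. -/
def Simplicial (G : SimpleGraph V) (v : V) : Prop :=
  ∀ x y, G.Adj v x → G.Adj v y → x ≠ y → G.Adj x y

lemma chordal_induce {G : SimpleGraph V} (hG : Chordal G) (s : Set V) :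
    Chordal (G.induce s) := by
  rintro l hl ⟨f, hf⟩
  exact hG l hl ⟨f.trans (Function.Embedding.subtype _), fun a b => hf a b⟩

lemma conn_self_set {G : SimpleGraph V} {S : Set V} {a u : V} (h : Conn G S a u) :
    Conn G {v | ¬ Conn G S a v} a u := by
  obtain ⟨k, c, hc, h0, hk, hS⟩ := h
  refine ⟨k, c, hc, h0, hk, fun i hi hmem => hmem ?_⟩
  exact ⟨i, c, fun t ht => hc t (by omega), h0, rfl, fun t ht => hS t (by omega)⟩

lemma chain_through {G : SimpleGraph V} {S : Set V} {a x y u w : V}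
    (hu : Conn G S a u) (hw : Conn G S a w) (hxu : G.Adj x u) (hwy : G.Adj w y) :
    ∃ (k : ℕ) (c : ℕ → V), IsChain G c k ∧ c 0 = x ∧ c k = y ∧
      ∀ i, 0 < i → i < k → Conn G S a (c i) := by
  obtain ⟨k, c, hc, h0, hk, hmem⟩ :=
    conn_trans (conn_symm (conn_self_set hu)) (conn_self_set hw)
  simp only [Set.mem_setOf_eq, not_not] at hmem
  refine ⟨k + 2, fun t => if t = 0 then x else if t ≤ k + 1 then c (t - 1) else y,
    ?_, ?_, ?_, ?_⟩
  · intro t ht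
    rcases Nat.eq_zero_or_pos t with h | hpos
    · subst h
      simp only [if_pos rfl, if_neg (by omega : ¬ (0 : ℕ) + 1 = 0),
        if_pos (by omega : 0 + 1 ≤ k + 1)]
      rw [(by omega : 0 + 1 - 1 = 0), h0]
      exact hxu
    · rcases Nat.lt_or_ge t (k + 1) with h2 | h2
      · simp only [if_neg (by omega : ¬ t = 0), if_pos (by omega : t ≤ k + 1),
          if_neg (by omega : ¬ t + 1 = 0), if_pos (by omega : t + 1 ≤ k + 1)]
        have e : t + 1 - 1 = (t - 1) + 1 := by omega
        rw [e]
        exact hc (t - 1) (by omega)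
      · have ht1 : t = k + 1 := by omega
        subst ht1
        simp only [if_neg (by omega : ¬ k + 1 = 0), if_pos le_rfl,
          if_neg (by omega : ¬ k + 1 + 1 = 0), if_neg (by omega : ¬ k + 1 + 1 ≤ k + 1)]
        rw [(by omega : k + 1 - 1 = k), hk]
        exact hwy
  · simp
  · simp only [if_neg (by omega : ¬ k + 2 = 0), if_neg (by omega : ¬ k + 2 ≤ k + 1)]
  · intro i h1 h2
    simp only [if_neg (by omega : ¬ i = 0), if_pos (by omega : i ≤ k + 1)]
    exact hmem (i - 1) (by omega)

lemma sep_nbr {G : SimpleGraph V} {S : Finset V} {a b x : V}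
    (hmin : ∀ S' : Finset V, a ∉ S' → b ∉ S' → ¬ Conn G ↑S' a b → S.card ≤ S'.card)
    (ha : a ∉ S) (hb : b ∉ S) (hsep : ¬ Conn G ↑S a b) (hx : x ∈ S) :
    ∃ u, Conn G (↑S) a u ∧ G.Adj x u := by
  classical
  by_contra hno
  push_neg at hno
  have hcard : (S.erase x).card < S.card := Finset.card_erase_lt_of_mem hx
  have h1 : ¬ ¬ Conn G ↑(S.erase x) a b := fun h =>
    absurd (hmin _ (fun h' => ha (Finset.mem_of_mem_erase h'))
      (fun h' => hb (Finset.mem_of_mem_erase h')) h) (by omega)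
  rw [not_not] at h1
  obtain ⟨k, c, hc, h0, hk, hS⟩ := h1
  have key : ∀ i, i ≤ k → Conn G ↑S a (c i) := by
    intro i
    induction i with
    | zero => intro _; rw [h0]; exact conn_refl (by exact_mod_cast ha)
    | succ n ih =>
      intro hn
      have hcn := ih (by omega)
      have hadj := hc n (by omega)
      by_cases hmem : c (n + 1) ∈ S
      · have hx1 : c (n + 1) = x := by
          have h2 := hS (n + 1) hn
          rw [Finset.mem_coe, Finset.mem_erase] at h2
          tauto
        rw [hx1] at hadj
        exact absurd hadj.symm (hno _ hcn)
      · exact conn_adj hcn hadj (by exact_mod_cast hmem)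
  exact hsep (hk ▸ key k le_rfl)

lemma dirac (N : ℕ) : ∀ {V : Type u} [Finite V] (G : SimpleGraph V), Chordal G →
    Nat.card V ≤ N →
    (∀ a b : V, a ≠ b → G.Adj a b) ∨
      ∃ a b : V, a ≠ b ∧ ¬ G.Adj a b ∧ Simplicial G a ∧ Simplicial G b := by
  induction N with
  | zero =>
    intro V _ G _ hcard
    left
    intro a b _
    have : Nonempty V := ⟨a⟩
    have : 0 < Nat.card V := Nat.card_pos
    omega
  | succ N ih =>
    intro V _ G hG hcard
    by_cases hcomp : ∀ a b : V, a ≠ b → G.Adj a b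
    · exact Or.inl hcomp
    right
    push_neg at hcomp
    obtain ⟨a, b, hab, hnadj⟩ := hcomp
    classical
    have hfin : Fintype V := Fintype.ofFinite V
    set SepP : Finset V → Prop := fun S => a ∉ S ∧ b ∉ S ∧ ¬ Conn G ↑S a b with hSepP
    have hS0 : SepP (Finset.univ \ {a, b}) := by
      refine ⟨by simp, by simp, ?_⟩
      rintro ⟨k, c, hc, h0, hk, hS⟩
      have hmem : ∀ i, i ≤ k → c i = a ∨ c i = b := by
        intro i hi
        have h2 := hS i hi
        rw [Finset.mem_coe, Finset.mem_sdiff] at h2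
        push_neg at h2
        simpa using h2 (Finset.mem_univ _)
      have hk1 : 1 ≤ k := by
        rcases Nat.eq_zero_or_pos k with h | h
        · subst h; exact absurd (h0.symm.trans hk) hab
        · omega
      have hadj := hc 0 (by omega)
      rw [h0] at hadj
      rcases hmem 1 (by omega) with h | h
      · rw [h] at hadj; exact G.irrefl hadj
      · rw [h] at hadj; exact hnadj hadj
    obtain ⟨S, hSmem, hSmin'⟩ := Finset.exists_min_image
      (Finset.univ.filter SepP) Finset.card ⟨_, by simp only [Finset.mem_filter]; exact ⟨Finset.mem_univ _, hS0⟩⟩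
    rw [Finset.mem_filter] at hSmem
    obtain ⟨-, haS, hbS, hconn⟩ := hSmem
    have hmin : ∀ S' : Finset V, a ∉ S' → b ∉ S' → ¬ Conn G ↑S' a b → S.card ≤ S'.card := by
      intro S' h1 h2 h3
      exact hSmin' S' (by rw [Finset.mem_filter]; exact ⟨Finset.mem_univ _, h1, h2, h3⟩)
    set A : Set V := {v | Conn G ↑S a v} with hA
    set B : Set V := {v | Conn G ↑S b v} with hB
    have hAS : ∀ v ∈ A, v ∉ (↑S : Set V) := by
      rintro v ⟨k, c, hc, h0, hk, hS'⟩
      exact hk ▸ hS' k le_rfl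
    have hBS : ∀ v ∈ B, v ∉ (↑S : Set V) := by
      rintro v ⟨k, c, hc, h0, hk, hS'⟩
      exact hk ▸ hS' k le_rfl
    have haA : a ∈ A := conn_refl (by exact_mod_cast haS)
    have hbB : b ∈ B := conn_refl (by exact_mod_cast hbS)
    have hdisj : ∀ v, v ∈ A → v ∉ B := fun v hva hvb =>
      hconn (conn_trans hva (conn_symm hvb))
    have hclA : ∀ v ∈ A, ∀ w, G.Adj v w → w ∉ (↑S : Set V) → w ∈ A :=
      fun v hv w hadj hw => conn_adj hv hadj hw
    have hclB : ∀ v ∈ B, ∀ w, G.Adj v w → w ∉ (↑S : Set V) → w ∈ B :=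
      fun v hv w hadj hw => conn_adj hv hadj hw
    have hnoAB : ∀ u ∈ A, ∀ w ∈ B, ¬ G.Adj u w := fun u hu w hw hadj =>
      hdisj w (hclA u hu w hadj (hBS w hw)) hw
    -- the separator is a clique
    have hclique : ∀ x ∈ S, ∀ y ∈ S, x ≠ y → G.Adj x y := by
      intro x hx y hy hxy
      by_contra hna
      have hconn' : ¬ Conn G ↑S b a := fun h => hconn (conn_symm h)
      have hmin' : ∀ S' : Finset V, b ∉ S' → a ∉ S' → ¬ Conn G ↑S' b a → S.card ≤ S'.card :=
        fun S' h1 h2 h3 => hmin S' h2 h1 (fun h => h3 (conn_symm h))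
      obtain ⟨ux, huxA, hadjx⟩ := sep_nbr hmin haS hbS hconn hx
      obtain ⟨uy, huyA, hadjy⟩ := sep_nbr hmin haS hbS hconn hy
      obtain ⟨wx, hwxB, hadjxB⟩ := sep_nbr hmin' hbS haS hconn' hx
      obtain ⟨wy, hwyB, hadjyB⟩ := sep_nbr hmin' hbS haS hconn' hy
      have hxS : x ∈ (↑S : Set V) := by exact_mod_cast hx
      have hyS : y ∈ (↑S : Set V) := by exact_mod_cast hy
      exact chordal_no_double_path hG hxy hna hnoAB hdisj
        (fun h => hAS x h hxS) (fun h => hAS y h hyS)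
        (fun h => hBS x h hxS) (fun h => hBS y h hyS)
        (chain_through huxA huyA hadjx hadjy.symm)
        (chain_through hwxB hwyB hadjxB hadjyB.symm)
    -- extract a simplicial vertex inside a component
    have key : ∀ (A' : Set V) (a' z : V), a' ∈ A' → z ∉ A' → z ∉ S →
        (∀ v ∈ A', ∀ w, G.Adj v w → (w ∈ A' ∨ w ∈ (↑S : Set V))) →
        ∃ v ∈ A', Simplicial G v := by
      intro A' a' z ha' hzA hzS hcl
      set s : Set V := A' ∪ ↑S with hs
      have hzs : z ∉ s := by
        rw [hs]
        rintro (h | h)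
        · exact hzA h
        · exact hzS (by exact_mod_cast h)
      have hcards : Nat.card ↥s ≤ N := by
        have h1 : Nat.card ↥s < Nat.card V := by
          rw [Nat.card_coe_set_eq, ← Set.ncard_univ]
          refine Set.ncard_lt_ncard ?_ Set.finite_univ
          rw [Set.ssubset_univ_iff]
          intro h
          rw [h] at hzs
          exact hzs (Set.mem_univ z)
        omega
      have hmemcl : ∀ v : V, v ∈ A' → ∀ w : V, G.Adj v w → w ∈ s := by
        intro v hv w hadj
        rcases hcl v hv w hadj with h | h
        · exact Or.inl h
        · exact Or.inr h
      rcases ih (G.induce s) (chordal_induce hG s) hcards with hcomp' | ⟨u, w, huw, hnuw, hsu, hsw⟩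
      · refine ⟨a', ha', ?_⟩
        intro x' y' ha1 ha2 hne
        exact hcomp' ⟨x', hmemcl a' ha' x' ha1⟩ ⟨y', hmemcl a' ha' y' ha2⟩
          (by simp [Subtype.ext_iff, hne])
      · have extract : ∀ v : ↥s, ↑v ∈ A' → Simplicial (G.induce s) v → Simplicial G ↑v := by
          intro v hvA hvs x' y' ha1 ha2 hne
          exact hvs ⟨x', hmemcl _ hvA x' ha1⟩ ⟨y', hmemcl _ hvA y' ha2⟩ ha1 ha2
            (by simp [Subtype.ext_iff, hne])
        have hone : (↑u ∈ A') ∨ (↑w ∈ A') := by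
          by_contra hc2
          push_neg at hc2
          have hu' : (↑u : V) ∈ S := by
            rcases u.2 with h | h
            · exact absurd h hc2.1
            · exact_mod_cast h
          have hw' : (↑w : V) ∈ S := by
            rcases w.2 with h | h
            · exact absurd h hc2.2
            · exact_mod_cast h
          exact hnuw (hclique _ hu' _ hw' (by simp [Subtype.ext_iff] at huw ⊢; exact huw))
        rcases hone with h | h
        · exact ⟨↑u, h, extract u h hsu⟩
        · exact ⟨↑w, h, extract w h hsw⟩
    obtain ⟨vA, hvA, hsA⟩ := key A a b haA (fun h => hdisj b h hbB) hbS
      (fun v hv w hadj => by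
        by_cases hw : w ∈ (↑S : Set V)
        · exact Or.inr hw
        · exact Or.inl (hclA v hv w hadj hw))
    obtain ⟨vB, hvB, hsB⟩ := key B b a hbB (fun h => hdisj a haA h) haS
      (fun v hv w hadj => by
        by_cases hw : w ∈ (↑S : Set V)
        · exact Or.inr hw
        · exact Or.inl (hclB v hv w hadj hw))
    exact ⟨vA, vB, fun h => hdisj vA hvA (h ▸ hvB), hnoAB vA hvA vB hvB, hsA, hsB⟩

lemma exists_simplicial {V : Type u} [Finite V] [Nonempty V] (G : SimpleGraph V)
    (hG : Chordal G) : ∃ v, Simplicial G v := by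
  rcases dirac (Nat.card V) G hG le_rfl with h | ⟨a, _, _, _, ha, _⟩
  · obtain ⟨v⟩ := ‹Nonempty V›
    exact ⟨v, fun x y _ _ hne => h x y hne⟩
  · exact ⟨a, ha⟩

lemma exists_simplicial_finset {V : Type u} {G : SimpleGraph V} (hG : Chordal G)
    (U : Finset V) (hU : U.Nonempty) :
    ∃ v ∈ U, ∀ x ∈ U, ∀ y ∈ U, G.Adj v x → G.Adj v y → x ≠ y → G.Adj x y := by
  obtain ⟨u0, hu0⟩ := hU
  have : Nonempty ↥(↑U : Set V) := ⟨⟨u0, by exact_mod_cast hu0⟩⟩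
  obtain ⟨v, hv⟩ := exists_simplicial (G.induce (↑U : Set V)) (chordal_induce hG _)
  refine ⟨↑v, by exact_mod_cast v.2, ?_⟩
  intro x hx y hy h1 h2 hne
  exact hv ⟨x, by exact_mod_cast hx⟩ ⟨y, by exact_mod_cast hy⟩ h1 h2
    (by simp [Subtype.ext_iff]; exact hne)

lemma rainbow_aux {V : Type u} {G : SimpleGraph V} (hG : Chordal G) :
    ∀ m (I : Fin m → Finset V), (∀ i, m ≤ (I i).card ∧ IndepIn G (I i)) →
      HasRainbowIndep G I m := by
  intro m
  induction m with
  | zero =>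
    intro I _
    exact ⟨Fin.elim0, Fin.elim0, fun x => x.elim0, fun x => x.elim0,
      fun x => x.elim0, fun x => x.elim0⟩
  | succ m ih =>
    intro I hI
    classical
    set U : Finset V := Finset.univ.biUnion I with hU
    have hsubU : ∀ (j : Fin (m + 1)), ∀ w ∈ I j, w ∈ U := fun j w hw =>
      Finset.mem_biUnion.mpr ⟨j, Finset.mem_univ _, hw⟩
    have hUne : U.Nonempty := by
      obtain ⟨w, hw⟩ := Finset.card_pos.mp
        (show 0 < (I 0).card by have := (hI 0).1; omega)
      exact ⟨w, hsubU 0 w hw⟩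
    obtain ⟨v, hvU, hsimp⟩ := exists_simplicial_finset hG U hUne
    obtain ⟨k, -, hvk⟩ := Finset.mem_biUnion.mp hvU
    set I' : Fin m → Finset V := fun i =>
      (I (k.succAbove i)).filter (fun u => u ≠ v ∧ ¬ G.Adj v u) with hI'
    have hI'prop : ∀ i, m ≤ (I' i).card ∧ IndepIn G (I' i) := by
      intro i
      set j := k.succAbove i with hj
      have hcard := (hI j).1
      have hindep := (hI j).2
      constructor
      · have hbad : ((I j).filter (fun u => ¬(u ≠ v ∧ ¬ G.Adj v u))).card ≤ 1 := by
          rw [Finset.card_le_one]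
          intro u1 h1 u2 h2
          rw [Finset.mem_filter] at h1 h2
          obtain ⟨hu1, hp1⟩ := h1
          obtain ⟨hu2, hp2⟩ := h2
          push_neg at hp1 hp2
          by_contra hne
          rcases Classical.em (u1 = v) with he1 | he1
          · have hadj := hp2 (fun h : u2 = v => hne (he1.trans h.symm))
            rw [← he1] at hadj
            exact hindep u1 hu1 u2 hu2 hadj
          · have hadj1 := hp1 he1
            rcases Classical.em (u2 = v) with he2 | he2
            · rw [← he2] at hadj1
              exact hindep u2 hu2 u1 hu1 hadj1
            · have hadj2 := hp2 he2
              exact hindep u1 hu1 u2 hu2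
                (hsimp u1 (hsubU j u1 hu1) u2 (hsubU j u2 hu2) hadj1 hadj2 hne)
        have hsum := Finset.card_filter_add_card_filter_not (s := I j)
          (p := fun u => u ≠ v ∧ ¬ G.Adj v u)
        have : (I' i).card = ((I j).filter (fun u => u ≠ v ∧ ¬ G.Adj v u)).card := rfl
        omega
      · intro u1 h1 u2 h2
        exact hindep u1 (Finset.filter_subset _ _ h1) u2 (Finset.filter_subset _ _ h2)
    obtain ⟨j', v', hj'inj, hv'inj, hv'mem, hv'nadj⟩ := ih I' hI'prop
    have hv'prop : ∀ a : Fin m, v' a ≠ v ∧ ¬ G.Adj v (v' a) := by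
      intro a
      have := hv'mem a
      rw [hI'] at this
      exact (Finset.mem_filter.mp this).2
    refine ⟨Fin.cons k (fun i => k.succAbove (j' i)), Fin.cons v v', ?_, ?_, ?_, ?_⟩
    · rw [Fin.cons_injective_iff]
      refine ⟨?_, Function.Injective.comp Fin.succAbove_right_injective hj'inj⟩
      rintro ⟨i, hi⟩
      exact Fin.succAbove_ne k (j' i) hi
    · rw [Fin.cons_injective_iff]
      refine ⟨?_, hv'inj⟩
      rintro ⟨i, hi⟩
      exact (hv'prop i).1 hi
    · intro i
      rcases Fin.eq_zero_or_eq_succ i with rfl | ⟨a, rfl⟩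
      · simpa using hvk
      · simpa using Finset.filter_subset _ _ (hv'mem a)
    · intro i i' hne
      rcases Fin.eq_zero_or_eq_succ i with rfl | ⟨a, rfl⟩ <;>
        rcases Fin.eq_zero_or_eq_succ i' with rfl | ⟨a', rfl⟩
      · exact absurd rfl hne
      · simpa using (hv'prop a').2
      · simpa using fun h => (hv'prop a).2 h.symm
      · simpa using hv'nadj a a' (fun h => hne (congrArg Fin.succ h))

end ChordalAux

theorem chordal_rainbow {V : Type*} (G : SimpleGraph V) (hG : Chordal G)
    (m n : ℕ) (hmn : m ≤ n)
    (I : Fin m → Finset V) (hI : ∀ i, (I i).card = n ∧ IndepIn G (I i)) :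
    HasRainbowIndep G I m := by
  exact ChordalAux.rainbow_aux hG m I
    (fun i => ⟨le_of_le_of_eq hmn (hI i).1.symm, (hI i).2⟩)
end

section
/- Every finite nonempty chordal graph contains a simplicial vertex, i.e., a vertex whose set of neighbours induces a clique. -/
open SimpleGraph Finset

/-!
Dirac's argument, with the separator taken inside a neighbourhood. Let `x, y` be non-adjacent
vertices of a finite vertex set `s`, let `C` be the component of `y` in `s` minus the closed
neighbourhood of `x`, and let `s'` be `C` together with its neighbours in `s`. Every vertex of
`s' \ C` is adjacent to `x` and has a neighbour in `C`; two non-adjacent such vertices would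
close a shortest path through `C` into an induced cycle of length at least four with apex `x`,
so `s' \ C` is a clique. As `x ∉ s'`, induction shows that `s'` is a clique or contains two
non-adjacent simplicial vertices, so some vertex of `C` is simplicial in `s'`. Its neighbours in
`s` all lie in `s'`, so it is simplicial in `s`, and it is not adjacent to `x`.
-/

namespace SimpleGraph

variable {V : Type*} {G : SimpleGraph V}

lemma cycleGraph_adj_iff_of_lt {ℓ : ℕ} {i j : Fin ℓ} (hij : i.val < j.val) :
    (cycleGraph ℓ).Adj i j ↔ j.val = i.val + 1 ∨ (i.val = 0 ∧ j.val = ℓ - 1) := by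
  have hj : j.val < ℓ := j.isLt
  simp only [cycleGraph_adj', Fin.sub_def]
  rw [show ℓ - j.val + i.val = ℓ - (j.val - i.val) by omega,
    show ℓ - i.val + j.val = ℓ + (j.val - i.val) by omega,
    Nat.add_mod_left, Nat.mod_eq_of_lt (by omega), Nat.mod_eq_of_lt (by omega)]
  omega

-- Vertex sequences are indexed by `ℕ`, and only their first `n + 1` (resp. `ℓ`) terms matter;
-- this keeps the index arithmetic out of `Fin`.
def IsInducedPath (G : SimpleGraph V) (n : ℕ) (a : ℕ → V) : Prop :=
  ∀ i j, i < j → j ≤ n → a i ≠ a j ∧ (G.Adj (a i) (a j) ↔ j = i + 1)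

def IsInducedCycle (G : SimpleGraph V) (ℓ : ℕ) (c : ℕ → V) : Prop :=
  ∀ i j, i < j → j < ℓ → c i ≠ c j ∧ (G.Adj (c i) (c j) ↔ j = i + 1 ∨ (i = 0 ∧ j = ℓ - 1))

lemma Walk.dist_getVert_of_length_eq_dist {u v : V} {p : G.Walk u v}
    (hp : p.length = G.dist u v) {i j : ℕ} (hij : i ≤ j) (hj : j ≤ p.length) :
    G.dist (p.getVert i) (p.getVert j) = j - i := by
  have hsub : ((p.drop i).take (j - i)).IsSubwalk p :=
    (isSubwalk_take _ _).trans (isSubwalk_drop _ _)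
  have := length_eq_dist_of_subwalk hp hsub
  rw [take_length, drop_length, drop_getVert, Nat.add_sub_cancel' hij,
    min_eq_left (by omega)] at this
  exact this.symm

lemma Walk.isInducedPath_getVert_of_length_eq_dist {u v : V} {p : G.Walk u v}
    (hp : p.length = G.dist u v) : G.IsInducedPath p.length p.getVert := by
  intro i j hij hj
  have hd := p.dist_getVert_of_length_eq_dist hp hij.le hj
  refine ⟨fun h => ?_, by rw [← dist_eq_one_iff_adj, hd]; omega⟩
  rw [h, dist_self] at hd
  omega

lemma IsInducedPath.map {W : Type*} {H : SimpleGraph W} {n : ℕ} {a : ℕ → W}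
    (ha : H.IsInducedPath n a) (f : H ↪g G) : G.IsInducedPath n (f ∘ a) := by
  intro i j hij hj
  simpa [f.injective.ne_iff] using ha i j hij hj

lemma IsInducedPath.isInducedCycle_of_apex {n : ℕ} {a : ℕ → V} {z : V}
    (ha : G.IsInducedPath n a) (hz₀ : G.Adj z (a 0)) (hzn : G.Adj z (a n))
    (hinterior : ∀ i, 0 < i → i < n → a i ∉ insert z (G.neighborSet z)) :
    G.IsInducedCycle (n + 2) fun k => if k ≤ n then a k else z := by
  intro i j hij hj
  by_cases hjn : j ≤ n
  · simp only [hjn, hij.le.trans hjn, if_true, ha i j hij hjn, ne_eq, not_false_eq_true,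
      true_and]
    omega
  obtain rfl : j = n + 1 := by omega
  simp only [show i ≤ n by omega, if_true, show ¬ n + 1 ≤ n by omega, if_false]
  rcases Nat.eq_zero_or_pos i with rfl | hi
  · simpa using ⟨hz₀.ne.symm, hz₀.symm⟩
  rcases (show i < n ∨ i = n by omega) with hin | rfl
  · have := hinterior i hi hin
    simp only [Set.mem_insert_iff, mem_neighborSet, not_or] at this
    simp only [ne_eq, this.1, not_false_eq_true, G.adj_comm, this.2, true_and, false_iff]
    omega
  · simpa using ⟨hzn.ne.symm, hzn.symm⟩

def reachWithin (G : SimpleGraph V) (T : Set V) (y : V) : Set V :=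
  {v | ∃ p : G.Walk y v, ∀ a ∈ p.support, a ∈ T}

section reachWithin

variable {T : Set V} {y c v : V}

lemma reachWithin_subset : G.reachWithin T y ⊆ T :=
  fun _ ⟨p, hp⟩ => hp _ p.end_mem_support

lemma mem_reachWithin_self (hy : y ∈ T) : y ∈ G.reachWithin T y :=
  ⟨.nil, by simpa using hy⟩

lemma mem_reachWithin_of_adj (hc : c ∈ G.reachWithin T y) (hv : v ∈ T) (h : G.Adj c v) :
    v ∈ G.reachWithin T y := by
  obtain ⟨p, hp⟩ := hc
  refine ⟨p.concat h, fun a ha => ?_⟩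
  rw [Walk.support_concat, List.mem_append, List.mem_singleton] at ha
  exact ha.elim (hp a) (· ▸ hv)

lemma exists_walk_of_mem_reachWithin (hc : c ∈ G.reachWithin T y)
    (hv : v ∈ G.reachWithin T y) : ∃ p : G.Walk c v, ∀ a ∈ p.support, a ∈ T := by
  obtain ⟨p, hp⟩ := hc
  obtain ⟨q, hq⟩ := hv
  refine ⟨p.reverse.append q, fun a ha => ?_⟩
  rw [Walk.mem_support_append_iff, Walk.support_reverse, List.mem_reverse] at ha
  exact ha.elim (hp a) (hq a)

lemma mem_reachWithin_or_mem_of_adj {s N : Set V} (hc : c ∈ G.reachWithin (s \ N) y)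
    (hv : v ∈ s) (h : G.Adj c v) : v ∈ G.reachWithin (s \ N) y ∨ v ∈ N :=
  or_iff_not_imp_right.2 fun hvN => mem_reachWithin_of_adj hc ⟨hv, hvN⟩ h

end reachWithin

lemma exists_nonadj_pair_of_forall_exists_nonadj {s : Set V} {P : V → Prop}
    (h : ∀ x ∈ s, ∀ y ∈ s, x ≠ y → ¬ G.Adj x y →
      ∃ c ∈ s, c ∉ insert x (G.neighborSet x) ∧ P c)
    (hs : ¬ G.IsClique s) : ∃ c ∈ s, ∃ d ∈ s, c ≠ d ∧ ¬ G.Adj c d ∧ P c ∧ P d := by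
  obtain ⟨a, ha, b, hb, hab, hnab⟩ : ∃ a ∈ s, ∃ b ∈ s, a ≠ b ∧ ¬ G.Adj a b := by
    simpa [IsClique, Set.Pairwise] using hs
  obtain ⟨c, hc, hac, hPc⟩ := h a ha b hb hab hnab
  simp only [Set.mem_insert_iff, mem_neighborSet, not_or] at hac
  obtain ⟨d, hd, hcd, hPd⟩ := h c hc a ha hac.1 (fun h => hac.2 h.symm)
  simp only [Set.mem_insert_iff, mem_neighborSet, not_or] at hcd
  exact ⟨c, hc, d, hd, fun h => hcd.1 h.symm, hcd.2, hPc, hPd⟩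

end SimpleGraph

section Chordal

variable {V : Type*} {G : SimpleGraph V}

lemma Chordal.not_isInducedCycle (hG : Chordal G) {ℓ : ℕ} (hℓ : 4 ≤ ℓ) {c : ℕ → V} :
    ¬ G.IsInducedCycle ℓ c := by
  intro hc
  have adj_iff {i j : Fin ℓ} (hij : i.val < j.val) :
      G.Adj (c i) (c j) ↔ (cycleGraph ℓ).Adj i j := by
    rw [(hc i j hij j.isLt).2, cycleGraph_adj_iff_of_lt hij]
  refine hG ℓ hℓ ⟨⟨fun i => c i, fun i j hij => ?_⟩, fun i j => ?_⟩
  · by_contra hne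
    rcases Fin.lt_or_lt_of_ne hne with h | h
    · exact (hc i j h j.isLt).1 hij
    · exact (hc j i h i.isLt).1 hij.symm
  · rcases lt_trichotomy i j with h | rfl | h
    · exact adj_iff h
    · simp
    · rw [G.adj_comm, (cycleGraph ℓ).adj_comm]
      exact adj_iff h

theorem Chordal.adj_of_walk_avoiding_neighborSet {z u w : V} (hG : Chordal G)
    (hzu : G.Adj z u) (hzw : G.Adj z w) (huw : u ≠ w) (p : G.Walk u w)
    (hp : ∀ v ∈ p.support, v = u ∨ v = w ∨ v ∉ insert z (G.neighborSet z)) : G.Adj u w := by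
  by_contra hnadj
  set T : Set V := {v | v = u ∨ v = w ∨ v ∉ insert z (G.neighborSet z)}
  have hreach := (p.induce T hp).reachable
  obtain ⟨r, hr⟩ := hreach.exists_walk_length_eq_dist
  have hn : 1 < r.length := hr ▸ hreach.one_lt_dist_of_ne_of_not_adj (by simpa) hnadj
  have hpath := (r.isInducedPath_getVert_of_length_eq_dist hr).map (Embedding.induce T)
  have hinterior (i : ℕ) (hi : 0 < i) (hin : i < r.length) :
      (r.getVert i : V) ∉ insert z (G.neighborSet z) := by
    have hu := (hpath 0 i hi hin.le).1
    have hw := (hpath i _ hin le_rfl).1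
    simp only [Function.comp_apply, r.getVert_zero, r.getVert_length] at hu hw
    exact ((r.getVert i).2.resolve_left hu.symm).resolve_left hw
  exact hG.not_isInducedCycle (by omega)
    (hpath.isInducedCycle_of_apex (by simpa using hzu) (by simpa using hzw) hinterior)

theorem Chordal.adj_of_adj_mem_reachWithin (hG : Chordal G) {T : Set V} {x y u w c d : V}
    (hT : ∀ v ∈ T, v ∉ insert x (G.neighborSet x)) (hc : c ∈ G.reachWithin T y)
    (hd : d ∈ G.reachWithin T y) (hxu : G.Adj x u) (hxw : G.Adj x w) (huc : G.Adj u c)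
    (hdw : G.Adj d w) (huw : u ≠ w) : G.Adj u w := by
  obtain ⟨p, hp⟩ := exists_walk_of_mem_reachWithin hc hd
  refine hG.adj_of_walk_avoiding_neighborSet hxu hxw huw (.cons huc (p.concat hdw))
    fun a ha => ?_
  rw [Walk.support_cons, Walk.support_concat, List.mem_cons,
    List.mem_append, List.mem_singleton] at ha
  rcases ha with rfl | ha | rfl
  · exact .inl rfl
  · exact .inr (.inr (hT a (hp a ha)))
  · exact .inr (.inl rfl)

theorem Chordal.exists_isClique_neighborSet_inter (hG : Chordal G) {s : Set V}
    (hs : s.Finite) {x y : V} (hx : x ∈ s) (hy : y ∈ s) (hxy : x ≠ y) (hnadj : ¬ G.Adj x y) :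
    ∃ c ∈ s, c ∉ insert x (G.neighborSet x) ∧ G.IsClique (G.neighborSet c ∩ s) := by
  induction h : s.ncard using Nat.strong_induction_on generalizing s x y with
  | _ n ih =>
    set T := s \ insert x (G.neighborSet x)
    set C := G.reachWithin T y
    set s' := {v ∈ s | v ∈ C ∨ ∃ c ∈ C, G.Adj c v}
    have hCT : C ⊆ T := reachWithin_subset
    have hyC : y ∈ C := mem_reachWithin_self ⟨hy, by simp [hxy.symm, hnadj]⟩
    have hs's : s' ⊂ s := by
      refine Set.ssubset_iff_of_subset (fun v hv => hv.1) |>.2 ⟨x, hx, ?_⟩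
      rintro ⟨-, hxC | ⟨c, hc, hcx⟩⟩
      · exact (hCT hxC).2 (Set.mem_insert x _)
      · exact (hCT hc).2 (Set.mem_insert_of_mem _ hcx.symm)
    have hboundary {v : V} (hv : v ∈ s') (hvC : v ∉ C) : ∃ c ∈ C, G.Adj x v ∧ G.Adj v c := by
      obtain ⟨hvs, hvC' | ⟨c, hc, hcv⟩⟩ := hv
      · exact absurd hvC' hvC
      obtain rfl | hxv := (mem_reachWithin_or_mem_of_adj hc hvs hcv).resolve_left hvC
      · exact absurd (Set.mem_insert_of_mem _ hcv.symm) (hCT hc).2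
      · exact ⟨c, hc, hxv, hcv.symm⟩
    have hboundary_clique {u w : V} (hu : u ∈ s') (hw : w ∈ s') (huC : u ∉ C) (hwC : w ∉ C)
        (huw : u ≠ w) : G.Adj u w := by
      obtain ⟨c, hc, hxu, huc⟩ := hboundary hu huC
      obtain ⟨d, hd, hxw, hwd⟩ := hboundary hw hwC
      exact hG.adj_of_adj_mem_reachWithin (fun v hv => hv.2) hc hd hxu hxw huc hwd.symm huw
    have hsimplicial : ∃ c ∈ C, G.IsClique (G.neighborSet c ∩ s') := by
      by_cases hcomplete : G.IsClique s'
      · exact ⟨y, hyC, hcomplete.subset Set.inter_subset_right⟩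
      have hlt : s'.ncard < n := h ▸ Set.ncard_lt_ncard hs's hs
      obtain ⟨c, hc, d, hd, hcd, hncd, hcsimp, hdsimp⟩ := exists_nonadj_pair_of_forall_exists_nonadj
        (fun a ha b hb hab hnab => ih _ hlt (hs.subset hs's.subset) ha hb hab hnab rfl) hcomplete
      by_cases hcC : c ∈ C
      · exact ⟨c, hcC, hcsimp⟩
      by_cases hdC : d ∈ C
      · exact ⟨d, hdC, hdsimp⟩
      exact absurd (hboundary_clique hc hd hcC hdC hcd) hncd
    obtain ⟨c, hcC, hc⟩ := hsimplicial
    have hnbrs : G.neighborSet c ∩ s = G.neighborSet c ∩ s' := by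
      ext v
      exact ⟨fun ⟨hcv, hv⟩ => ⟨hcv, hv, .inr ⟨c, hcC, hcv⟩⟩, fun ⟨hcv, hv⟩ => ⟨hcv, hv.1⟩⟩
    exact ⟨c, (hCT hcC).1, (hCT hcC).2, hnbrs ▸ hc⟩

end Chordal

theorem chordal_simplicial {V : Type*} [Fintype V] [Nonempty V]
    (G : SimpleGraph V) (hG : Chordal G) :
    ∃ v : V, G.IsClique (G.neighborSet v) := by
  by_cases hcomplete : G.IsClique Set.univ
  · exact ⟨Classical.arbitrary V, hcomplete.subset (Set.subset_univ _)⟩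
  obtain ⟨x, -, y, -, hxy, hnadj⟩ : ∃ x ∈ Set.univ, ∃ y ∈ Set.univ, x ≠ y ∧ ¬ G.Adj x y := by
    simpa [IsClique, Set.Pairwise] using hcomplete
  obtain ⟨c, -, -, hc⟩ :=
    hG.exists_isClique_neighborSet_inter Set.finite_univ (Set.mem_univ x) (Set.mem_univ y) hxy hnadj
  exact ⟨c, by simpa using hc⟩
end

section
/- Let G be a k-colourable graph and let I_1, ..., I_{k(m-1)+1} be independent sets of size n in G, where m ≤ n. Then there exists a rainbow independent m-set: m distinct pairwise non-adjacent vertices, each belonging to a distinct I_j. -/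
open SimpleGraph Finset

theorem colourable_rainbow {V : Type*} (G : SimpleGraph V) (k m n : ℕ) (hmn : m ≤ n)
    (hcol : G.Colorable k)
    (I : Fin (k * (m - 1) + 1) → Finset V)
    (hI : ∀ i, (I i).card = n ∧ IndepIn G (I i)) :
    HasRainbowIndep G I m := by
  classical
  rcases Nat.eq_zero_or_pos m with hm0 | hm
  · subst hm0
    exact ⟨Fin.elim0, Fin.elim0, fun i => i.elim0, fun i => i.elim0,
      fun i => i.elim0, fun i => i.elim0⟩
  have hn1 : 1 ≤ n := le_trans hm hmn
  obtain ⟨v0, hv0⟩ : ∃ v, v ∈ I 0 := by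
    have h := (hI 0).1
    have : (I 0).Nonempty := Finset.card_pos.mp (by omega)
    exact this
  -- key: for every finset of indices, either the goal holds or there is a partial SDR on it
  have key : ∀ s : Finset (Fin (k * (m - 1) + 1)), HasRainbowIndep G I m ∨
      ∃ f : Fin (k * (m - 1) + 1) → V, Set.InjOn f s ∧ ∀ i ∈ s, f i ∈ I i := by
    intro s
    induction s using Finset.induction_on with
    | empty => exact Or.inr ⟨fun _ => v0, by simp [Set.InjOn], by simp⟩
    | @insert a s ha ih =>
      rcases ih with h | ⟨f, hinj, hmem⟩
      · exact Or.inl h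
      by_cases hne : (I a \ s.image f).Nonempty
      · obtain ⟨u, hu⟩ := hne
        rw [Finset.mem_sdiff] at hu
        refine Or.inr ⟨Function.update f a u, ?_, ?_⟩
        · intro x hx y hy hxy
          simp only [Finset.coe_insert, Set.mem_insert_iff, Finset.mem_coe] at hx hy
          rcases hx with rfl | hx <;> rcases hy with rfl | hy
          · rfl
          · exfalso
            rw [Function.update_self, Function.update_of_ne (by rintro rfl; exact ha hy)] at hxy
            exact hu.2 (Finset.mem_image.mpr ⟨y, hy, hxy.symm⟩)
          · exfalso
            rw [Function.update_self, Function.update_of_ne (by rintro rfl; exact ha hx)] at hxy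
            exact hu.2 (Finset.mem_image.mpr ⟨x, hx, hxy⟩)
          · rw [Function.update_of_ne (by rintro rfl; exact ha hx),
              Function.update_of_ne (by rintro rfl; exact ha hy)] at hxy
            exact hinj hx hy hxy
        · intro i hi
          rcases Finset.mem_insert.mp hi with rfl | hi'
          · rw [Function.update_self]; exact hu.1
          · rw [Function.update_of_ne (by rintro rfl; exact ha hi')]; exact hmem i hi'
      · -- I a ⊆ image: extract rainbow independent set from I a
        left
        have hsub : I a ⊆ s.image f := by
          intro u hu
          by_contra h
          exact hne ⟨u, Finset.mem_sdiff.mpr ⟨hu, h⟩⟩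
        obtain ⟨t, hts, htcard⟩ :=
          Finset.exists_subset_card_eq (le_of_le_of_eq hmn (hI a).1.symm)
        let e : Fin m → {x // x ∈ t} := (Finset.equivFinOfCardEq htcard).symm
        have hex : ∀ i : Fin m, ∃ jj, jj ∈ s ∧ f jj = (e i : V) := by
          intro i
          have h1 := hsub (hts (e i).2)
          rw [Finset.mem_image] at h1
          obtain ⟨jj, hj1, hj2⟩ := h1
          exact ⟨jj, hj1, hj2⟩
        choose j hjs hjf using hex
        have hvinj : Function.Injective (fun i : Fin m => (e i : V)) := by
          intro i i' h
          exact (Finset.equivFinOfCardEq htcard).symm.injective (Subtype.ext h)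
        refine ⟨j, fun i => (e i : V), ?_, hvinj, ?_, ?_⟩
        · intro i i' h
          apply hvinj
          simp only
          rw [← hjf i, ← hjf i', h]
        · intro i
          show (e i : V) ∈ I (j i)
          rw [← hjf i]
          exact hmem (j i) (hjs i)
        · intro i i' _ hadj
          exact (hI a).2 _ (hts (e i).2) _ (hts (e i').2) hadj
  rcases key Finset.univ with h | ⟨f, hinj, hmem⟩
  · exact h
  obtain ⟨c⟩ := hcol
  have hfi : Function.Injective f := fun x y h =>
    hinj (Finset.mem_coe.mpr (Finset.mem_univ x)) (Finset.mem_coe.mpr (Finset.mem_univ y)) h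
  have hcard : (Finset.univ : Finset (Fin k)).card * (m - 1) <
      (Finset.univ : Finset (Fin (k * (m - 1) + 1))).card := by
    simp only [Finset.card_univ, Fintype.card_fin]
    omega
  obtain ⟨α, -, hα⟩ := Finset.exists_lt_card_fiber_of_mul_lt_card_of_maps_to
    (fun i _ => Finset.mem_univ (c (f i))) hcard
  have hT : m ≤ (Finset.univ.filter fun i => c (f i) = α).card := by omega
  obtain ⟨t, hts, htcard⟩ := Finset.exists_subset_card_eq hT
  let e : Fin m → {x // x ∈ t} := (Finset.equivFinOfCardEq htcard).symm
  have hcol' : ∀ i : Fin m, c (f (e i : Fin (k * (m - 1) + 1))) = α := by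
    intro i
    have := hts (e i).2
    simpa using (Finset.mem_filter.mp this).2
  refine ⟨fun i => (e i : Fin (k * (m - 1) + 1)), fun i => f (e i : Fin (k * (m - 1) + 1)),
    ?_, ?_, ?_, ?_⟩
  · intro i i' h
    exact (Finset.equivFinOfCardEq htcard).symm.injective (Subtype.ext h)
  · intro i i' h
    exact (Finset.equivFinOfCardEq htcard).symm.injective (Subtype.ext (hfi h))
  · intro i
    exact hmem _ (Finset.mem_univ _)
  · intro i i' _ hadj
    exact c.valid hadj (by rw [hcol' i, hcol' i'])
end

section
/- For all m ≤ n and k ≥ 1, there exist a k-colourable graph G and a family of k(m-1) independent n-sets in G with no rainbow independent m-set. Consequently f_{X(k)}(n,m) = k(m-1)+1 for the class X(k) of k-colourable graphs. -/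
open SimpleGraph Finset

/-!
In the complete `k`-partite graph with parts of size `n`, any two vertices of different parts
are adjacent, so a rainbow independent set lies inside one part. If the family consists of each
part repeated `m - 1` times, only `m - 1` members are contained in a given part, so a rainbow
independent set has at most `m - 1` vertices.
-/

theorem HasRainbowIndep.of_comp {V ι κ : Type*} {G : SimpleGraph V} {I : ι → Finset V}
    {f : κ → ι} {m : ℕ} (h : HasRainbowIndep G (I ∘ f) m) (hf : Function.Injective f) :
    HasRainbowIndep G I m := by
  obtain ⟨j, v, hj, hv, hmem, hindep⟩ := h
  exact ⟨f ∘ j, v, hf.comp hj, hv, hmem, hindep⟩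

theorem not_hasRainbowIndep_of_adj {V α β : Type*} [Fintype β] {G : SimpleGraph V}
    {I : α × β → Finset V} {m : ℕ} (hβ : Fintype.card β < m)
    (hadj : ∀ p q : α × β, p.1 ≠ q.1 → ∀ u ∈ I p, ∀ v ∈ I q, G.Adj u v) :
    ¬ HasRainbowIndep G I m := by
  rintro ⟨j, v, hj, -, hmem, hindep⟩
  let i₀ : Fin m := ⟨0, by omega⟩
  have hsame : ∀ i, (j i).1 = (j i₀).1 := by
    intro i
    by_contra hne
    exact hindep i i₀ (fun h => hne (h ▸ rfl)) (hadj _ _ hne _ (hmem i) _ (hmem i₀))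
  have hsnd : Function.Injective fun i => (j i).2 :=
    fun i i' h => hj (Prod.ext ((hsame i).trans (hsame i').symm) h)
  have := Fintype.card_le_of_injective _ hsnd
  simp only [Fintype.card_fin] at this
  omega

namespace completeEquipartiteGraph

variable {k n : ℕ}

def part (a : Fin k) : Finset (Fin k × Fin n) := {a} ×ˢ univ

theorem fst_of_mem_part {a : Fin k} {v : Fin k × Fin n} (hv : v ∈ part a) : v.1 = a := by
  simp only [part, mem_product, mem_singleton] at hv
  exact hv.1

theorem card_part (a : Fin k) : (part a : Finset (Fin k × Fin n)).card = n := by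
  simp [part]

theorem indepIn_part (a : Fin k) : IndepIn (completeEquipartiteGraph k n) (part a) :=
  fun _ hu _ hv hadj => hadj ((fst_of_mem_part hu).trans (fst_of_mem_part hv).symm)

theorem adj_of_mem_part_of_ne {a b : Fin k} (hab : a ≠ b) {u v : Fin k × Fin n}
    (hu : u ∈ part a) (hv : v ∈ part b) : (completeEquipartiteGraph k n).Adj u v := by
  rw [completeEquipartiteGraph_adj, fst_of_mem_part hu, fst_of_mem_part hv]
  exact hab

end completeEquipartiteGraph

theorem colourable_rainbow_lower_general (k m n : ℕ) (hm : 1 ≤ m) :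
    ∃ (V : Type) (G : SimpleGraph V), G.Colorable k ∧
      ∃ I : Fin (k * (m - 1)) → Finset V,
        (∀ i, (I i).card = n ∧ IndepIn G (I i)) ∧
        ¬ HasRainbowIndep G I m := by
  let J : Fin k × Fin (m - 1) → Finset (Fin k × Fin n) :=
    fun p => completeEquipartiteGraph.part p.1
  refine ⟨_, completeEquipartiteGraph k n, completeEquipartiteGraph_colorable,
    J ∘ finProdFinEquiv.symm,
    fun _ => ⟨completeEquipartiteGraph.card_part _, completeEquipartiteGraph.indepIn_part _⟩,
    fun h => ?_⟩
  have hcard : Fintype.card (Fin (m - 1)) < m := by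
    rw [Fintype.card_fin]
    omega
  exact not_hasRainbowIndep_of_adj hcard
    (fun _ _ hpq _ hu _ hv => completeEquipartiteGraph.adj_of_mem_part_of_ne hpq hu hv)
    (h.of_comp finProdFinEquiv.symm.injective)

theorem colourable_rainbow_lower (k m n : ℕ) (hk : 1 ≤ k) (hm : 1 ≤ m) (hmn : m ≤ n) :
    ∃ (V : Type) (G : SimpleGraph V), G.Colorable k ∧
      ∃ I : Fin (k * (m - 1)) → Finset V,
        (∀ i, (I i).card = n ∧ IndepIn G (I i)) ∧
        ¬ HasRainbowIndep G I m :=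
  colourable_rainbow_lower_general k m n hm
end

section
/- Let G be a k-colourable graph and F_1, ..., F_{k(m-1)+1} independent sets in G with |F_i| ≥ min(i, n) for each i, where m ≤ n. Then there exists a rainbow independent m-set for the family (F_i). -/
open SimpleGraph Finset

/-- A strict mono map between `Fin` types grows at least as fast as the identity. -/
lemma RainbowAux.strictMono_val_le {a b : ℕ} {f : Fin a → Fin b} (hf : StrictMono f)
    (j : Fin a) : (j : ℕ) ≤ (f j : ℕ) := by
  have key : ∀ p : ℕ, ∀ j : Fin a, (j : ℕ) = p → p ≤ (f j : ℕ) := by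
    intro p
    induction p with
    | zero => intro j _; exact Nat.zero_le _
    | succ p ih =>
      intro j hj
      have hpa : p < a := by omega
      have h1 := ih ⟨p, hpa⟩ rfl
      have h2 : f ⟨p, hpa⟩ < f j := hf (by simp [Fin.lt_def, hj])
      have h3 := Fin.lt_def.1 h2
      omega
  exact key _ j rfl

/-- Defect version of Hall's theorem: either there are `r` distinct indices with
distinct representatives, or a family of indices witnessing a large defect. -/
lemma RainbowAux.matching_dichotomy {V : Type*} [DecidableEq V] {M r : ℕ} (hrM : r ≤ M)
    (A : Fin M → Finset V) :
    (∃ (j : Fin r → Fin M) (v : Fin r → V), Function.Injective j ∧ Function.Injective v ∧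
      ∀ i, v i ∈ A (j i)) ∨
    (∃ s : Finset (Fin M), (s.biUnion A).card + (M - r) < s.card) := by
  classical
  set Ω : Finset (V ⊕ ℕ) := (Finset.range (M - r)).map ⟨Sum.inr, Sum.inr_injective⟩ with hΩ
  set A' : Fin M → Finset (V ⊕ ℕ) :=
    fun i => ((A i).map ⟨Sum.inl, Sum.inl_injective⟩) ∪ Ω with hA'
  by_cases hall : ∀ s : Finset (Fin M), s.card ≤ (s.biUnion A').card
  · left
    obtain ⟨f, hfinj, hfmem⟩ := (Finset.all_card_le_biUnion_card_iff_exists_injective A').1 hall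
    have hT : (Finset.univ.filter (fun i => ¬ ∃ a, f i = Sum.inl a)).card ≤ M - r := by
      have hmap : ∀ i ∈ (Finset.univ.filter (fun i => ¬ ∃ a, f i = Sum.inl a)), f i ∈ Ω := by
        intro i hi
        have hi' := (Finset.mem_filter.1 hi).2
        have hmm := hfmem i
        rcases Finset.mem_union.1 hmm with h | h
        · obtain ⟨a, _, ha⟩ := Finset.mem_map.1 h
          exact absurd ⟨a, ha.symm⟩ hi'
        · exact h
      have hinj : Set.InjOn f
          ((Finset.univ.filter (fun i => ¬ ∃ a, f i = Sum.inl a)) : Set (Fin M)) :=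
        fun x _ y _ h => hfinj h
      calc (Finset.univ.filter (fun i => ¬ ∃ a, f i = Sum.inl a)).card
          ≤ Ω.card := Finset.card_le_card_of_injOn f hmap hinj
        _ = M - r := by simp [hΩ]
    have hScard : r ≤ (Finset.univ.filter (fun i => ∃ a, f i = Sum.inl a)).card := by
      have h2 : (Finset.univ.filter (fun i => ∃ a, f i = Sum.inl a)).card
          + (Finset.univ.filter (fun i => ¬ ∃ a, f i = Sum.inl a)).card
          = (Finset.univ : Finset (Fin M)).card :=
        Finset.card_filter_add_card_filter_not (fun i => ∃ a, f i = Sum.inl a)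
      have h3 : (Finset.univ : Finset (Fin M)).card = M := by simp
      omega
    obtain ⟨S', hS'sub, hS'card⟩ := Finset.exists_subset_card_eq hScard
    set e := S'.orderEmbOfFin hS'card with he
    have hprop : ∀ i : Fin r, ∃ a, f (e i) = Sum.inl a := by
      intro i
      have := hS'sub (S'.orderEmbOfFin_mem hS'card i)
      exact (Finset.mem_filter.1 this).2
    refine ⟨fun i => e i, fun i => Classical.choose (hprop i), ?_, ?_, ?_⟩
    · exact fun a b hab => e.injective hab
    · intro a b hab
      have hab' : Classical.choose (hprop a) = Classical.choose (hprop b) := hab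
      have ha := Classical.choose_spec (hprop a)
      have hb := Classical.choose_spec (hprop b)
      have hfe : f (e a) = f (e b) := by rw [ha, hb, hab']
      exact e.injective (hfinj hfe)
    · intro i
      have hspec := Classical.choose_spec (hprop i)
      have hmm := hfmem (e i)
      rw [hspec] at hmm
      rcases Finset.mem_union.1 hmm with h | h
      · obtain ⟨a, ha, haa⟩ := Finset.mem_map.1 h
        have : a = Classical.choose (hprop i) := Sum.inl_injective haa
        rwa [this] at ha
      · obtain ⟨b, _, hb⟩ := Finset.mem_map.1 h
        cases hb
  · right
    push_neg at hall
    obtain ⟨s, hs⟩ := hall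
    refine ⟨s, ?_⟩
    have hne : s.Nonempty := by
      rcases s.eq_empty_or_nonempty with h | h
      · subst h; simp at hs
      · exact h
    have hdec : s.biUnion A' = ((s.biUnion A).map ⟨Sum.inl, Sum.inl_injective⟩) ∪ Ω := by
      ext x
      constructor
      · intro hx
        obtain ⟨i, hi, hxi⟩ := Finset.mem_biUnion.1 hx
        rcases Finset.mem_union.1 hxi with h | h
        · obtain ⟨a, ha, haa⟩ := Finset.mem_map.1 h
          exact Finset.mem_union_left _
            (Finset.mem_map.2 ⟨a, Finset.mem_biUnion.2 ⟨i, hi, ha⟩, haa⟩)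
        · exact Finset.mem_union_right _ h
      · intro hx
        rcases Finset.mem_union.1 hx with h | h
        · obtain ⟨a, ha, haa⟩ := Finset.mem_map.1 h
          obtain ⟨i, hi, hai⟩ := Finset.mem_biUnion.1 ha
          exact Finset.mem_biUnion.2
            ⟨i, hi, Finset.mem_union_left _ (Finset.mem_map.2 ⟨a, hai, haa⟩)⟩
        · obtain ⟨i, hi⟩ := hne
          exact Finset.mem_biUnion.2 ⟨i, hi, Finset.mem_union_right _ h⟩
    rw [hdec] at hs
    have hdisj : Disjoint ((s.biUnion A).map ⟨Sum.inl, Sum.inl_injective⟩) Ω := by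
      rw [Finset.disjoint_left]
      intro x hx hx'
      obtain ⟨a, _, ha⟩ := Finset.mem_map.1 hx
      obtain ⟨b, _, hb⟩ := Finset.mem_map.1 hx'
      rw [← ha] at hb
      cases hb
    rw [Finset.card_union_of_disjoint hdisj, Finset.card_map] at hs
    have : Ω.card = M - r := by simp [hΩ]
    omega

/-- The key lemma: given any finite family of pairwise non-adjacent "classes" covering the
sets, with enough sets relative to the total truncated class sizes, a rainbow independent
`m`-set exists.  Induction on the total mass of the classes. -/
lemma RainbowAux.key {V : Type*} [DecidableEq V] (G : SimpleGraph V) (k m n : ℕ)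
    (hmn : m ≤ n) :
    ∀ mass : ℕ, ∀ C : Fin k → Finset V, (∑ t, (C t).card) ≤ mass →
    ∀ M : ℕ, ∀ F : Fin M → Finset V,
    (∀ i : Fin M, min (i.1 + 1) n ≤ (F i).card) →
    (∀ i, IndepIn G (F i)) →
    (∀ t, IndepIn G (C t)) →
    (∀ i, F i ⊆ Finset.univ.biUnion C) →
    (1 + ∑ t, min ((C t).card) (m - 1) ≤ M) →
    HasRainbowIndep G F m := by
  intro mass
  induction mass using Nat.strong_induction_on with
  | _ mass IH =>
    intro C hC M F hsize hindF hindC hcov hcount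
    rcases Nat.eq_zero_or_pos m with hm0 | hm1
    · subst hm0
      refine ⟨Fin.elim0, Fin.elim0, ?_, ?_, ?_, ?_⟩
      · intro a; exact a.elim0
      · intro a; exact a.elim0
      · intro a; exact a.elim0
      · intro a; exact a.elim0
    -- now m ≥ 1
    have hM1 : 1 ≤ M := by omega
    -- Choose the target independent set T, and record case data.
    by_cases hpeel : ∃ t₀, m ≤ (C t₀).card
    · -- "peel a big class" case
      obtain ⟨t₀, ht₀⟩ := hpeel
      have hmint₀ : min ((C t₀).card) (m - 1) = m - 1 := min_eq_right (by omega)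
      have hsplit : ∑ t ∈ Finset.univ.erase t₀, min ((C t).card) (m - 1)
          + min ((C t₀).card) (m - 1) = ∑ t, min ((C t).card) (m - 1) :=
        Finset.sum_erase_add Finset.univ _ (Finset.mem_univ t₀)
      have hmM : m ≤ M := by
        have h0 : 0 ≤ ∑ t ∈ Finset.univ.erase t₀, min ((C t).card) (m - 1) := Nat.zero_le _
        omega
      set T := C t₀ with hT
      have hTind : IndepIn G T := hindC t₀
      have hTsub : T ⊆ Finset.univ.biUnion C :=
        Finset.subset_biUnion_of_mem (fun t => C t) (Finset.mem_univ t₀)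
      rcases RainbowAux.matching_dichotomy hmM (fun i => F i ∩ T) with
        ⟨j, v, hj, hv, hmem⟩ | ⟨s, hs⟩
      · exact ⟨j, v, hj, hv, fun i => (Finset.mem_inter.1 (hmem i)).1,
          fun i i' _ => hTind _ (Finset.mem_inter.1 (hmem i)).2 _
            (Finset.mem_inter.1 (hmem i')).2⟩
      · -- recurse
        set W := s.biUnion (fun i => F i ∩ T) with hW
        have hsM : s.card ≤ M := by
          have := Finset.card_le_univ s
          simpa using this
        have hu : W.card + 1 ≤ m := by omega
        have hssize : M - m + 1 + W.card ≤ s.card := by omega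
        set C' := fun t => C t \ (T \ W) with hC'
        have hsub : ∀ t, C' t ⊆ C t := fun t => Finset.sdiff_subset
        have hTWne : (T \ W).Nonempty := by
          have h1 : T.card - W.card ≤ (T \ W).card := Finset.le_card_sdiff _ _
          have h2 : 1 ≤ (T \ W).card := by omega
          exact Finset.card_pos.1 (by omega)
        obtain ⟨x, hx⟩ := hTWne
        obtain ⟨tx, _, hxtx⟩ := Finset.mem_biUnion.1 (hTsub (Finset.mem_sdiff.1 hx).1)
        have hmassdec : ∑ t, (C' t).card < ∑ t, (C t).card := by
          apply Finset.sum_lt_sum (fun t _ => Finset.card_le_card (hsub t))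
          refine ⟨tx, Finset.mem_univ tx, ?_⟩
          apply Finset.card_lt_card
          refine ⟨hsub tx, fun hcon => ?_⟩
          have := hcon hxtx
          exact (Finset.mem_sdiff.1 this).2 hx
        -- the new family
        set e := s.orderEmbOfFin (rfl : s.card = s.card) with he
        have hemem : ∀ jj : Fin s.card, (e jj) ∈ s :=
          fun jj => s.orderEmbOfFin_mem rfl jj
        have hcov' : ∀ jj : Fin s.card, F (e jj) ⊆ Finset.univ.biUnion C' := by
          intro jj x' hx'
          obtain ⟨t, _, hxt⟩ := Finset.mem_biUnion.1 (hcov (e jj) hx')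
          refine Finset.mem_biUnion.2 ⟨t, Finset.mem_univ t, Finset.mem_sdiff.2 ⟨hxt, ?_⟩⟩
          intro hcon
          obtain ⟨hxT, hxW⟩ := Finset.mem_sdiff.1 hcon
          exact hxW (Finset.mem_biUnion.2 ⟨e jj, hemem jj, Finset.mem_inter.2 ⟨hx', hxT⟩⟩)
        have hcount' : 1 + ∑ t, min ((C' t).card) (m - 1) ≤ s.card := by
          have hsplit' : ∑ t ∈ Finset.univ.erase t₀, min ((C' t).card) (m - 1)
              + min ((C' t₀).card) (m - 1) = ∑ t, min ((C' t).card) (m - 1) :=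
            Finset.sum_erase_add Finset.univ _ (Finset.mem_univ t₀)
          have hle : ∑ t ∈ Finset.univ.erase t₀, min ((C' t).card) (m - 1)
              ≤ ∑ t ∈ Finset.univ.erase t₀, min ((C t).card) (m - 1) :=
            Finset.sum_le_sum (fun t _ =>
              min_le_min (Finset.card_le_card (hsub t)) le_rfl)
          have ht₀' : (C' t₀).card ≤ W.card := by
            apply Finset.card_le_card
            intro y hy
            obtain ⟨hy1, hy2⟩ := Finset.mem_sdiff.1 hy
            by_contra hyW
            exact hy2 (Finset.mem_sdiff.2 ⟨hy1, hyW⟩)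
          have ht₀'' : min ((C' t₀).card) (m - 1) ≤ W.card := le_trans (min_le_left _ _) ht₀'
          omega
        have hrec := IH (∑ t, (C' t).card) (lt_of_lt_of_le hmassdec hC) C' le_rfl s.card
          (fun jj => F (e jj))
          (fun jj => by
            show min ((jj : ℕ) + 1) n ≤ (F (e jj)).card
            have h1 := hsize (e jj)
            have h2 : (jj : ℕ) ≤ ((e jj : Fin M) : ℕ) :=
              RainbowAux.strictMono_val_le (e.strictMono) jj
            have h3 : min ((jj : ℕ) + 1) n ≤ min (((e jj : Fin M) : ℕ) + 1) n := by omega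
            omega)
          (fun jj => hindF (e jj))
          (fun t => fun u hu' v hv' => hindC t u (hsub t hu') v (hsub t hv'))
          hcov' hcount'
        obtain ⟨j', v', hj', hv', hmem', hadj'⟩ := hrec
        exact ⟨fun i => e (j' i), v', fun a b hab => hj' (e.injective hab), hv',
          hmem', hadj'⟩
    · -- "core" case : all classes small, use the last set as target
      push_neg at hpeel
      have hsmall : ∀ t, (C t).card ≤ m - 1 := by
        intro t; have := hpeel t; omega
      have hsummin : ∑ t, min ((C t).card) (m - 1) = ∑ t, (C t).card :=
        Finset.sum_congr rfl (fun t _ => min_eq_left (hsmall t))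
      have hsumle : 1 + ∑ t, (C t).card ≤ M := by
        rw [← hsummin]; exact hcount
      set last : Fin M := ⟨M - 1, by omega⟩ with hlast
      set T := F last with hT
      have hTind : IndepIn G T := hindF last
      have hTsub : T ⊆ Finset.univ.biUnion C := hcov last
      have hUcard : (Finset.univ.biUnion C).card ≤ ∑ t, (C t).card := by
        apply Finset.card_biUnion_le
      have hTle : T.card ≤ M - 1 := by
        have := Finset.card_le_card hTsub
        omega
      have hTsize : min ((M - 1) + 1) n ≤ T.card := hsize last
      have hnM : n + 1 ≤ M := by
        rcases le_or_gt n (M - 1) with h | h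
        · omega
        · rw [min_eq_left (by omega)] at hTsize
          omega
      have hTcard : n ≤ T.card := by
        rw [min_eq_right (by omega)] at hTsize
        exact hTsize
      have hmM : m ≤ M := by omega
      rcases RainbowAux.matching_dichotomy hmM (fun i => F i ∩ T) with
        ⟨j, v, hj, hv, hmem⟩ | ⟨s, hs⟩
      · exact ⟨j, v, hj, hv, fun i => (Finset.mem_inter.1 (hmem i)).1,
          fun i i' _ => hTind _ (Finset.mem_inter.1 (hmem i)).2 _
            (Finset.mem_inter.1 (hmem i')).2⟩
      · set W := s.biUnion (fun i => F i ∩ T) with hW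
        have hsM : s.card ≤ M := by
          have := Finset.card_le_univ s
          simpa using this
        have hu : W.card + 1 ≤ m := by omega
        have hssize : M - m + 1 + W.card ≤ s.card := by omega
        set C' := fun t => C t \ (T \ W) with hC'
        have hsub : ∀ t, C' t ⊆ C t := fun t => Finset.sdiff_subset
        have hTWcard : T.card - W.card ≤ (T \ W).card := Finset.le_card_sdiff _ _
        have hTWne : (T \ W).Nonempty := Finset.card_pos.1 (by omega)
        obtain ⟨x, hx⟩ := hTWne
        obtain ⟨tx, _, hxtx⟩ := Finset.mem_biUnion.1 (hTsub (Finset.mem_sdiff.1 hx).1)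
        have hmassdec : ∑ t, (C' t).card < ∑ t, (C t).card := by
          apply Finset.sum_lt_sum (fun t _ => Finset.card_le_card (hsub t))
          refine ⟨tx, Finset.mem_univ tx, ?_⟩
          apply Finset.card_lt_card
          refine ⟨hsub tx, fun hcon => ?_⟩
          have := hcon hxtx
          exact (Finset.mem_sdiff.1 this).2 hx
        set e := s.orderEmbOfFin (rfl : s.card = s.card) with he
        have hemem : ∀ jj : Fin s.card, (e jj) ∈ s :=
          fun jj => s.orderEmbOfFin_mem rfl jj
        have hcov' : ∀ jj : Fin s.card, F (e jj) ⊆ Finset.univ.biUnion C' := by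
          intro jj x' hx'
          obtain ⟨t, _, hxt⟩ := Finset.mem_biUnion.1 (hcov (e jj) hx')
          refine Finset.mem_biUnion.2 ⟨t, Finset.mem_univ t, Finset.mem_sdiff.2 ⟨hxt, ?_⟩⟩
          intro hcon
          obtain ⟨hxT, hxW⟩ := Finset.mem_sdiff.1 hcon
          exact hxW (Finset.mem_biUnion.2 ⟨e jj, hemem jj, Finset.mem_inter.2 ⟨hx', hxT⟩⟩)
        have hcount' : 1 + ∑ t, min ((C' t).card) (m - 1) ≤ s.card := by
          -- ∑ card C' t + card (T \ W) ≤ ∑ card C t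
          have hkey : (T \ W).card + ∑ t, (C' t).card ≤ ∑ t, (C t).card := by
            have hsub2 : T \ W ⊆ Finset.univ.biUnion (fun t => C t ∩ (T \ W)) := by
              intro y hy
              obtain ⟨t, _, hyt⟩ := Finset.mem_biUnion.1 (hTsub (Finset.mem_sdiff.1 hy).1)
              exact Finset.mem_biUnion.2 ⟨t, Finset.mem_univ t,
                Finset.mem_inter.2 ⟨hyt, hy⟩⟩
            have h1 : (T \ W).card ≤ ∑ t, (C t ∩ (T \ W)).card :=
              le_trans (Finset.card_le_card hsub2) (Finset.card_biUnion_le)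
            have h2 : ∀ t, (C' t).card + (C t ∩ (T \ W)).card = (C t).card := by
              intro t
              rw [hC']
              exact Finset.card_sdiff_add_card_inter _ _
            have h3 : ∑ t, ((C' t).card + (C t ∩ (T \ W)).card) = ∑ t, (C t).card :=
              Finset.sum_congr rfl (fun t _ => h2 t)
            rw [Finset.sum_add_distrib] at h3
            omega
          have hminle : ∑ t, min ((C' t).card) (m - 1) ≤ ∑ t, (C' t).card :=
            Finset.sum_le_sum (fun t _ => min_le_left _ _)
          omega
        have hrec := IH (∑ t, (C' t).card) (lt_of_lt_of_le hmassdec hC) C' le_rfl s.card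
          (fun jj => F (e jj))
          (fun jj => by
            show min ((jj : ℕ) + 1) n ≤ (F (e jj)).card
            have h1 := hsize (e jj)
            have h2 : (jj : ℕ) ≤ ((e jj : Fin M) : ℕ) :=
              RainbowAux.strictMono_val_le (e.strictMono) jj
            have h3 : min ((jj : ℕ) + 1) n ≤ min (((e jj : Fin M) : ℕ) + 1) n := by omega
            omega)
          (fun jj => hindF (e jj))
          (fun t => fun u hu' v hv' => hindC t u (hsub t hu') v (hsub t hv'))
          hcov' hcount'
        obtain ⟨j', v', hj', hv', hmem', hadj'⟩ := hrec
        exact ⟨fun i => e (j' i), v', fun a b hab => hj' (e.injective hab), hv',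
          hmem', hadj'⟩

theorem colourable_rainbow_strengthened {V : Type*} (G : SimpleGraph V)
    (k m n : ℕ) (hmn : m ≤ n) (hcol : G.Colorable k)
    (F : Fin (k * (m - 1) + 1) → Finset V)
    (hF : ∀ i, min (i.1 + 1) n ≤ (F i).card ∧ IndepIn G (F i)) :
    HasRainbowIndep G F m := by
  classical
  obtain ⟨c⟩ := hcol
  set U : Finset V := Finset.univ.biUnion F with hU
  set C : Fin k → Finset V := fun t => U.filter (fun x => c x = t) with hCdef
  apply RainbowAux.key G k m n hmn (∑ t, (C t).card) C le_rfl (k * (m - 1) + 1) F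
  · exact fun i => (hF i).1
  · exact fun i => (hF i).2
  · intro t u hu v hv hadj
    have hcu : c u = t := (Finset.mem_filter.1 hu).2
    have hcv : c v = t := (Finset.mem_filter.1 hv).2
    exact c.valid hadj (by rw [hcu, hcv])
  · intro i x hx
    refine Finset.mem_biUnion.2 ⟨c x, Finset.mem_univ _, Finset.mem_filter.2 ⟨?_, rfl⟩⟩
    exact Finset.mem_biUnion.2 ⟨i, Finset.mem_univ _, hx⟩
  · have h1 : ∑ t, min ((C t).card) (m - 1) ≤ ∑ _t : Fin k, (m - 1) :=
      Finset.sum_le_sum (fun t _ => min_le_right _ _)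
    have h2 : ∑ _t : Fin k, (m - 1) = k * (m - 1) := by
      simp [Finset.sum_const, Finset.card_univ, mul_comm]
    omega
end

section
/- For all r ≥ 2 and m ≤ n: the minimal number k such that every k independent n-sets in any K_r-free graph admit a rainbow independent m-set equals the Ramsey number R(r,m). In particular, any R(r,m) independent n-sets in a K_r-free graph have a rainbow independent m-set, and there exist a K_r-free graph and R(r,m)-1 independent n-sets with no rainbow independent m-set. -/
/-!
If the sets have a system of distinct representatives, the representatives span a `K_r`-free
graph on `R(r,m)` vertices, which has an independent `m`-set. Otherwise a maximal partial system
of representatives uses up every vertex of some set `I i`; since `I i` is independent and has at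
least `m` vertices, any `m` of them, represented by distinct sets, form a rainbow independent set.

For sharpness, blow up every vertex of a `K_r`-free graph on `R(r,m) - 1` vertices without an
independent `m`-set into an independent `n`-set: a rainbow independent set of the blow-up projects
onto an independent set of the same size in the original graph.
-/

open SimpleGraph Finset

/-- `N` vertices suffice to find a clique of size `r` or an independent set of size `m`. -/
def RamseyProp (N r m : ℕ) : Prop :=
  ∀ G : SimpleGraph (Fin N),
    (∃ S : Finset (Fin N), G.IsNClique r S) ∨
    (∃ S : Finset (Fin N), S.card = m ∧ ∀ u ∈ S, ∀ v ∈ S, ¬ G.Adj u v)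

/-- The Ramsey number `R(r,m)`. -/
noncomputable def ramseyNum (r m : ℕ) : ℕ := sInf {N | RamseyProp N r m}

theorem IndepIn.mono {V : Type*} {G : SimpleGraph V} {S T : Finset V} (hS : IndepIn G S)
    (hTS : T ⊆ S) : IndepIn G T :=
  fun u hu v hv => hS u (hTS hu) v (hTS hv)

theorem IndepIn.insert {V : Type*} [DecidableEq V] {G : SimpleGraph V} {S : Finset V} {a : V}
    (hS : IndepIn G S) (ha : ∀ w ∈ S, ¬ G.Adj a w) : IndepIn G (insert a S) := by
  intro u hu v hv
  rw [mem_insert] at hu hv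
  rcases hu with rfl | hu <;> rcases hv with rfl | hv
  · exact G.loopless.irrefl _
  · exact ha _ hv
  · exact fun h => ha _ hu h.symm
  · exact hS _ hu _ hv

theorem IndepIn.image_of_comap {V W : Type*} [DecidableEq W] {G : SimpleGraph W} {f : V → W}
    {S : Finset V} (hS : IndepIn (G.comap f) S) : IndepIn G (S.image f) := by
  simp only [IndepIn, mem_image, forall_exists_index, and_imp, forall_apply_eq_imp_iff₂]
  exact hS

theorem SimpleGraph.CliqueFree.of_hom {V W : Type*} {G : SimpleGraph V} {H : SimpleGraph W}
    {n : ℕ} (f : G →g H) (hH : H.CliqueFree n) : G.CliqueFree n := by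
  by_contra hG
  obtain ⟨c⟩ := (not_cliqueFree_iff_top_isContained n).1 hG
  exact (not_cliqueFree_iff_top_isContained n).2
    ⟨(f.comp c.toHom).toCopy (Hom.injective_of_top_hom _)⟩ hH

namespace RamseyProp

theorem exists_subset {N r m : ℕ} (h : RamseyProp N r m) {V : Type*} (G : SimpleGraph V)
    {A : Finset V} (hA : N ≤ #A) :
    (∃ S ⊆ A, G.IsNClique r S) ∨ (∃ S ⊆ A, #S = m ∧ IndepIn G S) := by
  classical
  let e : Fin N ↪ V :=
    (Fin.castLEEmb hA).trans (A.equivFin.symm.toEmbedding.trans (Function.Embedding.subtype _))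
  have he : ∀ S : Finset (Fin N), S.map e ⊆ A := by
    intro S x hx
    obtain ⟨a, -, rfl⟩ := mem_map.1 hx
    simp [e]
  rcases h (G.comap e) with ⟨S, hS⟩ | ⟨S, hScard, hSind⟩
  · exact Or.inl ⟨S.map e, he S, hS.map.mono (map_comap_le e G)⟩
  · refine Or.inr ⟨S.map e, he S, by simp [hScard], ?_⟩
    rw [map_eq_image]
    exact IndepIn.image_of_comap hSind

theorem zero_left (N m : ℕ) : RamseyProp N 0 m :=
  fun _ => Or.inl ⟨∅, by simp⟩

theorem zero_right (N r : ℕ) : RamseyProp N r 0 :=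
  fun _ => Or.inr ⟨∅, by simp⟩

/-- The Erdős–Szekeres recursion `R(r+1, m+1) ≤ R(r, m+1) + R(r+1, m)`, up to one vertex. -/
theorem succ_succ {N₁ N₂ r m : ℕ} (h₁ : RamseyProp N₁ r (m + 1))
    (h₂ : RamseyProp N₂ (r + 1) m) : RamseyProp (N₁ + N₂ + 1) (r + 1) (m + 1) := by
  classical
  intro G
  let v : Fin (N₁ + N₂ + 1) := 0
  by_cases hA : N₁ ≤ #(G.neighborFinset v)
  · rcases h₁.exists_subset G hA with ⟨S, hSA, hS⟩ | ⟨S, -, hS⟩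
    · exact Or.inl ⟨insert v S, hS.insert fun w hw => (G.mem_neighborFinset v w).1 (hSA hw)⟩
    · exact Or.inr ⟨S, hS⟩
  · let B := (insert v (G.neighborFinset v))ᶜ
    have hB : N₂ ≤ #B := by
      rw [card_compl, card_insert_of_notMem (by simp), Fintype.card_fin]
      omega
    rcases h₂.exists_subset G hB with ⟨S, -, hS⟩ | ⟨S, hSB, hScard, hSind⟩
    · exact Or.inl ⟨S, hS⟩
    · have hvS : ∀ w ∈ S, w ≠ v ∧ ¬ G.Adj v w := fun w hw => by simpa [B] using hSB hw
      refine Or.inr ⟨insert v S, ?_, hSind.insert fun w hw => (hvS w hw).2⟩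
      rw [card_insert_of_notMem fun hv => (hvS v hv).1 rfl, hScard]

end RamseyProp

theorem exists_ramseyProp (r m : ℕ) : ∃ N, RamseyProp N r m := by
  induction r generalizing m with
  | zero => exact ⟨0, .zero_left 0 m⟩
  | succ r ihr =>
    induction m with
    | zero => exact ⟨0, .zero_right 0 (r + 1)⟩
    | succ m ihm =>
      obtain ⟨N₁, h₁⟩ := ihr (m + 1)
      obtain ⟨N₂, h₂⟩ := ihm
      exact ⟨N₁ + N₂ + 1, h₁.succ_succ h₂⟩

theorem ramseyProp_ramseyNum (r m : ℕ) : RamseyProp (ramseyNum r m) r m :=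
  Nat.sInf_mem (exists_ramseyProp r m)

theorem not_ramseyProp_zero {r m : ℕ} (hr : r ≠ 0) (hm : m ≠ 0) : ¬ RamseyProp 0 r m := by
  intro h
  rcases h ⊥ with ⟨S, hS⟩ | ⟨S, hS, -⟩
  · exact hr (hS.card_eq.symm.trans (Finset.card_eq_zero.2 (Subsingleton.elim _ _)))
  · exact hm (hS.symm.trans (Finset.card_eq_zero.2 (Subsingleton.elim _ _)))

theorem ramseyNum_pos {r m : ℕ} (hr : r ≠ 0) (hm : m ≠ 0) : 0 < ramseyNum r m :=
  Nat.pos_of_ne_zero fun h => not_ramseyProp_zero hr hm (h ▸ ramseyProp_ramseyNum r m)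

theorem not_ramseyProp_ramseyNum_sub_one {r m : ℕ} (hr : r ≠ 0) (hm : m ≠ 0) :
    ¬ RamseyProp (ramseyNum r m - 1) r m :=
  Nat.notMem_of_lt_sInf (Nat.sub_lt (ramseyNum_pos hr hm) one_pos)

theorem exists_maximal_partial_transversal {ι V : Type*} [Fintype ι] [DecidableEq V] [Nonempty V]
    (I : ι → Finset V) : ∃ (T : Finset ι) (f : ι → V),
      Set.InjOn f T ∧ (∀ i ∈ T, f i ∈ I i) ∧ ∀ i ∉ T, I i ⊆ T.image f := by
  classical
  let P : Finset ι → Prop := fun T => ∃ f : ι → V, Set.InjOn f T ∧ ∀ i ∈ T, f i ∈ I i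
  obtain ⟨T, hT, hmax⟩ := (univ.filter P).exists_max_image card
    ⟨∅, mem_filter.2 ⟨mem_univ _, fun _ => Classical.arbitrary V, by simp⟩⟩
  obtain ⟨f, hf, hfI⟩ := (mem_filter.1 hT).2
  refine ⟨T, f, hf, hfI, fun i hi x hx => ?_⟩
  by_contra hxT
  have hupd : Set.EqOn (Function.update f i x) f T :=
    fun k hk => Function.update_of_ne (ne_of_mem_of_not_mem hk hi) _ _
  have hext : P (insert i T) := by
    refine ⟨Function.update f i x, ?_, fun k hk => ?_⟩
    · rw [coe_insert, Set.injOn_insert (mem_coe.not.2 hi), hupd.image_eq, Function.update_self]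
      exact ⟨hf.congr hupd.symm, by simpa using hxT⟩
    · rcases mem_insert.1 hk with rfl | hk
      · simpa using hx
      · rw [hupd hk]
        exact hfI k hk
  have := hmax _ (mem_filter.2 ⟨mem_univ _, hext⟩)
  rw [card_insert_of_notMem hi] at this
  omega

theorem hasRainbowIndep_of_subset_image {ι V : Type*} [DecidableEq V] {G : SimpleGraph V}
    {I : ι → Finset V} {T : Finset ι} {f : ι → V} {S : Finset V} {m : ℕ} (hf : Set.InjOn f T)
    (hfI : ∀ i ∈ T, f i ∈ I i) (hST : S ⊆ T.image f) (hS : #S = m) (hSind : IndepIn G S) :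
    HasRainbowIndep G I m := by
  let U := T.filter (f · ∈ S)
  have hUS : U.image f = S := by
    ext x
    simp only [U, mem_image, mem_filter]
    refine ⟨fun ⟨i, ⟨_, hi⟩, hix⟩ => hix ▸ hi, fun hx => ?_⟩
    obtain ⟨i, hi, rfl⟩ := mem_image.1 (hST hx)
    exact ⟨i, ⟨hi, hx⟩, rfl⟩
  have hU : #U = m := by
    rw [← hS, ← hUS, card_image_of_injOn (hf.mono (filter_subset _ T))]
  let j : Fin m → ι := fun k => ((U.equivFinOfCardEq hU).symm k : ι)
  have hjU : ∀ k, j k ∈ U := fun k => ((U.equivFinOfCardEq hU).symm k).2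
  have hj : Function.Injective j := Subtype.val_injective.comp (Equiv.injective _)
  refine ⟨j, f ∘ j, hj, fun a b hab => hj (hf ?_ ?_ hab), fun k => hfI _ ?_,
    fun k k' _ => hSind _ (mem_filter.1 (hjU k)).2 _ (mem_filter.1 (hjU k')).2⟩ <;>
    exact (mem_filter.1 (hjU _)).1

theorem hasRainbowIndep_of_cliqueFree {V : Type*} [Nonempty V] {G : SimpleGraph V} {N r m : ℕ}
    (hG : G.CliqueFree r) (hN : RamseyProp N r m) (I : Fin N → Finset V)
    (hI : ∀ i, m ≤ #(I i) ∧ IndepIn G (I i)) : HasRainbowIndep G I m := by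
  classical
  obtain ⟨T, f, hf, hfI, hsat⟩ := exists_maximal_partial_transversal I
  by_cases hT : T = univ
  · subst hT
    rcases hN (G.comap f) with ⟨S, hS⟩ | ⟨S, hScard, hSind⟩
    · exact absurd hS (hG.of_hom (Hom.comap f G) S)
    · refine hasRainbowIndep_of_subset_image hf hfI (image_subset_image (subset_univ S)) ?_
        (IndepIn.image_of_comap hSind)
      rw [card_image_of_injOn (hf.mono (by simp)), hScard]
  · obtain ⟨i, -, hi⟩ := exists_of_ssubset (ssubset_univ_iff.2 hT)
    obtain ⟨S, hSI, hS⟩ := exists_subset_card_eq (hI i).1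
    exact hasRainbowIndep_of_subset_image hf hfI (hSI.trans (hsat i hi)) hS ((hI i).2.mono hSI)

theorem exists_not_hasRainbowIndep {N r m : ℕ} (h : ¬ RamseyProp N r m) (n : ℕ) :
    ∃ (V : Type) (G : SimpleGraph V), G.CliqueFree r ∧ ∃ I : Fin N → Finset V,
      (∀ i, #(I i) = n ∧ IndepIn G (I i)) ∧ ¬ HasRainbowIndep G I m := by
  obtain ⟨H, hH⟩ := not_forall.1 h
  obtain ⟨hcl, hind⟩ := not_or.1 hH
  refine ⟨Fin N × Fin n, H.comap Prod.fst, CliqueFree.of_hom (Hom.comap _ _)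
    fun S hS => hcl ⟨S, hS⟩, fun i => {i} ×ˢ univ, fun i => ⟨by simp, ?_⟩, ?_⟩
  · rintro u hu v hv huv
    simp only [mem_product, mem_singleton] at hu hv
    simp only [comap_adj, hu.1, hv.1] at huv
    exact H.loopless.irrefl i huv
  · rintro ⟨j, v, hj, -, hv, hadj⟩
    have hfst : ∀ k, (v k).1 = j k := fun k => mem_singleton.1 (mem_product.1 (hv k)).1
    refine hind ⟨univ.image j, by simp [card_image_of_injective _ hj], ?_⟩
    simp only [mem_image, mem_univ, true_and, forall_exists_index, forall_apply_eq_imp_iff]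
    intro k k' hkk'
    rcases eq_or_ne k k' with rfl | hne
    · exact H.loopless.irrefl _ hkk'
    · exact hadj k k' hne (by simpa [hfst] using hkk')

theorem cliqueFree_rainbow_eq_ramsey (r m n : ℕ) (hr : 2 ≤ r) (hm : 1 ≤ m) (hmn : m ≤ n) :
    (∀ (V : Type) (G : SimpleGraph V), G.CliqueFree r →
      ∀ I : Fin (ramseyNum r m) → Finset V,
        (∀ i, (I i).card = n ∧ IndepIn G (I i)) → HasRainbowIndep G I m) ∧
    (∃ (V : Type) (G : SimpleGraph V), G.CliqueFree r ∧
      ∃ I : Fin (ramseyNum r m - 1) → Finset V,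
        (∀ i, (I i).card = n ∧ IndepIn G (I i)) ∧ ¬ HasRainbowIndep G I m) := by
  have hr0 : r ≠ 0 := by omega
  have hm0 : m ≠ 0 := by omega
  refine ⟨fun V G hG I hI => ?_,
    exists_not_hasRainbowIndep (not_ramseyProp_ramseyNum_sub_one hr0 hm0) n⟩
  let i₀ : Fin (ramseyNum r m) := ⟨0, ramseyNum_pos hr0 hm0⟩
  obtain ⟨v, -⟩ := card_pos.1 ((hI i₀).1 ▸ (by omega) : 0 < #(I i₀))
  have : Nonempty V := ⟨v⟩
  exact hasRainbowIndep_of_cliqueFree hG (ramseyProp_ramseyNum r m) I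
    fun i => ⟨(hI i).1 ▸ hmn, (hI i).2⟩
end

section
/- Lower bound via blowups: let H be a K_r-free graph on N vertices with independence number less than m. Let G be the n-blowup of H (replace each vertex by an independent n-set, each edge by a complete bipartite graph between the corresponding sets). Then G is K_r-free, the N blown-up vertex classes are pairwise disjoint independent n-sets, and they admit no rainbow independent m-set. -/
open SimpleGraph Finset

/-- The `n`-blowup of a graph `H`: each vertex is replaced by `n` copies, and
copies of `u` and `v` are adjacent iff `u` and `v` are adjacent in `H`. -/
def blowup {N : ℕ} (H : SimpleGraph (Fin N)) (n : ℕ) : SimpleGraph (Fin N × Fin n) :=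
  SimpleGraph.comap Prod.fst H

/-- The blown-up class of a vertex `u`. -/
def blowupClass (N n : ℕ) (u : Fin N) : Finset (Fin N × Fin n) :=
  Finset.univ.image fun i : Fin n => (u, i)

theorem blowup_lower_bound (N n m r : ℕ) (H : SimpleGraph (Fin N))
    (hfree : H.CliqueFree r)
    (hα : ¬ ∃ S : Finset (Fin N), S.card = m ∧ ∀ u ∈ S, ∀ v ∈ S, ¬ H.Adj u v) :
    (blowup H n).CliqueFree r ∧
    (∀ u : Fin N, (blowupClass N n u).card = n ∧ IndepIn (blowup H n) (blowupClass N n u)) ∧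
    (∀ u v : Fin N, u ≠ v → Disjoint (blowupClass N n u) (blowupClass N n v)) ∧
    ¬ HasRainbowIndep (blowup H n) (blowupClass N n) m := by
  have hmem : ∀ (u : Fin N) (x : Fin N × Fin n), x ∈ blowupClass N n u ↔ x.1 = u := by
    intro u x
    simp [blowupClass, Prod.ext_iff, eq_comm]
  refine ⟨?_, ?_, ?_, ?_⟩
  · intro t ht
    have hinj : Set.InjOn Prod.fst (t : Set (Fin N × Fin n)) := by
      intro a ha b hb hab
      by_contra hne
      have := ht.1 ha hb hne
      simp [blowup, hab] at this
    refine hfree (t.image Prod.fst) ⟨?_, ?_⟩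
    · intro a ha b hb hne
      simp only [coe_image, Set.mem_image, mem_coe] at ha hb
      obtain ⟨a', ha', rfl⟩ := ha
      obtain ⟨b', hb', rfl⟩ := hb
      have hne' : a' ≠ b' := fun h => hne (by rw [h])
      exact ht.1 ha' hb' hne'
    · rw [Finset.card_image_of_injOn hinj, ht.2]
  · intro u
    constructor
    · rw [blowupClass, Finset.card_image_of_injective _ (fun a b h => by
        simpa using (Prod.ext_iff.1 h).2), Finset.card_univ, Fintype.card_fin]
    · intro a ha b hb hadj
      rw [hmem] at ha hb
      have : H.Adj u u := by simpa [blowup, ha, hb] using hadj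
      exact H.irrefl this
  · intro u v huv
    rw [Finset.disjoint_left]
    intro x hx hx'
    rw [hmem] at hx hx'
    exact huv (hx ▸ hx')
  · rintro ⟨j, v, hj, hv, hmemv, hindep⟩
    have hfst : ∀ i, (v i).1 = j i := fun i => (hmem _ _).1 (hmemv i)
    refine hα ⟨Finset.univ.image j, ?_, ?_⟩
    · rw [Finset.card_image_of_injective _ hj, Finset.card_univ, Fintype.card_fin]
    · intro a ha b hb hadj
      simp only [mem_image, mem_univ, true_and] at ha hb
      obtain ⟨i, rfl⟩ := ha
      obtain ⟨i', rfl⟩ := hb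
      have hne : i ≠ i' := fun h => H.irrefl (h ▸ hadj)
      exact hindep i i' hne (by simp [blowup, hfst, hadj])
end

section
/- Let G be a graph of maximum degree at most 1 (a matching plus isolated vertices), and let I_1, ..., I_m be independent sets of size n ≥ m in G. Then there exists a rainbow independent m-set. -/
open SimpleGraph Finset

lemma reach_deg1 {V : Type*} [Fintype V] (G : SimpleGraph V) [DecidableRel G.Adj]
    (hdeg : ∀ v : V, G.degree v ≤ 1) {u w : V} (h : G.Reachable u w) :
    u = w ∨ G.Adj u w := by
  rw [SimpleGraph.reachable_iff_reflTransGen] at h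
  induction h with
  | refl => exact Or.inl rfl
  | @tail b c hub hbc ih =>
    rcases ih with rfl | h1
    · exact Or.inr hbc
    · by_cases hc : u = c
      · exact Or.inl hc
      · exfalso
        have h2 : 1 < (G.neighborFinset b).card :=
          Finset.one_lt_card.2 ⟨u, (G.mem_neighborFinset b u).2 h1.symm, c,
            (G.mem_neighborFinset b c).2 hbc, hc⟩
        have := hdeg b
        rw [SimpleGraph.degree] at this
        omega

lemma greedy {V : Type*} [Fintype V] (G : SimpleGraph V)
    [DecidableEq G.ConnectedComponent] :
    ∀ m (I : Fin m → Finset V),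
      (∀ i, m ≤ ((I i).image G.connectedComponentMk).card) →
      ∃ v : Fin m → V, (∀ i, v i ∈ I i) ∧
        Function.Injective (fun i => G.connectedComponentMk (v i)) := by
  intro m
  induction m with
  | zero => exact fun I _ => ⟨Fin.elim0, fun i => i.elim0, fun i => i.elim0⟩
  | succ m ih =>
    intro I hI
    obtain ⟨v, hv, hinj⟩ := ih (fun i => I i.castSucc)
      (fun i => le_trans (Nat.le_succ m) (hI i.castSucc))
    set T : Finset G.ConnectedComponent :=
      Finset.univ.image (fun i => G.connectedComponentMk (v i)) with hT
    have hTcard : T.card ≤ m := le_trans Finset.card_image_le (by simp)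
    have hne : (((I (Fin.last m)).image G.connectedComponentMk) \ T).Nonempty := by
      apply Finset.card_pos.1
      have := hI (Fin.last m)
      have := Finset.le_card_sdiff T ((I (Fin.last m)).image G.connectedComponentMk)
      omega
    obtain ⟨c, hc⟩ := hne
    rw [Finset.mem_sdiff, Finset.mem_image] at hc
    obtain ⟨⟨w, hw, hwc⟩, hcT⟩ := hc
    refine ⟨Fin.snoc v w, ?_, ?_⟩
    · intro i
      refine Fin.lastCases ?_ ?_ i
      · simp [hw]
      · intro j; simpa using hv j
    · intro i i' heq
      simp only at heq
      rcases Fin.eq_castSucc_or_eq_last i with ⟨a, rfl⟩ | rfl <;>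
        rcases Fin.eq_castSucc_or_eq_last i' with ⟨b, rfl⟩ | rfl
      · rw [Fin.snoc_castSucc, Fin.snoc_castSucc] at heq
        exact congrArg Fin.castSucc (hinj heq)
      · rw [Fin.snoc_castSucc, Fin.snoc_last] at heq
        exact absurd (by rw [← hwc, ← heq]; exact Finset.mem_image_of_mem _ (Finset.mem_univ a)) hcT
      · rw [Fin.snoc_castSucc, Fin.snoc_last] at heq
        exact absurd (by rw [← hwc, heq]; exact Finset.mem_image_of_mem _ (Finset.mem_univ b)) hcT
      · rfl

theorem maxDegree_one_rainbow {V : Type*} [Fintype V] (G : SimpleGraph V)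
    [DecidableRel G.Adj] (hdeg : ∀ v : V, G.degree v ≤ 1)
    (m n : ℕ) (hmn : m ≤ n)
    (I : Fin m → Finset V) (hI : ∀ i, (I i).card = n ∧ IndepIn G (I i)) :
    HasRainbowIndep G I m := by
  classical
  have key : ∀ i, m ≤ ((I i).image G.connectedComponentMk).card := by
    intro i
    have hcard : ((I i).image G.connectedComponentMk).card = (I i).card := by
      apply Finset.card_image_of_injOn
      intro u hu w hw huw
      have hr : G.Reachable u w := (SimpleGraph.ConnectedComponent.eq).1 huw
      rcases reach_deg1 G hdeg hr with h | h
      · exact h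
      · exact absurd h ((hI i).2 u hu w hw)
    rw [hcard, (hI i).1]; exact hmn
  obtain ⟨v, hv, hinj⟩ := greedy G m I key
  refine ⟨id, v, fun a b h => h, ?_, hv, ?_⟩
  · intro a b h
    exact hinj (by simp only []; rw [h])
  · intro a b hab hadj
    exact hab (hinj ((SimpleGraph.ConnectedComponent.eq).2 hadj.reachable))
end

section
/- Let G be a graph of maximum degree at most 2 (every component is a path or a cycle), and let I_1, ..., I_{2n-1} be independent sets of size n in G. Then there exists a rainbow independent n-set. -/
open SimpleGraph Finset

/-!
Induction on `n`. Grow an alternating path `q 0, m 0, q 1, …, q (k - 1)` in `G`, the `q t`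
pairwise non-adjacent, whose set `Q = {q t}` lies in at least `k = #Q` members of the family.
As degrees are at most 2, an independent set inside the closed neighbourhood `N[Q]` has at most
`k + 1` vertices, and if it has `k + 1` it is the `q`-set of the path extended by one vertex at
each end, so it is the same set for every member. Hence if more than `k` members meet `N[Q]` in
`k + 1` vertices, the path grows. Otherwise discard `k` members containing `Q` and the at most `k`
members meeting `N[Q]` in `k + 1` vertices: the other `≥ 2 (n - k) - 1` members keep `≥ n - k`
vertices outside `N[Q]`, and a rainbow independent `(n - k)`-set among those, together with `Q`,
is a rainbow independent `n`-set.
-/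

namespace RainbowIndep

variable {V : Type*} {G : SimpleGraph V}

lemma IndepIn.mono {S T : Finset V} (hS : IndepIn G S) (hTS : T ⊆ S) : IndepIn G T :=
  fun u hu v hv => hS u (hTS hu) v (hTS hv)

/-- `q 0, m 0, q 1, …, m (k - 2), q (k - 1)` is a path in `G` whose vertices `q t` are pairwise
non-adjacent. -/
structure IsAltPath (G : SimpleGraph V) (k : ℕ) (q m : ℕ → V) : Prop where
  q_ne : ∀ ⦃s t⦄, s < k → t < k → s ≠ t → q s ≠ q t
  q_not_adj : ∀ ⦃s t⦄, s < k → t < k → ¬ G.Adj (q s) (q t)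
  m_ne : ∀ ⦃s t⦄, s < k - 1 → t < k - 1 → s ≠ t → m s ≠ m t
  q_ne_m : ∀ ⦃s t⦄, s < k → t < k - 1 → q s ≠ m t
  adj_left : ∀ ⦃t⦄, t < k - 1 → G.Adj (m t) (q t)
  adj_right : ∀ ⦃t⦄, t < k - 1 → G.Adj (m t) (q (t + 1))

lemma isAltPath_one (q m : ℕ → V) : IsAltPath G 1 q m where
  q_ne _ _ hs ht hst := by omega
  q_not_adj s t hs ht := (show s = t by omega) ▸ G.irrefl
  m_ne _ _ hs := by omega
  q_ne_m _ _ _ ht := by omega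
  adj_left _ ht := by omega
  adj_right _ ht := by omega

namespace IsAltPath

variable {k : ℕ} {q m : ℕ → V}

lemma mono {j : ℕ} (hp : IsAltPath G k q m) (hjk : j ≤ k) : IsAltPath G j q m where
  q_ne _ _ hs ht := hp.q_ne (by omega) (by omega)
  q_not_adj _ _ hs ht := hp.q_not_adj (by omega) (by omega)
  m_ne _ _ hs ht := hp.m_ne (by omega) (by omega)
  q_ne_m _ _ hs ht := hp.q_ne_m (by omega) (by omega)
  adj_left _ ht := hp.adj_left (by omega)
  adj_right _ ht := hp.adj_right (by omega)

lemma adj_m_pred (hp : IsAltPath G k q m) {t : ℕ} (h1 : 1 ≤ t) (ht : t < k) :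
    G.Adj (q t) (m (t - 1)) := by
  have := (hp.adj_right (t := t - 1) (by omega)).symm
  rwa [Nat.sub_add_cancel h1] at this

end IsAltPath

structure IsEndExt (G : SimpleGraph V) (k : ℕ) (q m : ℕ → V) (a b : V) : Prop where
  adj_first : G.Adj (q 0) a
  adj_last : G.Adj (q (k - 1)) b
  ne : a ≠ b
  ne_m_first : 1 < k → a ≠ m 0
  ne_m_last : 1 < k → b ≠ m (k - 2)

namespace IsEndExt

variable {k : ℕ} {q m : ℕ → V} {a b : V}

lemma first_ne_q (hs : IsEndExt G k q m a b) (hp : IsAltPath G k q m) : ∀ t < k, a ≠ q t := by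
  rintro t ht rfl
  exact hp.q_not_adj (by omega) ht hs.adj_first

lemma last_ne_q (hs : IsEndExt G k q m a b) (hp : IsAltPath G k q m) : ∀ t < k, b ≠ q t := by
  rintro t ht rfl
  exact hp.q_not_adj (by omega) ht hs.adj_last

end IsEndExt

def extend (k : ℕ) (m : ℕ → V) (a b : V) (t : ℕ) : V :=
  if t = 0 then a else if t < k then m (t - 1) else b

lemma extend_cases {k : ℕ} (m : ℕ → V) (a b : V) {t : ℕ} (ht : t < k + 1) :
    (t = 0 ∧ extend k m a b t = a) ∨ (1 ≤ t ∧ t < k ∧ extend k m a b t = m (t - 1)) ∨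
      (t = k ∧ extend k m a b t = b) := by
  unfold extend
  by_cases h0 : t = 0
  · simp [h0]
  by_cases hlt : t < k
  · simp [h0, hlt]; omega
  · simp [h0, hlt]; omega

section Degree

variable [Fintype V] [DecidableRel G.Adj]

lemma eq_or_eq_of_adj_of_degree_le_two {v a b c : V} (hv : G.degree v ≤ 2) (ha : G.Adj v a)
    (hb : G.Adj v b) (hab : a ≠ b) (hc : G.Adj v c) : c = a ∨ c = b := by
  classical
  by_contra! h
  have hsub : ({a, b, c} : Finset V) ⊆ G.neighborFinset v := by
    simp [insert_subset_iff, ha, hb, hc]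
  have hcard : #({a, b, c} : Finset V) = 3 :=
    card_eq_three.mpr ⟨a, b, c, hab, h.1.symm, h.2.symm, rfl⟩
  have := card_le_card hsub
  rw [hcard, G.card_neighborFinset_eq_degree] at this
  omega

namespace IsAltPath

variable {k : ℕ} {q m : ℕ → V}

lemma eq_of_adj_m (hdeg : ∀ v, G.degree v ≤ 2) (hp : IsAltPath G k q m) {t : ℕ}
    (ht : t < k - 1) {c : V} (hc : G.Adj (m t) c) : c = q t ∨ c = q (t + 1) :=
  eq_or_eq_of_adj_of_degree_le_two (hdeg _) (hp.adj_left ht) (hp.adj_right ht)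
    (hp.q_ne (by omega) (by omega) (by omega)) hc

lemma eq_of_adj_q (hdeg : ∀ v, G.degree v ≤ 2) (hp : IsAltPath G k q m) {t : ℕ} (h1 : 1 ≤ t)
    (ht : t < k - 1) {c : V} (hc : G.Adj (q t) c) : c = m (t - 1) ∨ c = m t :=
  eq_or_eq_of_adj_of_degree_le_two (hdeg _) (hp.adj_m_pred h1 (by omega))
    (hp.adj_left ht).symm (hp.m_ne (by omega) ht (by omega)) hc

lemma not_adj_m_of_ne_q (hdeg : ∀ v, G.degree v ≤ 2) (hp : IsAltPath G k q m) {x : V}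
    (hx : ∀ s < k, x ≠ q s) {t : ℕ} (ht : t < k - 1) : ¬ G.Adj x (m t) := fun h => by
  rcases hp.eq_of_adj_m hdeg ht h.symm with h' | h' <;> exact hx _ (by omega) h'

lemma m_not_adj (hdeg : ∀ v, G.degree v ≤ 2) (hp : IsAltPath G k q m) {s t : ℕ}
    (hs : s < k - 1) (ht : t < k - 1) : ¬ G.Adj (m s) (m t) :=
  hp.not_adj_m_of_ne_q hdeg (fun _ hr h => hp.q_ne_m hr hs h.symm) ht

lemma ne_m_of_adj_q (hdeg : ∀ v, G.degree v ≤ 2) (hp : IsAltPath G k q m) {x : V} {s : ℕ}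
    (hs : s < k) (hx : G.Adj (q s) x) {t : ℕ} (ht : t < k - 1) (hst : t ≠ s) (hst' : t + 1 ≠ s) :
    x ≠ m t := by
  rintro rfl
  rcases hp.eq_of_adj_m hdeg ht hx.symm with h | h <;>
    exact hp.q_ne hs (by omega) (by omega) h

end IsAltPath

namespace IsEndExt

variable {k : ℕ} {q m : ℕ → V} {a b : V}

lemma first_ne_m (hdeg : ∀ v, G.degree v ≤ 2) (hs : IsEndExt G k q m a b)
    (hp : IsAltPath G k q m) : ∀ t < k - 1, a ≠ m t := by
  intro t ht
  rcases Nat.eq_zero_or_pos t with rfl | htpos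
  · exact hs.ne_m_first (by omega)
  · exact hp.ne_m_of_adj_q hdeg (by omega) hs.adj_first ht (by omega) (by omega)

lemma last_ne_m (hdeg : ∀ v, G.degree v ≤ 2) (hs : IsEndExt G k q m a b)
    (hp : IsAltPath G k q m) : ∀ t < k - 1, b ≠ m t := by
  intro t ht
  by_cases htk : t = k - 2
  · exact htk ▸ hs.ne_m_last (by omega)
  · exact hp.ne_m_of_adj_q hdeg (by omega) hs.adj_last ht (by omega) (by omega)

lemma eq_or_eq {a' b' : V} (hdeg : ∀ v, G.degree v ≤ 2) (hs : IsEndExt G k q m a b)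
    (hs' : IsEndExt G k q m a' b') (hp : IsAltPath G k q m) (hk : 1 ≤ k) :
    (a = a' ∨ a = b') ∧ (b = a' ∨ b = b') := by
  by_cases hk1 : k = 1
  · subst hk1
    have hb' : G.Adj (q 0) b' := hs'.adj_last
    exact ⟨eq_or_eq_of_adj_of_degree_le_two (hdeg _) hs'.adj_first hb' hs'.ne hs.adj_first,
      eq_or_eq_of_adj_of_degree_le_two (hdeg _) hs'.adj_first hb' hs'.ne hs.adj_last⟩
  · have hfirst : G.Adj (q 0) (m 0) := (hp.adj_left (by omega)).symm
    have hlast : G.Adj (q (k - 1)) (m (k - 2)) := by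
      simpa [show k - 2 + 1 = k - 1 by omega] using (hp.adj_right (t := k - 2) (by omega)).symm
    refine ⟨Or.inl ?_, Or.inr ?_⟩
    · exact (eq_or_eq_of_adj_of_degree_le_two (hdeg _) hfirst hs'.adj_first
        (hs'.ne_m_first (by omega)).symm hs.adj_first).resolve_left (hs.ne_m_first (by omega))
    · exact (eq_or_eq_of_adj_of_degree_le_two (hdeg _) hlast hs'.adj_last
        (hs'.ne_m_last (by omega)).symm hs.adj_last).resolve_left (hs.ne_m_last (by omega))

lemma exists_first_of_succ (hdeg : ∀ v, G.degree v ≤ 2) (hs : IsEndExt G k q m a b)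
    (hp : IsAltPath G (k + 1) q m) (hk : 1 ≤ k) :
    ∃ c, (c = a ∨ c = b) ∧ G.Adj (q 0) c ∧ c ≠ m 0 ∧ (m (k - 1) = a ∨ m (k - 1) = b) := by
  by_cases hk1 : k = 1
  · subst hk1
    have hb : G.Adj (q 0) b := hs.adj_last
    rcases eq_or_eq_of_adj_of_degree_le_two (hdeg _) hs.adj_first hb hs.ne
      (hp.adj_left (t := 0) (by omega)).symm with h | h
    · exact ⟨b, Or.inr rfl, hb, h ▸ hs.ne.symm, Or.inl h⟩
    · exact ⟨a, Or.inl rfl, hs.adj_first, h ▸ hs.ne, Or.inr h⟩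
  · have hb : b = m (k - 1) := by
      have := hp.eq_of_adj_q hdeg (t := k - 1) (by omega) (by omega) hs.adj_last
      rw [show k - 1 - 1 = k - 2 by omega] at this
      exact this.resolve_left (hs.ne_m_last (by omega))
    exact ⟨a, Or.inl rfl, hs.adj_first, hs.ne_m_first (by omega), Or.inr hb.symm⟩

lemma isAltPath_extend (hdeg : ∀ v, G.degree v ≤ 2) (hs : IsEndExt G k q m a b)
    (hp : IsAltPath G k q m) (hk : 1 ≤ k) (hab : ¬ G.Adj a b) :
    IsAltPath G (k + 1) (extend k m a b) q := by
  have haq := hs.first_ne_q hp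
  have hbq := hs.last_ne_q hp
  have ham := hs.first_ne_m hdeg hp
  have hbm := hs.last_ne_m hdeg hp
  have ham' := fun t ht => hp.not_adj_m_of_ne_q hdeg haq (t := t) ht
  have hbm' := fun t ht => hp.not_adj_m_of_ne_q hdeg hbq (t := t) ht
  constructor
  case q_ne =>
    intro s t hs' ht' hst
    rcases extend_cases m a b hs' with ⟨rfl, he⟩ | ⟨h1, h2, he⟩ | ⟨rfl, he⟩ <;>
      rcases extend_cases m a b ht' with ⟨rfl, he'⟩ | ⟨h1', h2', he'⟩ | ⟨rfl, he'⟩ <;>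
      simp only [he, he']
    all_goals first
      | omega
      | exact hs.ne
      | exact hs.ne.symm
      | exact ham _ (by omega)
      | exact (ham _ (by omega)).symm
      | exact hbm _ (by omega)
      | exact (hbm _ (by omega)).symm
      | exact hp.m_ne (by omega) (by omega) (by omega)
  case q_not_adj =>
    intro s t hs' ht'
    rcases extend_cases m a b hs' with ⟨rfl, he⟩ | ⟨h1, h2, he⟩ | ⟨rfl, he⟩ <;>
      rcases extend_cases m a b ht' with ⟨rfl, he'⟩ | ⟨h1', h2', he'⟩ | ⟨rfl, he'⟩ <;>
      simp only [he, he']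
    all_goals first
      | exact G.irrefl
      | exact hab
      | exact fun h => hab h.symm
      | exact ham' _ (by omega)
      | exact fun h => ham' _ (by omega) h.symm
      | exact hbm' _ (by omega)
      | exact fun h => hbm' _ (by omega) h.symm
      | exact hp.m_not_adj hdeg (by omega) (by omega)
  case m_ne => exact fun s t hs' ht' => hp.q_ne (by omega) (by omega)
  case q_ne_m =>
    intro s t hs' ht'
    rcases extend_cases m a b hs' with ⟨rfl, he⟩ | ⟨h1, h2, he⟩ | ⟨rfl, he⟩ <;> rw [he]
    · exact haq t (by omega)
    · exact (hp.q_ne_m (by omega) (by omega)).symm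
    · exact hbq t (by omega)
  case adj_left =>
    intro t ht
    rcases extend_cases (k := k) m a b (t := t) (by omega) with
      ⟨rfl, he⟩ | ⟨h1, h2, he⟩ | ⟨rfl, he⟩ <;> rw [he]
    · exact hs.adj_first
    · exact hp.adj_m_pred h1 h2
    · omega
  case adj_right =>
    intro t ht
    rcases extend_cases (k := k) m a b (t := t + 1) (by omega) with
      ⟨h0, he⟩ | ⟨h1, h2, he⟩ | ⟨hk', he⟩ <;> rw [he]
    · omega
    · simpa using (hp.adj_left (by omega)).symm
    · obtain rfl : t = k - 1 := by omega
      exact hs.adj_last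

end IsEndExt

end Degree

section Nbhd

variable [DecidableEq V]

lemma IsAltPath.card_image {k : ℕ} {q m : ℕ → V} (hp : IsAltPath G k q m) :
    #((range k).image q) = k := by
  rw [card_image_of_injOn, card_range]
  intro s hs t ht hst
  by_contra h
  exact hp.q_ne (by simpa using hs) (by simpa using ht) h hst

lemma mem_image_extend {k : ℕ} (hk : 1 ≤ k) {m : ℕ → V} {a b x : V} :
    x ∈ (range (k + 1)).image (extend k m a b) ↔ x = a ∨ x = b ∨ ∃ t < k - 1, x = m t := by
  constructor
  · simp only [mem_image, mem_range]
    rintro ⟨t, ht, rfl⟩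
    rcases extend_cases m a b ht with ⟨-, he⟩ | ⟨h1, h2, he⟩ | ⟨-, he⟩
    · exact Or.inl he
    · exact Or.inr (Or.inr ⟨t - 1, by omega, he⟩)
    · exact Or.inr (Or.inl he)
  · rintro (rfl | rfl | ⟨t, ht, rfl⟩) <;> refine mem_image.mpr ?_
    · exact ⟨0, by simp, by simp [extend]⟩
    · exact ⟨k, by simp, by simp [extend]; omega⟩
    · exact ⟨t + 1, by simp; omega, by simp [extend]; omega⟩

variable (G) in
def IsAltPathSet (Q : Finset V) : Prop :=
  ∃ k q m, 1 ≤ k ∧ IsAltPath G k q m ∧ Q = (range k).image q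

lemma isAltPathSet_singleton (v : V) : IsAltPathSet G {v} :=
  ⟨1, fun _ => v, fun _ => v, le_rfl, isAltPath_one _ _, by simp⟩

namespace IsAltPathSet

variable {Q : Finset V}

lemma indep (hQ : IsAltPathSet G Q) : IndepIn G Q := by
  obtain ⟨k, q, m, -, hp, rfl⟩ := hQ
  simp only [IndepIn, mem_image, mem_range]
  rintro _ ⟨s, hs, rfl⟩ _ ⟨t, ht, rfl⟩
  exact hp.q_not_adj hs ht

lemma one_le_card (hQ : IsAltPathSet G Q) : 1 ≤ #Q := by
  obtain ⟨k, q, m, hk, hp, rfl⟩ := hQ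
  rwa [hp.card_image]

end IsAltPathSet

variable [Fintype V] [DecidableRel G.Adj]

variable (G) in
def closedNbhd (Q : Finset V) : Finset V := {v | ∃ u ∈ Q, u = v ∨ G.Adj u v}

lemma mem_closedNbhd {Q : Finset V} {v : V} :
    v ∈ closedNbhd G Q ↔ ∃ u ∈ Q, u = v ∨ G.Adj u v := by
  simp [closedNbhd]

lemma mem_closedNbhd_image {k : ℕ} {q : ℕ → V} {v : V} :
    v ∈ closedNbhd G ((range k).image q) ↔ ∃ t < k, q t = v ∨ G.Adj (q t) v := by
  simp [closedNbhd]

lemma eq_singleton_or_subset_neighborFinset {S : Finset V} {u : V} (hS : IndepIn G S)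
    (hSu : S ⊆ closedNbhd G {u}) : S = {u} ∨ S ⊆ G.neighborFinset u := by
  have hmem : ∀ v ∈ S, u = v ∨ G.Adj u v := fun v hv => by
    simpa using mem_closedNbhd.mp (hSu hv)
  by_cases hu : u ∈ S
  · refine Or.inl (eq_singleton_iff_unique_mem.mpr ⟨hu, fun v hv => ?_⟩)
    exact ((hmem v hv).resolve_right (hS u hu v hv)).symm
  · refine Or.inr fun v hv => (G.mem_neighborFinset u v).mpr ?_
    exact (hmem v hv).resolve_left fun h => hu (h ▸ hv)

namespace IsAltPath

variable {k : ℕ} {q m : ℕ → V} {S : Finset V}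

lemma eq_or_adj_of_mem_closedNbhd_succ (hp : IsAltPath G (k + 1) q m) (hk : 1 ≤ k) {v : V}
    (hv : v ∈ closedNbhd G ((range (k + 1)).image q))
    (hv' : v ∉ closedNbhd G ((range k).image q)) :
    v = q k ∨ (G.Adj (q k) v ∧ v ≠ m (k - 1)) := by
  obtain ⟨t, ht, htv⟩ := mem_closedNbhd_image.mp hv
  have htk : t = k := by
    by_contra htk
    exact hv' (mem_closedNbhd_image.mpr ⟨t, by omega, htv⟩)
  rw [htk] at htv
  refine htv.imp Eq.symm fun hadj => ⟨hadj, ?_⟩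
  rintro rfl
  exact hv' (mem_closedNbhd_image.mpr ⟨k - 1, by omega, Or.inr (hp.adj_left (by omega)).symm⟩)

lemma card_sdiff_closedNbhd_le_one (hdeg : ∀ v, G.degree v ≤ 2) (hp : IsAltPath G (k + 1) q m)
    (hk : 1 ≤ k) (hS : IndepIn G S) (hSD : S ⊆ closedNbhd G ((range (k + 1)).image q)) :
    #(S \ closedNbhd G ((range k).image q)) ≤ 1 := by
  have hcases : ∀ v ∈ S \ closedNbhd G ((range k).image q),
      v = q k ∨ (G.Adj (q k) v ∧ v ≠ m (k - 1)) := fun v hv =>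
    hp.eq_or_adj_of_mem_closedNbhd_succ hk (hSD (mem_sdiff.mp hv).1) (mem_sdiff.mp hv).2
  have hqk : G.Adj (q k) (m (k - 1)) := hp.adj_m_pred hk (by omega)
  refine card_le_one.mpr fun x hx y hy => ?_
  have hxy := hS x (mem_sdiff.mp hx).1 y (mem_sdiff.mp hy).1
  have hyx := hS y (mem_sdiff.mp hy).1 x (mem_sdiff.mp hx).1
  rcases hcases x hx with rfl | ⟨hx₁, hx₂⟩ <;> rcases hcases y hy with rfl | ⟨hy₁, hy₂⟩
  · rfl
  · exact absurd hy₁ hxy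
  · exact absurd hx₁ hyx
  · exact ((eq_or_eq_of_adj_of_degree_le_two (hdeg _) hqk hx₁ hx₂.symm hy₁).resolve_left
      hy₂).symm

lemma card_le (hdeg : ∀ v, G.degree v ≤ 2) (hp : IsAltPath G k q m) (hk : 1 ≤ k)
    (hS : IndepIn G S) (hSD : S ⊆ closedNbhd G ((range k).image q)) : #S ≤ k + 1 := by
  induction k, hk using Nat.le_induction generalizing S with
  | base =>
    rw [range_one, image_singleton] at hSD
    rcases eq_singleton_or_subset_neighborFinset hS hSD with rfl | hsub
    · simp
    · have := (card_le_card hsub).trans_eq (G.card_neighborFinset_eq_degree _)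
      linarith [hdeg (q 0)]
  | succ k hk ih =>
    have hin := ih (hp.mono (by omega)) (IndepIn.mono hS inter_subset_left) inter_subset_right
    have hout := hp.card_sdiff_closedNbhd_le_one hdeg hk hS hSD
    have := card_sdiff_add_card_inter S (closedNbhd G ((range k).image q))
    omega

lemma exists_isEndExt (hdeg : ∀ v, G.degree v ≤ 2) (hp : IsAltPath G k q m) (hk : 1 ≤ k)
    (hS : IndepIn G S) (hSD : S ⊆ closedNbhd G ((range k).image q)) (hkS : k < #S) :
    ∃ a b, IsEndExt G k q m a b ∧ a ∈ S ∧ b ∈ S ∧ ∀ t < k - 1, m t ∈ S := by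
  induction k, hk using Nat.le_induction generalizing S with
  | base =>
    rw [range_one, image_singleton] at hSD
    rcases eq_singleton_or_subset_neighborFinset hS hSD with rfl | hsub
    · simp at hkS
    obtain ⟨a, ha, b, hb, hab⟩ := one_lt_card.mp hkS
    refine ⟨a, b, ⟨(G.mem_neighborFinset _ _).mp (hsub ha),
      (G.mem_neighborFinset _ _).mp (hsub hb), hab, by omega, by omega⟩, ha, hb, by omega⟩
  | succ k hk ih =>
    have hout := hp.card_sdiff_closedNbhd_le_one hdeg hk hS hSD
    have hin := (hp.mono (by omega)).card_le hdeg hk (IndepIn.mono hS inter_subset_left)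
      inter_subset_right
    have hsplit := card_sdiff_add_card_inter S (closedNbhd G ((range k).image q))
    obtain ⟨a, b, hs, ha, hb, hm⟩ := ih (hp.mono (by omega)) (IndepIn.mono hS inter_subset_left)
      inter_subset_right (by omega)
    set D := closedNbhd G ((range k).image q)
    obtain ⟨c, hc, hqc, hcm, hmab⟩ := hs.exists_first_of_succ hdeg hp hk
    have habS : ∀ x, x = a ∨ x = b → x ∈ S ∩ D := by rintro x (rfl | rfl) <;> assumption
    obtain ⟨z, hz⟩ := card_eq_one.mp (show #(S \ D) = 1 by omega)
    have hzS : z ∈ S \ D := hz ▸ mem_singleton_self z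
    have hqz : G.Adj (q k) z ∧ z ≠ m (k - 1) := by
      refine (hp.eq_or_adj_of_mem_closedNbhd_succ hk (hSD (mem_sdiff.mp hzS).1)
        (mem_sdiff.mp hzS).2).resolve_left ?_
      rintro rfl
      exact hS _ (mem_sdiff.mp hzS).1 _ (mem_inter.mp (habS _ hmab)).1
        (hp.adj_m_pred hk (by omega))
    have hcz : c ≠ z := by
      rintro rfl
      exact (mem_sdiff.mp hzS).2 (mem_inter.mp (habS _ hc)).2
    refine ⟨c, z, ⟨hqc, hqz.1, hcz, fun _ => hcm, fun _ => hqz.2⟩,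
      (mem_inter.mp (habS _ hc)).1, (mem_sdiff.mp hzS).1, fun t ht => ?_⟩
    rcases Nat.lt_or_ge t (k - 1) with htk | htk
    · exact (mem_inter.mp (hm t htk)).1
    · obtain rfl : t = k - 1 := by omega
      exact (mem_inter.mp (habS _ hmab)).1

lemma eq_image_extend (hdeg : ∀ v, G.degree v ≤ 2) (hp : IsAltPath G k q m) (hk : 1 ≤ k)
    (hS : IndepIn G S) (hSD : S ⊆ closedNbhd G ((range k).image q)) (hkS : k < #S) :
    ∃ a b, IsEndExt G k q m a b ∧ ¬ G.Adj a b ∧ S = (range (k + 1)).image (extend k m a b) := by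
  obtain ⟨a, b, hs, ha, hb, hm⟩ := hp.exists_isEndExt hdeg hk hS hSD hkS
  have hab := hS a ha b hb
  refine ⟨a, b, hs, hab, (eq_of_subset_of_card_le (fun x hx => ?_) ?_).symm⟩
  · rcases (mem_image_extend hk).mp hx with rfl | rfl | ⟨t, ht, rfl⟩
    exacts [ha, hb, hm t ht]
  · rw [(hs.isAltPath_extend hdeg hp hk hab).card_image]
    exact hp.card_le hdeg hk hS hSD

end IsAltPath

namespace IsAltPathSet

variable {Q S T : Finset V}

lemma card_le (hdeg : ∀ v, G.degree v ≤ 2) (hQ : IsAltPathSet G Q) (hS : IndepIn G S)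
    (hSQ : S ⊆ closedNbhd G Q) : #S ≤ #Q + 1 := by
  obtain ⟨k, q, m, hk, hp, rfl⟩ := hQ
  rw [hp.card_image]
  exact hp.card_le hdeg hk hS hSQ

lemma of_card_lt (hdeg : ∀ v, G.degree v ≤ 2) (hQ : IsAltPathSet G Q) (hS : IndepIn G S)
    (hSQ : S ⊆ closedNbhd G Q) (hQS : #Q < #S) : IsAltPathSet G S := by
  obtain ⟨k, q, m, hk, hp, rfl⟩ := hQ
  rw [hp.card_image] at hQS
  obtain ⟨a, b, hs, hab, rfl⟩ := hp.eq_image_extend hdeg hk hS hSQ hQS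
  exact ⟨k + 1, _, _, by omega, hs.isAltPath_extend hdeg hp hk hab, rfl⟩

lemma eq_of_card_lt (hdeg : ∀ v, G.degree v ≤ 2) (hQ : IsAltPathSet G Q)
    (hS : IndepIn G S) (hSQ : S ⊆ closedNbhd G Q) (hQS : #Q < #S)
    (hT : IndepIn G T) (hTQ : T ⊆ closedNbhd G Q) (hQT : #Q < #T) : S = T := by
  obtain ⟨k, q, m, hk, hp, rfl⟩ := hQ
  rw [hp.card_image] at hQS hQT
  obtain ⟨a, b, hs, -, rfl⟩ := hp.eq_image_extend hdeg hk hS hSQ hQS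
  obtain ⟨a', b', hs', -, rfl⟩ := hp.eq_image_extend hdeg hk hT hTQ hQT
  refine eq_of_subset_of_card_le (fun x hx => ?_) (hp.card_le hdeg hk hT hTQ |>.trans hQS)
  obtain ⟨ha, hb⟩ := hs.eq_or_eq hdeg hs' hp hk
  rw [mem_image_extend hk] at hx ⊢
  rcases hx with rfl | rfl | hx
  · rcases ha with rfl | rfl <;> simp
  · rcases hb with rfl | rfl <;> simp
  · exact Or.inr (Or.inr hx)

variable {ι : Type*} [Fintype ι] {I : ι → Finset V}

lemma exists_succ (hdeg : ∀ v, G.degree v ≤ 2) (hind : ∀ i, IndepIn G (I i))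
    (hQ : IsAltPathSet G Q) (hbad : #Q < #{i | #Q < #(I i ∩ closedNbhd G Q)}) :
    ∃ Q', IsAltPathSet G Q' ∧ #Q' = #Q + 1 ∧
      ∀ i, #Q < #(I i ∩ closedNbhd G Q) → Q' ⊆ I i := by
  obtain ⟨i₀, hi₀⟩ := card_pos.mp (Nat.zero_lt_of_lt hbad)
  replace hi₀ : #Q < #(I i₀ ∩ closedNbhd G Q) := (mem_filter.mp hi₀).2
  have hpart : ∀ i, IndepIn G (I i ∩ closedNbhd G Q) ∧ I i ∩ closedNbhd G Q ⊆ closedNbhd G Q :=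
    fun i => ⟨IndepIn.mono (hind i) inter_subset_left, inter_subset_right⟩
  refine ⟨I i₀ ∩ closedNbhd G Q, hQ.of_card_lt hdeg (hpart i₀).1 (hpart i₀).2 hi₀,
    le_antisymm (hQ.card_le hdeg (hpart i₀).1 (hpart i₀).2) hi₀, fun i hi => ?_⟩
  rw [hQ.eq_of_card_lt hdeg (hpart i₀).1 (hpart i₀).2 hi₀ (hpart i).1 (hpart i).2 hi]
  exact inter_subset_left

end IsAltPathSet

lemma exists_isAltPathSet_stable {ι : Type*} [Fintype ι] {I : ι → Finset V}
    (hdeg : ∀ v, G.degree v ≤ 2) (hind : ∀ i, IndepIn G (I i)) {Q₀ : Finset V}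
    (hQ₀ : IsAltPathSet G Q₀) (hcov₀ : #Q₀ ≤ #{i | Q₀ ⊆ I i}) :
    ∃ Q, IsAltPathSet G Q ∧ #Q ≤ #{i | Q ⊆ I i} ∧
      #{i | #Q < #(I i ∩ closedNbhd G Q)} ≤ #Q := by
  by_contra! hgrow
  have hlarge : ∀ j, ∃ Q, IsAltPathSet G Q ∧ #Q ≤ #{i | Q ⊆ I i} ∧ j ≤ #Q := by
    intro j
    induction j with
    | zero => exact ⟨Q₀, hQ₀, hcov₀, Nat.zero_le _⟩
    | succ j ih =>
      obtain ⟨Q, hQ, hcov, hj⟩ := ih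
      obtain ⟨Q', hQ', hcard, hsub⟩ := hQ.exists_succ hdeg hind (hgrow Q hQ hcov)
      have : #{i | #Q < #(I i ∩ closedNbhd G Q)} ≤ #{i | Q' ⊆ I i} :=
        card_le_card fun i hi => mem_filter.mpr ⟨mem_univ i, hsub i (mem_filter.mp hi).2⟩
      exact ⟨Q', hQ', by linarith [hgrow Q hQ hcov], by omega⟩
  obtain ⟨Q, -, -, hQ⟩ := hlarge (Fintype.card V + 1)
  have := card_le_univ Q
  omega

end Nbhd

section Rainbow

variable {ι : Type*} {I : ι → Finset V}

variable (G) in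
def IsRainbowIndep {k : ℕ} (I : ι → Finset V) (j : Fin k → ι) (v : Fin k → V) : Prop :=
  Function.Injective j ∧ Function.Injective v ∧ (∀ t, v t ∈ I (j t)) ∧
    ∀ t t', t ≠ t' → ¬ G.Adj (v t) (v t')

lemma IsRainbowIndep.append {k l : ℕ} {j₁ : Fin k → ι} {v₁ : Fin k → V} {j₂ : Fin l → ι}
    {v₂ : Fin l → V} (h₁ : IsRainbowIndep G I j₁ v₁) (h₂ : IsRainbowIndep G I j₂ v₂)
    (hj : ∀ s t, j₁ s ≠ j₂ t) (hv : ∀ s t, v₁ s ≠ v₂ t) (hadj : ∀ s t, ¬ G.Adj (v₁ s) (v₂ t)) :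
    IsRainbowIndep G I (Fin.append j₁ j₂) (Fin.append v₁ v₂) := by
  refine ⟨Fin.append_injective_iff.mpr ⟨h₁.1, h₂.1, hj⟩,
    Fin.append_injective_iff.mpr ⟨h₁.2.1, h₂.2.1, hv⟩, fun t => ?_, fun t t' htt' => ?_⟩
  · refine Fin.addCases (fun s => ?_) (fun s => ?_) t <;> simp [h₁.2.2.1, h₂.2.2.1]
  · induction t using Fin.addCases <;> induction t' using Fin.addCases <;>
      simp only [Fin.append_left, Fin.append_right] at htt' ⊢
    · exact h₁.2.2.2 _ _ fun h => htt' (h ▸ rfl)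
    · exact hadj _ _
    · exact fun h => hadj _ _ h.symm
    · exact h₂.2.2.2 _ _ fun h => htt' (h ▸ rfl)

lemma IsRainbowIndep.map {ι' : Type*} {I' : ι' → Finset V} {k : ℕ} {j : Fin k → ι'}
    {v : Fin k → V} (h : IsRainbowIndep G I' j v) {f : ι' → ι} (hf : Function.Injective f)
    (hI : ∀ i, I' i ⊆ I (f i)) : IsRainbowIndep G I (f ∘ j) v :=
  ⟨hf.comp h.1, h.2.1, fun t => hI _ (h.2.2.1 t), h.2.2.2⟩

lemma exists_isRainbowIndep {k : ℕ} {Q : Finset V} {U : Finset ι} (hQ : IndepIn G Q)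
    (hU : ∀ i ∈ U, Q ⊆ I i) (hQk : #Q = k) (hUk : #U = k) :
    ∃ (j : Fin k → ι) (v : Fin k → V), IsRainbowIndep G I j v ∧ (∀ t, j t ∈ U) ∧
      ∀ t, v t ∈ Q := by
  set eU := U.equivFinOfCardEq hUk
  set eQ := Q.equivFinOfCardEq hQk
  refine ⟨fun t => eU.symm t, fun t => eQ.symm t, ⟨?_, ?_, fun t => hU _ (eU.symm t).2
    (eQ.symm t).2, fun t t' _ => hQ _ (eQ.symm t).2 _ (eQ.symm t').2⟩,
    fun t => (eU.symm t).2, fun t => (eQ.symm t).2⟩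
  · exact Subtype.val_injective.comp eU.symm.injective
  · exact Subtype.val_injective.comp eQ.symm.injective

lemma hasRainbowIndep_of_le_card [Fintype ι] [DecidableEq V] {n : ℕ} {Q : Finset V}
    (hQ : IndepIn G Q) (hnQ : n ≤ #Q) (hcov : n ≤ #{i | Q ⊆ I i}) : HasRainbowIndep G I n := by
  obtain ⟨Q', hQ'Q, hQ'⟩ := exists_subset_card_eq hnQ
  obtain ⟨U, hUsub, hU⟩ := exists_subset_card_eq hcov
  obtain ⟨j, v, h, -⟩ := exists_isRainbowIndep (IndepIn.mono hQ hQ'Q)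
    (fun i hi => hQ'Q.trans (mem_filter.mp (hUsub hi)).2) hQ' hU
  exact ⟨j, v, h⟩

lemma hasRainbowIndep_add [Fintype V] [DecidableEq V] [DecidableRel G.Adj] {l : ℕ}
    {Q : Finset V} {U : Finset ι} {p : ι → Prop} (hQ : IndepIn G Q) (hU : ∀ i ∈ U, Q ⊆ I i)
    (hUQ : #U = #Q) (hpU : ∀ i ∈ U, ¬ p i)
    (h : HasRainbowIndep G (fun i : Subtype p => I i \ closedNbhd G Q) l) :
    HasRainbowIndep G I (#Q + l) := by
  obtain ⟨j₁, v₁, h₁, hj₁, hv₁⟩ := exists_isRainbowIndep hQ hU rfl hUQ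
  obtain ⟨j₂, v₂, h₂⟩ : ∃ j v, IsRainbowIndep G (fun i : Subtype p => I i \ closedNbhd G Q) j v :=
    h
  have hout : ∀ t, v₂ t ∉ closedNbhd G Q := fun t => (mem_sdiff.mp (h₂.2.2.1 t)).2
  refine ⟨_, _, h₁.append (h₂.map Subtype.val_injective fun i => sdiff_subset) ?_ ?_ ?_⟩
  · exact fun s t h => hpU _ (hj₁ s) (h ▸ (j₂ t).2)
  · exact fun s t h => hout t (mem_closedNbhd.mpr ⟨_, hv₁ s, Or.inl h⟩)
  · exact fun s t h => hout t (mem_closedNbhd.mpr ⟨_, hv₁ s, Or.inr h⟩)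

end Rainbow

theorem hasRainbowIndep_of_degree_le_two [Fintype V] [DecidableRel G.Adj]
    (hdeg : ∀ v, G.degree v ≤ 2) (n : ℕ) {ι : Type*} [Fintype ι] (I : ι → Finset V)
    (hι : 2 * n - 1 ≤ Fintype.card ι) (hcard : ∀ i, n ≤ #(I i)) (hind : ∀ i, IndepIn G (I i)) :
    HasRainbowIndep G I n := by
  classical
  induction n using Nat.strong_induction_on generalizing ι with
  | _ n ih =>
  rcases Nat.eq_zero_or_pos n with rfl | hn
  · exact ⟨finZeroElim, finZeroElim, fun t => t.elim0, fun t => t.elim0, fun t => t.elim0,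
      fun t => t.elim0⟩
  obtain ⟨i₀⟩ : Nonempty ι := Fintype.card_pos_iff.mp (by omega)
  obtain ⟨v₀, hv₀⟩ := card_pos.mp (lt_of_lt_of_le hn (hcard i₀))
  obtain ⟨Q, hQ, hcov, hbad⟩ := exists_isAltPathSet_stable hdeg hind (isAltPathSet_singleton v₀)
    (card_pos.mpr ⟨i₀, by simpa using hv₀⟩)
  rcases le_or_gt n #Q with hnQ | hQn
  · exact hasRainbowIndep_of_le_card hQ.indep hnQ (hnQ.trans hcov)
  obtain ⟨U, hUsub, hU⟩ := exists_subset_card_eq hcov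
  set B : Finset ι := {i | #Q < #(I i ∩ closedNbhd G Q)}
  have hrest : HasRainbowIndep G (fun i : {i // i ∉ U ∪ B} => I i \ closedNbhd G Q) (n - #Q) := by
    refine ih _ (by have := hQ.one_le_card; omega) _ ?_ (fun i => ?_)
      (fun i => IndepIn.mono (hind i) sdiff_subset)
    · rw [Fintype.card_subtype_compl, Fintype.card_coe]
      have := card_union_le U B
      omega
    · have hi : #(I i ∩ closedNbhd G Q) ≤ #Q := by
        simpa [B] using fun h => i.2 (mem_union_right _ h)
      have := card_sdiff_add_card_inter (I i) (closedNbhd G Q)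
      have := hcard i
      omega
  have := hasRainbowIndep_add hQ.indep (fun i hi => (mem_filter.mp (hUsub hi)).2) hU
    (fun i hi h => h (mem_union_left _ hi)) hrest
  rwa [Nat.add_sub_cancel' hQn.le] at this

end RainbowIndep

theorem maxDegree_two_rainbow {V : Type*} [Fintype V] (G : SimpleGraph V)
    [DecidableRel G.Adj] (hdeg : ∀ v : V, G.degree v ≤ 2)
    (n : ℕ) (I : Fin (2 * n - 1) → Finset V)
    (hI : ∀ i, (I i).card = n ∧ IndepIn G (I i)) :
    HasRainbowIndep G I n :=
  RainbowIndep.hasRainbowIndep_of_degree_le_two hdeg n I (by simp) (fun i => (hI i).1.ge)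
    fun i => (hI i).2
end

section
/- Let G be a graph with maximum degree at most k, n ≥ 2, and let I_1, ..., I_{⌈(k+1)/n⌉+1} be independent sets of size n in G. Then there exists a rainbow independent 2-set: two non-adjacent vertices belonging to two distinct I_j's. Moreover this is tight: there is a max-degree-k graph with ⌈(k+1)/n⌉ independent n-sets having no rainbow independent 2-set. -/
open SimpleGraph Finset

/-!
If no rainbow independent 2-set exists, then two members `I i`, `I j` (`i ≠ j`) of the family
are disjoint, since a common vertex `v` together with another vertex of the independent set
`I j` would form one, and hence every vertex of `I i` is adjacent to all of `I j`. So a vertex of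
`I 0` has degree at least `n * ⌈(k+1)/n⌉ > k`. Conversely, the complete `⌈(k+1)/n⌉`-partite
graph with parts of size `n` has maximum degree `(⌈(k+1)/n⌉ - 1) * n ≤ k`, and its parts admit no
rainbow independent 2-set. In `ℕ`, `⌈(k+1)/n⌉` is written `(k + n) / n`.
-/

section Rainbow

variable {V ι : Type*} {G : SimpleGraph V} {I : ι → Finset V}

theorem hasRainbowIndep_two_iff :
    HasRainbowIndep G I 2 ↔
      ∃ i j, i ≠ j ∧ ∃ u ∈ I i, ∃ v ∈ I j, u ≠ v ∧ ¬ G.Adj u v := by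
  constructor
  · rintro ⟨j, v, hj, hv, hmem, hnadj⟩
    exact ⟨j 0, j 1, hj.ne (by decide), v 0, hmem 0, v 1, hmem 1, hv.ne (by decide),
      hnadj 0 1 (by decide)⟩
  · rintro ⟨i, j, hij, u, hu, v, hv, huv, hnadj⟩
    refine ⟨![i, j], ![u, v], ?_, ?_, ?_, ?_⟩
    · intro a b h
      fin_cases a <;> fin_cases b <;> simp_all
    · intro a b h
      fin_cases a <;> fin_cases b <;> simp_all
    · intro a
      fin_cases a <;> simpa
    · intro a b hab
      fin_cases a <;> fin_cases b <;> simp_all [G.adj_comm]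

theorem adj_of_not_hasRainbowIndep_two (h : ¬ HasRainbowIndep G I 2) {i j : ι} (hij : i ≠ j)
    {u v : V} (hu : u ∈ I i) (hv : v ∈ I j) (huv : u ≠ v) : G.Adj u v := by
  by_contra hnadj
  exact h (hasRainbowIndep_two_iff.mpr ⟨i, j, hij, u, hu, v, hv, huv, hnadj⟩)

theorem disjoint_of_not_hasRainbowIndep_two (h : ¬ HasRainbowIndep G I 2) {i j : ι}
    (hij : i ≠ j) (hindep : IndepIn G (I j)) (hcard : 1 < (I j).card) :
    Disjoint (I i) (I j) := by
  refine Finset.disjoint_left.mpr fun v hvi hvj => ?_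
  obtain ⟨w, hw, hwv⟩ := Finset.exists_mem_ne hcard v
  exact hindep v hvj w hw (adj_of_not_hasRainbowIndep_two h hij hvi hw hwv.symm)

theorem sum_card_le_degree_of_not_hasRainbowIndep_two [Fintype V] [DecidableRel G.Adj]
    [Fintype ι] [DecidableEq ι] (h : ¬ HasRainbowIndep G I 2)
    (hI : ∀ j, IndepIn G (I j) ∧ 1 < (I j).card) {i : ι} {u : V} (hu : u ∈ I i) :
    ∑ j ∈ univ.erase i, (I j).card ≤ G.degree u := by
  classical
  have hdisj : Set.PairwiseDisjoint ↑(univ.erase i) I := fun j _ j' _ hjj' =>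
    disjoint_of_not_hasRainbowIndep_two h hjj' (hI j').1 (hI j').2
  have hsub : (univ.erase i).biUnion I ⊆ G.neighborFinset u := by
    intro v hv
    obtain ⟨j, hj, hvj⟩ := Finset.mem_biUnion.mp hv
    have hij : i ≠ j := (Finset.ne_of_mem_erase hj).symm
    have huv : u ≠ v := fun huv =>
      Finset.disjoint_left.mp (disjoint_of_not_hasRainbowIndep_two h hij (hI j).1 (hI j).2)
        hu (huv ▸ hvj)
    exact (mem_neighborFinset G u v).mpr (adj_of_not_hasRainbowIndep_two h hij hu hvj huv)
  rw [← card_biUnion hdisj, ← card_neighborFinset_eq_degree]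
  exact card_le_card hsub

end Rainbow

section CompleteEquipartite

variable {r t : ℕ}

theorem indepIn_completeEquipartiteGraph_part (i : Fin r) :
    IndepIn (completeEquipartiteGraph r t) ({i} ×ˢ univ) := by
  intro u hu v hv
  simp only [mem_product, mem_singleton] at hu hv
  simp [hu.1, hv.1]

theorem not_hasRainbowIndep_two_completeEquipartiteGraph :
    ¬ HasRainbowIndep (completeEquipartiteGraph r t) (fun i => {i} ×ˢ univ) 2 := by
  intro h
  obtain ⟨i, j, hij, u, hu, v, hv, -, hnadj⟩ := hasRainbowIndep_two_iff.mp h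
  simp only [mem_product, mem_singleton] at hu hv
  exact hnadj (completeEquipartiteGraph_adj.mpr (by rw [hu.1, hv.1]; exact hij))

end CompleteEquipartite

theorem maxDegree_rainbow_pair (k n : ℕ) (hn : 2 ≤ n) :
    (∀ (V : Type) [Fintype V] (G : SimpleGraph V) (_ : DecidableRel G.Adj),
      (∀ v : V, G.degree v ≤ k) →
      ∀ I : Fin ((k + n) / n + 1) → Finset V,
        (∀ i, (I i).card = n ∧ IndepIn G (I i)) → HasRainbowIndep G I 2) ∧
    (∃ (V : Type) (_ : Fintype V) (G : SimpleGraph V) (_ : DecidableRel G.Adj),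
      (∀ v : V, G.degree v ≤ k) ∧
      ∃ I : Fin ((k + n) / n) → Finset V,
        (∀ i, (I i).card = n ∧ IndepIn G (I i)) ∧ ¬ HasRainbowIndep G I 2) := by
  have hparts : (k + n) / n = k / n + 1 := Nat.add_div_right k (by omega)
  constructor
  · intro V _ G _ hdeg I hI
    by_contra h
    obtain ⟨u, hu⟩ : (I 0).Nonempty := by rw [← card_pos, (hI 0).1]; omega
    have hsum := sum_card_le_degree_of_not_hasRainbowIndep_two h
      (fun j => ⟨(hI j).2, by rw [(hI j).1]; omega⟩) hu
    simp only [(hI _).1, sum_const, card_erase_of_mem (mem_univ _), card_univ,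
      Fintype.card_fin, smul_eq_mul] at hsum
    rw [hparts, Nat.add_sub_cancel, Nat.succ_mul] at hsum
    have := Nat.lt_div_mul_add (a := k) (show 0 < n by omega)
    have := hdeg u
    omega
  · refine ⟨_, inferInstance, completeEquipartiteGraph ((k + n) / n) n, inferInstance,
      fun v => ?_, fun i => {i} ×ˢ univ,
      fun i => ⟨by simp, indepIn_completeEquipartiteGraph_part i⟩,
      not_hasRainbowIndep_two_completeEquipartiteGraph⟩
    rw [degree_completeEquipartiteGraph, hparts, Nat.add_sub_cancel]
    exact Nat.div_mul_le_self k n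
end

section
/- Fix integers n ≥ 3, m with 3 ≤ m ≤ n, and k ≥ 1; set r = n - m + 2 and t = ⌈(k+1)/r⌉. Define a graph G on [t] × Z_n by joining (a,b) and (a',b') whenever a < a' and b' - b ∈ {0, 1, ..., r-1} (mod n), or a' < a and b - b' ∈ {0,1,...,r-1} (mod n). Then G is r(t-1)-regular (hence has maximum degree ≤ k), each column {a} × Z_n is an independent n-set, and every independent set of size m in G is contained in a single column. Consequently, taking m-1 copies of each column yields t(m-1) independent n-sets with no rainbow independent m-set, so f_{D(k)}(n,m) ≥ ⌈(k+1)/(n-m+2)⌉(m-1) + 1. -/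
/-!
Going from a column to a column further right, an independent set must climb at least `r` rows
(mod `n`). Hence an independent set meeting two columns has its rows, which are pairwise distinct,
inside a window of `n - r + 1 = m - 1` consecutive rows, so an independent `m`-set lies in one
column, whereas a rainbow one would need `m` of the `m - 1` copies of that column.
-/

open SimpleGraph Finset

/-- The repeating graph on `Fin t × ZMod n`: `(a,b)` and `(a',b')` are joined whenever
`a < a'` and `b' - b ∈ {0, 1, ..., r-1}` (mod `n`), or symmetrically. -/
def Gcol (t r n : ℕ) : SimpleGraph (Fin t × ZMod n) where
  Adj p q :=
    (p.1 < q.1 ∧ ∃ i : ℕ, i < r ∧ q.2 - p.2 = (i : ZMod n)) ∨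
    (q.1 < p.1 ∧ ∃ i : ℕ, i < r ∧ p.2 - q.2 = (i : ZMod n))
  symm := ⟨fun p q h => Or.symm h⟩
  loopless := ⟨fun p h => by
    rcases h with ⟨h, -⟩ | ⟨h, -⟩ <;> exact lt_irrefl _ h⟩

/-- The column `{a} × ZMod n` as a finset. -/
def column (t : ℕ) (n : ℕ) [NeZero n] (a : Fin t) : Finset (Fin t × ZMod n) :=
  Finset.univ.image fun b : ZMod n => (a, b)

namespace Gcol

variable {t r n : ℕ}

section Columns

variable [NeZero n]

lemma mem_column {a : Fin t} {p : Fin t × ZMod n} : p ∈ column t n a ↔ p.1 = a := by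
  simp [column, Prod.ext_iff, eq_comm]

lemma card_column (a : Fin t) : (column t n a).card = n := by
  rw [column, card_image_of_injective _ (Prod.mk_right_injective a), card_univ, ZMod.card]

lemma indepIn_column (a : Fin t) : IndepIn (Gcol t r n) (column t n a) := by
  intro u hu v hv huv
  rw [mem_column] at hu hv
  rcases huv with ⟨h, -⟩ | ⟨h, -⟩ <;> simp [hu, hv] at h

end Columns

section Degree

def neighborOf (p : Fin t × ZMod n) (x : Fin t × ℕ) : Fin t × ZMod n :=
  (x.1, if p.1 < x.1 then p.2 + x.2 else p.2 - x.2)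

lemma neighborSet_eq_image (p : Fin t × ZMod n) :
    (Gcol t r n).neighborSet p = neighborOf p '' ↑((univ.erase p.1) ×ˢ range r) := by
  ext q
  simp only [mem_neighborSet, coe_product, coe_erase, coe_univ, coe_range, Set.mem_image,
    Set.mem_prod, Set.mem_sdiff, Set.mem_univ, Set.mem_singleton_iff, true_and, Set.mem_Iio,
    Prod.exists, neighborOf, Prod.ext_iff]
  constructor
  · rintro (⟨h, i, hi, hq⟩ | ⟨h, i, hi, hq⟩)
    · exact ⟨q.1, i, ⟨h.ne', hi⟩, rfl, by simp [h, ← hq]⟩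
    · exact ⟨q.1, i, ⟨h.ne, hi⟩, rfl, by simp [h.not_gt, ← hq]⟩
  · rintro ⟨a, i, ⟨ha, hi⟩, rfl, hq⟩
    rcases lt_or_gt_of_ne ha with h | h
    · exact Or.inr ⟨h, i, hi, by simp [h.not_gt, ← hq]⟩
    · exact Or.inl ⟨h, i, hi, by simp [h, ← hq]⟩

lemma injOn_neighborOf (hrn : r ≤ n) (p : Fin t × ZMod n) :
    Set.InjOn (neighborOf p) ↑((univ.erase p.1) ×ˢ range r) := by
  rintro ⟨a, i⟩ hx ⟨b, j⟩ hy hxy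
  simp only [coe_product, coe_range, Set.mem_prod, Set.mem_Iio] at hx hy
  simp only [neighborOf, Prod.ext_iff] at hxy
  obtain ⟨rfl, hij⟩ := hxy
  have hcast : (i : ZMod n) = j := by
    split_ifs at hij
    · exact add_left_cancel hij
    · exact sub_right_injective hij
  rw [ZMod.natCast_eq_natCast_iff', Nat.mod_eq_of_lt (by omega),
    Nat.mod_eq_of_lt (by omega)] at hcast
  rw [hcast]

theorem card_neighborSet (hrn : r ≤ n) (p : Fin t × ZMod n) :
    Nat.card ((Gcol t r n).neighborSet p) = r * (t - 1) := by
  rw [neighborSet_eq_image, Nat.card_coe_set_eq, ← coe_image, Set.ncard_coe_finset,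
    card_image_of_injOn (injOn_neighborOf hrn p), card_product, card_erase_of_mem (mem_univ _),
    card_univ, Fintype.card_fin, card_range, mul_comm]

end Degree

section Independent

variable [NeZero n] {S : Finset (Fin t × ZMod n)} {p q : Fin t × ZMod n}

lemma le_val_sub_of_indepIn (hS : IndepIn (Gcol t r n) S) (hp : p ∈ S) (hq : q ∈ S)
    (hpq : p.1 < q.1) : r ≤ (q.2 - p.2).val := by
  by_contra! h
  exact hS p hp q hq (Or.inl ⟨hpq, _, h, (ZMod.natCast_zmod_val _).symm⟩)

lemma val_sub_le_of_indepIn (hS : IndepIn (Gcol t r n) S) (hp : p ∈ S) (hq : q ∈ S)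
    (hpq : p.1 < q.1) : (p.2 - q.2).val ≤ n - r := by
  have h := le_val_sub_of_indepIn hS hp hq hpq
  rw [← neg_sub, ZMod.neg_val]
  split_ifs with h0
  · exact Nat.zero_le _
  · omega

lemma snd_injOn_of_indepIn (hr : 0 < r) (hS : IndepIn (Gcol t r n) S) :
    Set.InjOn Prod.snd (S : Set (Fin t × ZMod n)) := by
  intro p hp q hq h
  rcases lt_trichotomy p.1 q.1 with hpq | hpq | hpq
  · have := le_val_sub_of_indepIn hS hp hq hpq
    rw [h, sub_self, ZMod.val_zero] at this
    omega
  · exact Prod.ext hpq h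
  · have := le_val_sub_of_indepIn hS hq hp hpq
    rw [h, sub_self, ZMod.val_zero] at this
    omega

/- Take `p` in the rightmost column met by `S` and, among the vertices of `S` outside that column,
`q` with row furthest above `p.2`. Then every row of `S` lies at most `n - r` steps below `q.2`. -/
theorem card_le_of_indepIn (hr : 0 < r) (hS : IndepIn (Gcol t r n) S)
    (hspread : ∀ a, ∃ p ∈ S, p.1 ≠ a) : S.card ≤ n - r + 1 := by
  rcases S.eq_empty_or_nonempty with rfl | hne
  · simp
  obtain ⟨p, hp, hpmax⟩ := S.exists_max_image Prod.fst hne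
  obtain ⟨q, hq, hqmax⟩ := (S.filter (·.1 ≠ p.1)).exists_max_image (fun s => (s.2 - p.2).val)
    (by simpa [Finset.Nonempty] using hspread p.1)
  obtain ⟨hqS, hqcol⟩ := mem_filter.1 hq
  have hqp : q.1 < p.1 := lt_of_le_of_ne (hpmax q hqS) hqcol
  have hbelow : ∀ s ∈ S, (q.2 - s.2).val ≤ n - r := by
    intro s hs
    by_cases hsp : s.1 = p.1
    · exact val_sub_le_of_indepIn hS hqS hs (hsp ▸ hqp)
    · have hle := hqmax s (mem_filter.2 ⟨hs, hsp⟩)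
      have hsub := ZMod.val_sub hle
      rw [sub_sub_sub_cancel_right] at hsub
      have := val_sub_le_of_indepIn hS hqS hp hqp
      omega
  calc S.card ≤ (range (n - r + 1)).card :=
        card_le_card_of_injOn (fun s => (q.2 - s.2).val)
          (fun s hs => mem_range.2 (Nat.lt_succ_of_le (hbelow s hs)))
          (((ZMod.val_injective n).comp (sub_right_injective)).comp_injOn
            (snd_injOn_of_indepIn hr hS))
    _ = n - r + 1 := card_range _

theorem exists_forall_fst_eq_of_indepIn (hr : 0 < r) (hS : IndepIn (Gcol t r n) S)
    (hcard : n - r + 1 < S.card) : ∃ a, ∀ p ∈ S, p.1 = a := by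
  by_contra! hspread
  exact (card_le_of_indepIn hr hS hspread).not_gt hcard

end Independent

end Gcol

theorem not_hasRainbowIndep_column_copies {t n m : ℕ} [NeZero n]
    {G : SimpleGraph (Fin t × ZMod n)} (hm : 0 < m)
    (hcol : ∀ S : Finset (Fin t × ZMod n), IndepIn G S → S.card = m → ∃ a, ∀ p ∈ S, p.1 = a) :
    ¬ HasRainbowIndep G (fun x : Fin t × Fin (m - 1) => column t n x.1) m := by
  rintro ⟨j, v, hj, hv, hmem, hnadj⟩
  have hindep : IndepIn G (univ.image v) := by
    simp only [IndepIn, mem_image, mem_univ, true_and, forall_exists_index,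
      forall_apply_eq_imp_iff]
    intro i i'
    by_cases h : i = i'
    · exact h ▸ G.irrefl
    · exact hnadj i i' h
  obtain ⟨a, ha⟩ := hcol _ hindep
    (by rw [card_image_of_injective _ hv, card_univ, Fintype.card_fin])
  have hja : ∀ i, (j i).1 = a := fun i =>
    (Gcol.mem_column.1 (hmem i)).symm.trans (ha _ (mem_image_of_mem v (mem_univ i)))
  have hinj : Function.Injective fun i => (j i).2 := fun i i' h =>
    hj (Prod.ext ((hja i).trans (hja i').symm) h)
  have := Fintype.card_le_of_injective _ hinj
  simp only [Fintype.card_fin] at this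
  omega

theorem bounded_degree_lower_construction_general (n m k r t : ℕ) [NeZero n]
    (hm : 3 ≤ m) (hmn : m ≤ n)
    (hr : r = n - m + 2) (ht : t = (k + r) / r) :
    (∀ p : Fin t × ZMod n, Nat.card ((Gcol t r n).neighborSet p) = r * (t - 1)) ∧
    r * (t - 1) ≤ k ∧
    (∀ a : Fin t, (column t n a).card = n ∧ IndepIn (Gcol t r n) (column t n a)) ∧
    (∀ S : Finset (Fin t × ZMod n), IndepIn (Gcol t r n) S → S.card = m →
      ∃ a : Fin t, ∀ p ∈ S, p.1 = a) ∧
    ¬ HasRainbowIndep (Gcol t r n)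
        (fun x : Fin t × Fin (m - 1) => column t n x.1) m := by
  have hr0 : 0 < r := by omega
  have hcol : ∀ S : Finset (Fin t × ZMod n), IndepIn (Gcol t r n) S → S.card = m →
      ∃ a : Fin t, ∀ p ∈ S, p.1 = a := fun S hS hSm =>
    Gcol.exists_forall_fst_eq_of_indepIn hr0 hS (by omega)
  refine ⟨Gcol.card_neighborSet (by omega), ?_,
    fun a => ⟨Gcol.card_column a, Gcol.indepIn_column a⟩, hcol,
    not_hasRainbowIndep_column_copies (by omega) hcol⟩
  rw [ht, Nat.add_div_right k hr0, Nat.add_sub_cancel]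
  exact Nat.mul_div_le k r

theorem bounded_degree_lower_construction (n m k r t : ℕ) [NeZero n]
    (hn : 3 ≤ n) (hm : 3 ≤ m) (hmn : m ≤ n) (hk : 1 ≤ k)
    (hr : r = n - m + 2) (ht : t = (k + r) / r) :
    (∀ p : Fin t × ZMod n, Nat.card ((Gcol t r n).neighborSet p) = r * (t - 1)) ∧
    r * (t - 1) ≤ k ∧
    (∀ a : Fin t, (column t n a).card = n ∧ IndepIn (Gcol t r n) (column t n a)) ∧
    (∀ S : Finset (Fin t × ZMod n), IndepIn (Gcol t r n) S → S.card = m →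
      ∃ a : Fin t, ∀ p ∈ S, p.1 = a) ∧
    ¬ HasRainbowIndep (Gcol t r n)
        (fun x : Fin t × Fin (m - 1) => column t n x.1) m :=
  bounded_degree_lower_construction_general n m k r t hm hmn hr ht
end
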